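/- arXiv:2410.20902 — 7 statements merged into one kernel-verified Lean document; each statement's English description precedes it below -/
import Mathlib

section
/- Let τ and K be positive integers and let L̃_1, …, L̃_K be positive integers with L̃_1 ∣ L̃_2, …, L̃_{K−1} ∣ L̃_K, L̃_K ∣ τ. For a positive integer n let F_n be the n×n complex matrix with entries (F_n)_{jk} = exp(2πi·j·k/n) for 0 ≤ j, k < n. Let 𝐅 be the (τ+1)×(τ+1) complex block-diagonal matrix diag(1, (τ/L̃_K)^{−1/2}·F_{τ/L̃_K} ⊗ (L̃_K/L̃_{K−1})^{−1/2}·F_{L̃_K/L̃_{K−1}} ⊗ ⋯ ⊗ (L̃_2/L̃_1)^{−1/2}·F_{L̃_2/L̃_1} ⊗ (L̃_1)^{−1/2}·F_{L̃_1}). Then 𝐅 is unitary and 𝒬(C, D, F, χ, {H_k}) = 𝐅 · D_q · 𝐅ᴴ, where D_q is the (τ+1)×(τ+1) matrix whose entries are all zero except: D_q(0,0) = C; D_q(0,1) = D_q(1,0) = √τ·D; and the diagonal entries D_q(i,i) for 1 ≤ i ≤ τ equal the components of the vector d = τF·e_τ + χ·1_τ + Σ_{k=1}^K L̃_k·H_k·(1_{τ/L̃_k}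 ⊗ e_{L̃_k}) ∈ ℝ^τ, where e_n denotes the n-dimensional column vector with a 1 in the first entry and zeros elsewhere, and 1_n the n-dimensional all-ones column vector. -/
open Matrix Finset Complex

/-- The KRSB matrix `𝒜(F, χ, {H_k})`:
`F·J_τ + χ·I_τ + Σ_{k=1}^K H_k·(I_{τ/L̃_k} ⊗ J_{L̃_k})`, written entrywise. -/
def krsbA (τ K : ℕ) (F χ : ℝ) (H : ℕ → ℝ) (L : ℕ → ℕ) : Matrix (Fin τ) (Fin τ) ℝ :=
  Matrix.of fun i j =>
    F + (if i = j then χ else 0) +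
      ∑ k ∈ Finset.Icc 1 K, (if (i : ℕ) / L k = (j : ℕ) / L k then H k else 0)

/-- The bordered KRSB matrix `𝒬(C, D, F, χ, {H_k})`. -/
def krsbQ (τ K : ℕ) (C D F χ : ℝ) (H : ℕ → ℝ) (L : ℕ → ℕ) :
    Matrix (Fin (τ + 1)) (Fin (τ + 1)) ℝ :=
  Matrix.of fun i j =>
    if hi : (i : ℕ) = 0 then (if (j : ℕ) = 0 then C else D)
    else if hj : (j : ℕ) = 0 then D
    else
      krsbA τ K F χ H L ⟨(i : ℕ) - 1, by have := i.isLt; omega⟩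
        ⟨(j : ℕ) - 1, by have := j.isLt; omega⟩

/-- The `τ×τ` Kronecker product (with conventions `L̃_0 = 1`, `L̃_{K+1} = τ`)
`(τ/L̃_K)^{−1/2} F_{τ/L̃_K} ⊗ (L̃_K/L̃_{K−1})^{−1/2} F_{L̃_K/L̃_{K−1}} ⊗ ⋯ ⊗ (L̃_1)^{−1/2} F_{L̃_1}`,
where `F_n` has entries `(F_n)_{jk} = exp(2πi·j·k/n)`, written entrywise: an index
`i ∈ [0,τ)` has the mixed-radix digit `d_k(i) = (i / L̃_k) mod (L̃_{k+1}/L̃_k)` at level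
`k` (the level-`K` factor being the most significant), and the `(i,j)` entry of the
Kronecker product is `Π_{k=0}^{K} (L̃_{k+1}/L̃_k)^{−1/2}·exp(2πi·d_k(i)·d_k(j)/(L̃_{k+1}/L̃_k))`. -/
noncomputable def krsbBlockF (τ K : ℕ) (L : ℕ → ℕ) : Matrix (Fin τ) (Fin τ) ℂ :=
  Matrix.of fun i j =>
    ∏ k ∈ Finset.range (K + 1),
      (((Real.sqrt ((L (k + 1) / L k : ℕ) : ℝ) : ℝ) : ℂ))⁻¹ *
        Complex.exp (2 * (Real.pi : ℂ) * Complex.I *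
          (((((i : ℕ) / L k) % (L (k + 1) / L k) : ℕ) : ℂ)) *
          (((((j : ℕ) / L k) % (L (k + 1) / L k) : ℕ) : ℂ)) /
          (((L (k + 1) / L k : ℕ) : ℂ)))

/-- The `(τ+1)×(τ+1)` block-diagonal matrix `𝐅 = diag(1, krsbBlockF)`. -/
noncomputable def krsbFmat (τ K : ℕ) (L : ℕ → ℕ) :
    Matrix (Fin (τ + 1)) (Fin (τ + 1)) ℂ :=
  Matrix.of fun i j =>
    if hi : (i : ℕ) = 0 then (if (j : ℕ) = 0 then 1 else 0)
    else if hj : (j : ℕ) = 0 then 0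
    else
      krsbBlockF τ K L ⟨(i : ℕ) - 1, by have := i.isLt; omega⟩
        ⟨(j : ℕ) - 1, by have := j.isLt; omega⟩

/-- The components of the vector `d = τF·e_τ + χ·1_τ + Σ_{k=1}^K L̃_k·H_k·(1_{τ/L̃_k} ⊗ e_{L̃_k})`
(0-indexed: `(e_n)_i = 1` iff `i = 0`, and `(1_{τ/L̃_k} ⊗ e_{L̃_k})_i = 1` iff `i mod L̃_k = 0`). -/
def krsbDvec (τ K : ℕ) (F χ : ℝ) (H : ℕ → ℝ) (L : ℕ → ℕ) (i : ℕ) : ℝ :=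
  (if i = 0 then (τ : ℝ) * F else 0) + χ +
    ∑ k ∈ Finset.Icc 1 K, (if i % L k = 0 then (L k : ℝ) * H k else 0)

/-- The `(τ+1)×(τ+1)` matrix `D_q`: all entries zero except `D_q(0,0) = C`,
`D_q(0,1) = D_q(1,0) = √τ·D`, and `D_q(i,i) = d_{i-1}` for `1 ≤ i ≤ τ`. -/
noncomputable def krsbDq (τ K : ℕ) (C D F χ : ℝ) (H : ℕ → ℝ) (L : ℕ → ℕ) :
    Matrix (Fin (τ + 1)) (Fin (τ + 1)) ℂ :=
  Matrix.of fun i j =>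
    if (i : ℕ) = 0 ∧ (j : ℕ) = 0 then (C : ℂ)
    else if ((i : ℕ) = 0 ∧ (j : ℕ) = 1) ∨ ((i : ℕ) = 1 ∧ (j : ℕ) = 0) then
      ((Real.sqrt (τ : ℝ) * D : ℝ) : ℂ)
    else if (i : ℕ) = (j : ℕ) then ((krsbDvec τ K F χ H L ((i : ℕ) - 1) : ℝ) : ℂ)
    else 0


-- ### auxiliary lemmas ###

lemma exp_eq_one (m:ℕ)(hm:0 < m)(c:ℤ): Complex.exp (2*Real.pi*I*c/m) = 1 ↔ (m:ℤ) ∣ c := by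
  rw [Complex.exp_eq_one_iff]
  have hm' : (m:ℂ) ≠ 0 := Nat.cast_ne_zero.mpr hm.ne'
  have h2 : (2:ℂ)*Real.pi*I ≠ 0 := by
    simp [Real.pi_ne_zero, Complex.I_ne_zero]
  constructor
  · rintro ⟨n, h⟩
    refine ⟨n, ?_⟩
    have : (c:ℂ) = (m:ℂ) * n := by
      field_simp at h
      refine mul_left_cancel₀ h2 ?_
      linear_combination (2*Real.pi*I) * h
    exact_mod_cast this
  · rintro ⟨n, rfl⟩
    exact ⟨n, by push_cast; field_simp⟩

lemma geom_sum_exp (m:ℕ)(hm:0 < m)(a b:ℕ)(ha:a < m)(hb:b < m):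
    ∑ d ∈ Finset.range m, Complex.exp (2*Real.pi*I*a*d/m) * (starRingEnd ℂ) (Complex.exp (2*Real.pi*I*b*d/m))
      = if a = b then (m:ℂ) else 0 := by
  have hm' : (m:ℂ) ≠ 0 := Nat.cast_ne_zero.mpr hm.ne'
  have hterm : ∀ d : ℕ, Complex.exp (2*Real.pi*I*a*d/m) * (starRingEnd ℂ) (Complex.exp (2*Real.pi*I*b*d/m))
      = Complex.exp (2*Real.pi*I*(((a:ℤ)-(b:ℤ) : ℤ):ℂ)/m) ^ d := by
    intro d
    rw [← Complex.exp_conj, ← Complex.exp_nat_mul, ← Complex.exp_add]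
    congr 1
    have : (starRingEnd ℂ) (2*Real.pi*I*b*d/m) = -(2*Real.pi*I*b*d/m) := by
      simp [map_div₀, map_ofNat, Complex.conj_I, Complex.conj_natCast, Complex.conj_ofReal]
      ring
    rw [this]
    push_cast
    field_simp
    ring
  simp only [hterm]
  by_cases hab : a = b
  · subst hab
    simp [Complex.exp_zero]
  · rw [if_neg hab]
    set z := Complex.exp (2*Real.pi*I*(((a:ℤ)-(b:ℤ) : ℤ):ℂ)/m) with hz
    have hz1 : z ≠ 1 := by
      rw [hz, Ne, exp_eq_one m hm]
      intro hdvd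
      have hm0 : (0:ℤ) < m := by exact_mod_cast hm
      rcases hdvd with ⟨c, hc⟩
      have habs : |(m:ℤ)*c| < m := by rw [abs_lt]; omega
      have hc0 : c = 0 := by
        by_contra h0
        have h1 : 1 ≤ |c| := Int.one_le_abs (by omega)
        have : (m:ℤ) ≤ |(m:ℤ)*c| := by
          rw [abs_mul, abs_of_nonneg hm0.le]
          nlinarith
        omega
      subst hc0
      simp at hc
      omega
    rw [geom_sum_eq hz1]
    have hzm : z ^ m = 1 := by
      rw [hz, ← Complex.exp_nat_mul]
      have : (m:ℂ) * (2*Real.pi*I*(((a:ℤ)-(b:ℤ) : ℤ):ℂ)/m) = (((a:ℤ)-(b:ℤ) : ℤ):ℂ) * (2*Real.pi*I) := by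
        field_simp
      rw [this, Complex.exp_int_mul_two_pi_mul_I]
    rw [hzm]
    simp


lemma digit_of_add_mul (Lk mk Ln q r : ℕ) (h : Lk * mk ∣ Ln) (hLk : 0 < Lk) :
    ((q * Ln + r) / Lk) % mk = (r / Lk) % mk := by
  obtain ⟨c, hc⟩ := h
  have h1 : q * Ln + r = r + (q * (mk * c)) * Lk := by rw [hc]; ring
  rw [h1, Nat.add_mul_div_right _ _ hLk]
  have : r / Lk + q * (mk * c) = r / Lk + mk * (q * c) := by ring
  rw [this, Nat.add_mul_mod_self_left]

lemma L_dvd (L m : ℕ → ℕ) (n : ℕ) (hstep : ∀ k, k < n → L (k+1) = L k * m k) :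
    ∀ a b, a ≤ b → b ≤ n → L a ∣ L b := by
  intro a b hab hbn
  induction b with
  | zero => rw [Nat.le_zero.mp hab]
  | succ b ihb =>
    rcases Nat.eq_or_lt_of_le hab with h | h
    · rw [h]
    · have := ihb (by omega) (by omega)
      rw [hstep b (by omega)]
      exact this.trans (Dvd.intro _ rfl)

lemma L_pos (L m : ℕ → ℕ) (n : ℕ) (h0 : L 0 = 1) (hstep : ∀ k, k < n → L (k+1) = L k * m k)
    (hpos : ∀ k, k < n → 0 < m k) : ∀ j, j ≤ n → 0 < L j := by
  intro j hj
  induction j with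
  | zero => omega
  | succ i ihh =>
    rw [hstep i (by omega)]
    exact Nat.mul_pos (ihh (by omega)) (hpos i (by omega))

lemma mixed_radix_sum (L m : ℕ → ℕ) (f : ℕ → ℕ → ℂ) :
    ∀ n, L 0 = 1 → (∀ k, k < n → L (k+1) = L k * m k) → (∀ k, k < n → 0 < m k) →
    ∑ p ∈ Finset.range (L n), ∏ k ∈ Finset.range n, f k ((p / L k) % m k)
      = ∏ k ∈ Finset.range n, ∑ d ∈ Finset.range (m k), f k d := by
  intro n
  induction n with
  | zero => intro h0 _ _; simp [h0]
  | succ n ih =>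
    intro h0 hstep hpos
    have hLn : 0 < L n := L_pos L m (n+1) h0 hstep hpos n (by omega)
    have hmn : 0 < m n := hpos n (by omega)
    have hLsucc : L (n+1) = L n * m n := hstep n (by omega)
    have key : ∑ p ∈ Finset.range (L (n+1)), ∏ k ∈ Finset.range (n+1), f k ((p / L k) % m k)
        = ∑ qr ∈ Finset.range (m n) ×ˢ Finset.range (L n),
            ∏ k ∈ Finset.range (n+1), f k (((qr.1 * L n + qr.2) / L k) % m k) := by
      refine Finset.sum_nbij' (fun p => (p / L n, p % L n)) (fun qr => qr.1 * L n + qr.2) ?_ ?_ ?_ ?_ ?_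
      · intro p hp
        simp only [Finset.mem_range, Finset.mem_product] at *
        constructor
        · rw [hLsucc] at hp
          exact Nat.div_lt_of_lt_mul (by rw [mul_comm] at hp ⊢; exact hp)
        · exact Nat.mod_lt _ hLn
      · intro qr hqr
        simp only [Finset.mem_range, Finset.mem_product] at *
        rw [hLsucc]
        calc qr.1 * L n + qr.2 < qr.1 * L n + L n := by omega
        _ = (qr.1 + 1) * L n := by ring
        _ ≤ m n * L n := Nat.mul_le_mul_right _ (by omega)
        _ = L n * m n := by ring
      · intro p hp
        simp only []
        rw [mul_comm]
        exact Nat.div_add_mod p (L n)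
      · intro qr hqr
        simp only [Finset.mem_range, Finset.mem_product] at hqr
        ext
        · simp only []
          rw [mul_comm qr.1, Nat.mul_add_div hLn, Nat.div_eq_of_lt hqr.2]
          omega
        · simp only []
          rw [mul_comm qr.1, Nat.mul_add_mod, Nat.mod_eq_of_lt hqr.2]
      · intro p hp
        have hps : (p / L n) * L n + p % L n = p := by
          rw [mul_comm]; exact Nat.div_add_mod p (L n)
        simp only []
        rw [hps]
    rw [key, Finset.sum_product]
    have hterm : ∀ q, q < m n → ∀ r, r < L n →
        ∏ k ∈ Finset.range (n+1), f k (((q * L n + r) / L k) % m k)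
          = (∏ k ∈ Finset.range n, f k ((r / L k) % m k)) * f n q := by
      intro q hq r hr
      rw [Finset.prod_range_succ]
      congr 1
      · refine Finset.prod_congr rfl ?_
        intro k hk
        simp only [Finset.mem_range] at hk
        have hdvd : L k * m k ∣ L n := by
          rw [← hstep k (by omega)]
          exact L_dvd L m (n+1) hstep (k+1) n (by omega) (by omega)
        exact congrArg (f k) (digit_of_add_mul (L k) (m k) (L n) q r hdvd
          (L_pos L m (n+1) h0 hstep hpos k (by omega)))
      · congr 1
        rw [mul_comm q, Nat.mul_add_div hLn, Nat.div_eq_of_lt hr]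
        exact Nat.mod_eq_of_lt hq
    calc ∑ q ∈ Finset.range (m n), ∑ r ∈ Finset.range (L n),
            ∏ k ∈ Finset.range (n+1), f k (((q * L n + r) / L k) % m k)
        = ∑ q ∈ Finset.range (m n), ∑ r ∈ Finset.range (L n),
            (∏ k ∈ Finset.range n, f k ((r / L k) % m k)) * f n q := by
          refine Finset.sum_congr rfl fun q hq => Finset.sum_congr rfl fun r hr => ?_
          exact hterm q (Finset.mem_range.mp hq) r (Finset.mem_range.mp hr)
      _ = (∑ r ∈ Finset.range (L n), ∏ k ∈ Finset.range n, f k ((r / L k) % m k))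
            * (∑ q ∈ Finset.range (m n), f n q) := by
          rw [Finset.sum_comm, ← Finset.sum_mul_sum]
      _ = ∏ k ∈ Finset.range (n+1), ∑ d ∈ Finset.range (m k), f k d := by
          rw [ih h0 (fun k hk => hstep k (by omega)) (fun k hk => hpos k (by omega)),
            Finset.prod_range_succ]

lemma digits_inj (L m : ℕ → ℕ) :
    ∀ n, L 0 = 1 → (∀ k, k < n → L (k+1) = L k * m k) → (∀ k, k < n → 0 < m k) →
    ∀ p q, p < L n → q < L n → (∀ k, k < n → (p / L k) % m k = (q / L k) % m k) → p = q := by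
  intro n
  induction n with
  | zero => intro h0 _ _ p q hp hq _; rw [h0] at hp hq; omega
  | succ n ih =>
    intro h0 hstep hpos p q hp hq hdig
    have hLn : 0 < L n := L_pos L m (n+1) h0 hstep hpos n (by omega)
    have hmn : 0 < m n := hpos n (by omega)
    have hLsucc : L (n+1) = L n * m n := hstep n (by omega)
    have hdigit : ∀ x, x < L (n+1) → ∀ k, k < n → (x / L k) % m k = ((x % L n) / L k) % m k := by
      intro x hx k hk
      have hdvd : L k * m k ∣ L n := by
        rw [← hstep k (by omega)]
        exact L_dvd L m (n+1) hstep (k+1) n (by omega) (by omega)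
      have hx' : x = (x / L n) * L n + x % L n := by
        rw [mul_comm]; exact (Nat.div_add_mod x (L n)).symm
      conv_lhs => rw [hx']
      exact digit_of_add_mul (L k) (m k) (L n) (x / L n) (x % L n) hdvd
        (L_pos L m (n+1) h0 hstep hpos k (by omega))
    have htop : ∀ x, x < L (n+1) → (x / L n) % m n = x / L n := by
      intro x hx
      refine Nat.mod_eq_of_lt ?_
      rw [hLsucc] at hx
      exact Nat.div_lt_of_lt_mul hx
    have h1 : p % L n = q % L n := by
      refine ih h0 (fun k hk => hstep k (by omega)) (fun k hk => hpos k (by omega))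
        _ _ (Nat.mod_lt _ hLn) (Nat.mod_lt _ hLn) ?_
      intro k hk
      rw [← hdigit p hp k hk, ← hdigit q hq k hk]
      exact hdig k (by omega)
    have h2 : p / L n = q / L n := by
      rw [← htop p hp, ← htop q hq]
      exact hdig n (by omega)
    have e1 := Nat.div_add_mod p (L n)
    have e2 := Nat.div_add_mod q (L n)
    rw [h1, h2] at e1
    omega

lemma mixed_radix_sum_dvd (L m : ℕ → ℕ) (f : ℕ → ℕ → ℂ) (n t : ℕ) (ht : t ≤ n)
    (h0 : L 0 = 1) (hstep : ∀ k, k < n → L (k+1) = L k * m k) (hpos : ∀ k, k < n → 0 < m k) :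
    ∑ p ∈ (Finset.range (L n)).filter (fun p => p % L t = 0),
        ∏ k ∈ Finset.range n, f k ((p / L k) % m k)
      = (∏ k ∈ Finset.range t, f k 0) *
        ∏ k ∈ Finset.Ico t n, ∑ d ∈ Finset.range (m k), f k d := by
  have hLt : 0 < L t := L_pos L m n h0 hstep hpos t ht
  have hdvdtn : L t ∣ L n := L_dvd L m n hstep t n ht le_rfl
  -- reindex p = L t * q
  have key : ∑ p ∈ (Finset.range (L n)).filter (fun p => p % L t = 0),
        ∏ k ∈ Finset.range n, f k ((p / L k) % m k)
      = ∑ q ∈ Finset.range (L n / L t), ∏ k ∈ Finset.range n, f k (((L t * q) / L k) % m k) := by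
    refine Finset.sum_nbij' (fun p => p / L t) (fun q => L t * q) ?_ ?_ ?_ ?_ ?_
    · intro p hp
      simp only [Finset.mem_filter, Finset.mem_range] at *
      exact Nat.div_lt_div_of_lt_of_dvd hdvdtn hp.1
    · intro q hq
      simp only [Finset.mem_filter, Finset.mem_range] at *
      constructor
      · calc L t * q < L t * (L n / L t) := by exact (Nat.mul_lt_mul_left hLt).mpr hq
        _ = L n := Nat.mul_div_cancel' hdvdtn
      · simp [Nat.mul_mod_right]
    · intro p hp
      simp only [Finset.mem_filter, Finset.mem_range] at hp
      exact Nat.mul_div_cancel' (Nat.dvd_of_mod_eq_zero hp.2)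
    · intro q hq
      exact Nat.mul_div_cancel_left q hLt
    · intro p hp
      simp only [Finset.mem_filter, Finset.mem_range] at hp
      rw [Nat.mul_div_cancel' (Nat.dvd_of_mod_eq_zero hp.2)]
  rw [key]
  -- digits below t vanish, digits above shift
  have hdig_lo : ∀ q, ∀ k, k < t → ((L t * q) / L k) % m k = 0 := by
    intro q k hk
    have hdvd : L k * m k ∣ L t := by
      rw [← hstep k (by omega)]
      exact L_dvd L m n hstep (k+1) t (by omega) ht
    obtain ⟨c, hc⟩ := hdvd
    have : L t * q = (c * q) * (L k * m k) + 0 := by rw [hc]; ring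
    rw [this, digit_of_add_mul (L k) (m k) (L k * m k) (c*q) 0 dvd_rfl
      (L_pos L m n h0 hstep hpos k (by omega))]
    simp
  have hdig_hi : ∀ q, ∀ k, t ≤ k → k ≤ n → ((L t * q) / L k) % m k = (q / (L k / L t)) % m k := by
    intro q k hk1 hk2
    have hdvd : L t ∣ L k := L_dvd L m n hstep t k hk1 hk2
    obtain ⟨c, hc⟩ := hdvd
    rw [hc, Nat.mul_div_mul_left _ _ hLt, Nat.mul_div_cancel_left _ hLt]
  -- split the product
  have hsplit : ∀ q, ∏ k ∈ Finset.range n, f k (((L t * q) / L k) % m k)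
      = (∏ k ∈ Finset.range t, f k 0) * ∏ k ∈ Finset.Ico t n, f k ((q / (L k / L t)) % m k) := by
    intro q
    rw [← Finset.prod_range_mul_prod_Ico _ ht]
    congr 1
    · exact Finset.prod_congr rfl fun k hk => congrArg (f k) (hdig_lo q k (Finset.mem_range.mp hk))
    · exact Finset.prod_congr rfl fun k hk => congrArg (f k)
        (hdig_hi q k (Finset.mem_Ico.mp hk).1 (le_of_lt (Finset.mem_Ico.mp hk).2))
  simp only [hsplit]
  rw [← Finset.mul_sum]
  congr 1
  have hstep' : ∀ j, j < n - t → (L (t+(j+1)) / L t) = (L (t+j)/L t) * m (t+j) := by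
    intro j hj
    have hd1 : L t ∣ L (t+j) := L_dvd L m n hstep t (t+j) (by omega) (by omega)
    obtain ⟨c, hc⟩ := hd1
    have he : t + (j+1) = (t+j) + 1 := by omega
    rw [he, hstep (t+j) (by omega), hc, Nat.mul_div_cancel_left _ hLt,
      mul_assoc, Nat.mul_div_cancel_left _ hLt]
  have hpos' : ∀ j, j < n - t → 0 < m (t+j) := fun j hj => hpos (t+j) (by omega)
  have main := mixed_radix_sum (fun j => L (t+j) / L t) (fun j => m (t+j))
    (fun j d => f (t+j) d) (n-t) (by simp [Nat.div_self hLt]) hstep' hpos'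
  rw [Nat.add_sub_cancel' ht] at main
  have e2 : ∀ q : ℕ, ∏ k ∈ Finset.Ico t n, f k ((q / (L k / L t)) % m k)
      = ∏ j ∈ Finset.range (n-t), f (t+j) ((q / (L (t+j) / L t)) % m (t+j)) := by
    intro q
    rw [Finset.prod_Ico_eq_prod_range]
  calc ∑ q ∈ Finset.range (L n / L t), ∏ k ∈ Finset.Ico t n, f k ((q / (L k / L t)) % m k)
      = ∑ q ∈ Finset.range (L n / L t),
          ∏ j ∈ Finset.range (n-t), f (t+j) ((q / (L (t+j) / L t)) % m (t+j)) :=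
        Finset.sum_congr rfl fun q _ => e2 q
    _ = ∏ j ∈ Finset.range (n-t), ∑ d ∈ Finset.range (m (t+j)), f (t+j) d := main
    _ = ∏ k ∈ Finset.Ico t n, ∑ d ∈ Finset.range (m k), f k d :=
        (Finset.prod_Ico_eq_prod_range (fun k => ∑ d ∈ Finset.range (m k), f k d) t n).symm

noncomputable def pfun (L : ℕ → ℕ) (a b : ℕ → ℕ) (k d : ℕ) : ℂ :=
  (((Real.sqrt ((L (k + 1) / L k : ℕ) : ℝ) : ℝ) : ℂ))⁻¹ *
      Complex.exp (2 * (Real.pi : ℂ) * Complex.I * ((a k : ℕ) : ℂ) * ((d : ℕ) : ℂ) /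
        ((L (k + 1) / L k : ℕ) : ℂ)) *
    (starRingEnd ℂ) ((((Real.sqrt ((L (k + 1) / L k : ℕ) : ℝ) : ℝ) : ℂ))⁻¹ *
      Complex.exp (2 * (Real.pi : ℂ) * Complex.I * ((b k : ℕ) : ℂ) * ((d : ℕ) : ℂ) /
        ((L (k + 1) / L k : ℕ) : ℂ)))

lemma blockF_mul_conj (τ K : ℕ) (L : ℕ → ℕ) (x y p : Fin τ) :
    krsbBlockF τ K L x p * (starRingEnd ℂ) (krsbBlockF τ K L y p)
      = ∏ k ∈ Finset.range (K+1),
          pfun L (fun k => ((x:ℕ) / L k) % (L (k+1) / L k)) (fun k => ((y:ℕ) / L k) % (L (k+1) / L k))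
            k (((p:ℕ) / L k) % (L (k+1) / L k)) := by
  simp only [krsbBlockF, Matrix.of_apply, map_prod, ← Finset.prod_mul_distrib, pfun]

lemma pfun_zero (L : ℕ → ℕ) (a b : ℕ → ℕ) (k : ℕ) :
    pfun L a b k 0 = ((L (k + 1) / L k : ℕ) : ℂ)⁻¹ := by
  unfold pfun
  simp only [Nat.cast_zero, mul_zero, zero_div, Complex.exp_zero, mul_one, _root_.map_mul,
    map_inv₀, Complex.conj_ofReal, _root_.map_one]
  rw [← mul_inv, ← Complex.ofReal_mul, Real.mul_self_sqrt (by positivity),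
    Complex.ofReal_natCast]

lemma pfun_sum (L : ℕ → ℕ) (a b : ℕ → ℕ) (k : ℕ) (hm : 0 < L (k+1) / L k)
    (ha : a k < L (k+1) / L k) (hb : b k < L (k+1) / L k) :
    ∑ d ∈ Finset.range (L (k+1) / L k), pfun L a b k d
      = if a k = b k then 1 else 0 := by
  have hm' : ((L (k+1) / L k : ℕ):ℂ) ≠ 0 := Nat.cast_ne_zero.mpr hm.ne'
  have hre : ∀ d : ℕ, pfun L a b k d
      = ((L (k+1) / L k : ℕ):ℂ)⁻¹ *
          (Complex.exp (2*Real.pi*Complex.I*(a k)*d/((L (k+1) / L k : ℕ):ℂ))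
          * (starRingEnd ℂ) (Complex.exp (2*Real.pi*Complex.I*(b k)*d/((L (k+1) / L k : ℕ):ℂ)))) := by
    intro d
    unfold pfun
    rw [_root_.map_mul, map_inv₀, Complex.conj_ofReal]
    rw [show ((((Real.sqrt ((L (k+1) / L k : ℕ):ℝ)):ℝ):ℂ))⁻¹
          * Complex.exp (2*Real.pi*Complex.I*(a k)*d/((L (k+1) / L k : ℕ):ℂ)) *
        (((((Real.sqrt ((L (k+1) / L k : ℕ):ℝ)):ℝ):ℂ))⁻¹
          * (starRingEnd ℂ) (Complex.exp (2*Real.pi*Complex.I*(b k)*d/((L (k+1) / L k : ℕ):ℂ))))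
      = ((((Real.sqrt ((L (k+1) / L k : ℕ):ℝ)):ℝ):ℂ))⁻¹
          * ((((Real.sqrt ((L (k+1) / L k : ℕ):ℝ)):ℝ):ℂ))⁻¹ *
          (Complex.exp (2*Real.pi*Complex.I*(a k)*d/((L (k+1) / L k : ℕ):ℂ))
            * (starRingEnd ℂ) (Complex.exp (2*Real.pi*Complex.I*(b k)*d/((L (k+1) / L k : ℕ):ℂ))))
      from by ring]
    rw [← mul_inv, ← Complex.ofReal_mul, Real.mul_self_sqrt (by positivity),
      Complex.ofReal_natCast]
  simp only [hre]
  rw [← Finset.mul_sum, geom_sum_exp (L (k+1) / L k) hm (a k) (b k) ha hb]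
  by_cases h : a k = b k <;> simp [h, hm']

lemma L_prod (L m : ℕ → ℕ) (n : ℕ) (h0 : L 0 = 1)
    (hstep : ∀ k, k < n → L (k+1) = L k * m k) :
    L n = ∏ k ∈ Finset.range n, m k := by
  induction n with
  | zero => simpa using h0
  | succ n ih =>
    rw [Finset.prod_range_succ, ← ih (fun k hk => hstep k (by omega)), hstep n (by omega)]

lemma sqrt_nat_prod (s : Finset ℕ) (g : ℕ → ℕ) :
    Real.sqrt (∏ i ∈ s, (g i : ℝ)) = ∏ i ∈ s, Real.sqrt (g i) := by
  induction s using Finset.cons_induction with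
  | empty => simp
  | cons a s ha ih =>
    rw [Finset.prod_cons, Finset.prod_cons, Real.sqrt_mul (by positivity), ih]

lemma div_div_L (L m : ℕ → ℕ) (n t k : ℕ) (ht : t ≤ k) (hk : k ≤ n)
    (h0 : L 0 = 1) (hstep : ∀ j, j < n → L (j+1) = L j * m j) (hpos : ∀ j, j < n → 0 < m j)
    (x : ℕ) : x / L t / (L k / L t) = x / L k := by
  have hLt : 0 < L t := L_pos L m n h0 hstep hpos t (le_trans ht hk)
  obtain ⟨c, hc⟩ := L_dvd L m n hstep t k ht hk
  rw [hc, Nat.mul_div_cancel_left _ hLt, Nat.div_div_eq_div_mul]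

lemma digits_eq_iff_div_eq (L m : ℕ → ℕ) (n t : ℕ) (ht : t ≤ n)
    (h0 : L 0 = 1) (hstep : ∀ j, j < n → L (j+1) = L j * m j) (hpos : ∀ j, j < n → 0 < m j)
    (x y : ℕ) (hx : x < L n) (hy : y < L n) :
    (∀ k, t ≤ k → k < n → (x / L k) % m k = (y / L k) % m k) ↔ x / L t = y / L t := by
  have hLt : 0 < L t := L_pos L m n h0 hstep hpos t ht
  have hdvdtn : L t ∣ L n := L_dvd L m n hstep t n ht le_rfl
  constructor
  · intro h
    have hstep' : ∀ j, j < n - t → (L (t+(j+1)) / L t) = (L (t+j)/L t) * m (t+j) := by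
      intro j hj
      obtain ⟨c, hc⟩ := L_dvd L m n hstep t (t+j) (by omega) (by omega)
      have he : t + (j+1) = (t+j) + 1 := by omega
      rw [he, hstep (t+j) (by omega), hc, Nat.mul_div_cancel_left _ hLt,
        mul_assoc, Nat.mul_div_cancel_left _ hLt]
    have hpos' : ∀ j, j < n - t → 0 < m (t+j) := fun j hj => hpos (t+j) (by omega)
    refine digits_inj (fun j => L (t+j) / L t) (fun j => m (t+j)) (n-t)
      (by simp [Nat.div_self hLt]) hstep' hpos' _ _ ?_ ?_ ?_
    · show x / L t < L (t+(n-t)) / L t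
      rw [Nat.add_sub_cancel' ht]
      exact Nat.div_lt_div_of_lt_of_dvd hdvdtn hx
    · show y / L t < L (t+(n-t)) / L t
      rw [Nat.add_sub_cancel' ht]
      exact Nat.div_lt_div_of_lt_of_dvd hdvdtn hy
    · intro j hj
      show (x / L t / (L (t+j) / L t)) % m (t+j) = (y / L t / (L (t+j) / L t)) % m (t+j)
      rw [div_div_L L m n t (t+j) (by omega) (by omega) h0 hstep hpos,
        div_div_L L m n t (t+j) (by omega) (by omega) h0 hstep hpos]
      exact h (t+j) (by omega) (by omega)
  · intro h k hk1 hk2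
    rw [← div_div_L L m n t k hk1 (by omega) h0 hstep hpos,
      ← div_div_L L m n t k hk1 (by omega) h0 hstep hpos, h]

lemma blockF_orth (τ K : ℕ) (L : ℕ → ℕ) (h0 : L 0 = 1) (htop : L (K+1) = τ)
    (hstep : ∀ k, k < K+1 → L (k+1) = L k * (L (k+1) / L k))
    (hpos : ∀ k, k < K+1 → 0 < L (k+1) / L k) (x y : Fin τ) :
    ∑ p : Fin τ, krsbBlockF τ K L x p * (starRingEnd ℂ) (krsbBlockF τ K L y p)
      = if x = y then 1 else 0 := by
  have hx' : (x:ℕ) < L (K+1) := by rw [htop]; exact x.isLt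
  have hy' : (y:ℕ) < L (K+1) := by rw [htop]; exact y.isLt
  calc ∑ p : Fin τ, krsbBlockF τ K L x p * (starRingEnd ℂ) (krsbBlockF τ K L y p)
      = ∑ p ∈ Finset.range τ, ∏ k ∈ Finset.range (K+1),
          pfun L (fun k => ((x:ℕ) / L k) % (L (k+1) / L k))
            (fun k => ((y:ℕ) / L k) % (L (k+1) / L k)) k ((p / L k) % (L (k+1) / L k)) := by
        rw [← Fin.sum_univ_eq_sum_range (fun p => ∏ k ∈ Finset.range (K+1),
          pfun L (fun k => ((x:ℕ) / L k) % (L (k+1) / L k))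
            (fun k => ((y:ℕ) / L k) % (L (k+1) / L k)) k ((p / L k) % (L (k+1) / L k))) τ]
        exact Finset.sum_congr rfl fun p _ => blockF_mul_conj τ K L x y p
    _ = ∏ k ∈ Finset.range (K+1), ∑ d ∈ Finset.range (L (k+1) / L k),
          pfun L (fun k => ((x:ℕ) / L k) % (L (k+1) / L k))
            (fun k => ((y:ℕ) / L k) % (L (k+1) / L k)) k d := by
        have := mixed_radix_sum L (fun k => L (k+1) / L k)
          (pfun L (fun k => ((x:ℕ) / L k) % (L (k+1) / L k))
            (fun k => ((y:ℕ) / L k) % (L (k+1) / L k))) (K+1) h0 hstep hpos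
        rw [htop] at this
        exact this
    _ = ∏ k ∈ Finset.range (K+1),
          if ((x:ℕ) / L k) % (L (k+1) / L k) = ((y:ℕ) / L k) % (L (k+1) / L k)
            then (1:ℂ) else 0 := by
        refine Finset.prod_congr rfl fun k hk => ?_
        have hk' := Finset.mem_range.mp hk
        exact pfun_sum L _ _ k (hpos k hk') (Nat.mod_lt _ (hpos k hk')) (Nat.mod_lt _ (hpos k hk'))
    _ = if x = y then 1 else 0 := by
        by_cases hxy : x = y
        · subst hxy; simp
        · rw [if_neg hxy]
          have : ∃ k, k < K+1 ∧ ((x:ℕ) / L k) % (L (k+1) / L k) ≠ ((y:ℕ) / L k) % (L (k+1) / L k) := by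
            by_contra h
            push_neg at h
            exact hxy (Fin.ext (digits_inj L (fun k => L (k+1) / L k) (K+1) h0 hstep hpos
              (x:ℕ) (y:ℕ) hx' hy' h))
          obtain ⟨k, hk, hne⟩ := this
          exact Finset.prod_eq_zero (Finset.mem_range.mpr hk) (if_neg hne)

lemma blockF_col0 (τ K : ℕ) (L : ℕ → ℕ) (hτ : 0 < τ) (h0 : L 0 = 1) (htop : L (K+1) = τ)
    (hstep : ∀ k, k < K+1 → L (k+1) = L k * (L (k+1) / L k)) (x : Fin τ) :
    krsbBlockF τ K L x ⟨0, hτ⟩ = (((Real.sqrt τ : ℝ)) : ℂ)⁻¹ := by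
  unfold krsbBlockF
  simp only [Matrix.of_apply, Nat.zero_div, Nat.zero_mod, Nat.cast_zero,
    mul_zero, zero_div, Complex.exp_zero, mul_one]
  rw [Finset.prod_inv_distrib, ← Complex.ofReal_prod, ← sqrt_nat_prod, ← Nat.cast_prod,
    ← L_prod L (fun k => L (k+1) / L k) (K+1) h0 hstep, htop]

lemma blockF_pair_zero (τ K : ℕ) (L : ℕ → ℕ) (hτ : 0 < τ) (h0 : L 0 = 1) (htop : L (K+1) = τ)
    (hstep : ∀ k, k < K+1 → L (k+1) = L k * (L (k+1) / L k)) (x y : Fin τ) :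
    krsbBlockF τ K L x ⟨0, hτ⟩ * (starRingEnd ℂ) (krsbBlockF τ K L y ⟨0, hτ⟩)
      = ((τ:ℕ):ℂ)⁻¹ := by
  rw [blockF_col0 τ K L hτ h0 htop hstep, blockF_col0 τ K L hτ h0 htop hstep,
    map_inv₀, Complex.conj_ofReal, ← mul_inv, ← Complex.ofReal_mul,
    Real.mul_self_sqrt (by positivity), Complex.ofReal_natCast]

lemma blockF_diag (τ K : ℕ) (L : ℕ → ℕ) (hτ : 0 < τ) (h0 : L 0 = 1) (htop : L (K+1) = τ)
    (hstep : ∀ k, k < K+1 → L (k+1) = L k * (L (k+1) / L k))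
    (hpos : ∀ k, k < K+1 → 0 < L (k+1) / L k)
    (F χ : ℝ) (H : ℕ → ℝ) (x y : Fin τ) :
    ∑ p : Fin τ, krsbBlockF τ K L x p * ((krsbDvec τ K F χ H L (p:ℕ) : ℝ) : ℂ)
        * (starRingEnd ℂ) (krsbBlockF τ K L y p)
      = ((krsbA τ K F χ H L x y : ℝ) : ℂ) := by
  have hτC : ((τ:ℕ):ℂ) ≠ 0 := Nat.cast_ne_zero.mpr hτ.ne'
  have hsummand : ∀ p : Fin τ,
      krsbBlockF τ K L x p * ((krsbDvec τ K F χ H L (p:ℕ) : ℝ) : ℂ)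
          * (starRingEnd ℂ) (krsbBlockF τ K L y p)
        = (if (p:ℕ) = 0 then ((τ:ℝ) * F : ℂ) else 0)
              * (krsbBlockF τ K L x p * (starRingEnd ℂ) (krsbBlockF τ K L y p))
          + (χ:ℂ) * (krsbBlockF τ K L x p * (starRingEnd ℂ) (krsbBlockF τ K L y p))
          + ∑ t ∈ Finset.Icc 1 K, (if (p:ℕ) % L t = 0 then ((L t : ℝ) * H t : ℂ) else 0)
              * (krsbBlockF τ K L x p * (starRingEnd ℂ) (krsbBlockF τ K L y p)) := by
    intro p
    have hd : ((krsbDvec τ K F χ H L (p:ℕ) : ℝ) : ℂ)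
        = (if (p:ℕ) = 0 then ((τ:ℝ) * F : ℂ) else 0) + (χ:ℂ)
          + ∑ t ∈ Finset.Icc 1 K, (if (p:ℕ) % L t = 0 then ((L t : ℝ) * H t : ℂ) else 0) := by
      unfold krsbDvec
      push_cast [apply_ite (fun r : ℝ => (r:ℂ))]
      ring
    rw [hd, ← Finset.sum_mul]
    ring
  simp only [hsummand]
  rw [Finset.sum_add_distrib, Finset.sum_add_distrib]
  have hS1 : ∑ p : Fin τ, (if (p:ℕ) = 0 then ((τ:ℝ) * F : ℂ) else 0)
      * (krsbBlockF τ K L x p * (starRingEnd ℂ) (krsbBlockF τ K L y p)) = ((F:ℝ):ℂ) := by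
    rw [Finset.sum_eq_single_of_mem (⟨0, hτ⟩ : Fin τ) (Finset.mem_univ _)
      (fun b _ hb => by rw [if_neg (fun hb0 => hb (Fin.ext hb0)), zero_mul])]
    rw [if_pos rfl, blockF_pair_zero τ K L hτ h0 htop hstep]
    push_cast
    field_simp
  have hS2 : ∑ p : Fin τ, (χ:ℂ)
      * (krsbBlockF τ K L x p * (starRingEnd ℂ) (krsbBlockF τ K L y p))
      = if x = y then (χ:ℂ) else 0 := by
    rw [← Finset.mul_sum, blockF_orth τ K L h0 htop hstep hpos x y]
    by_cases hxy : x = y <;> simp [hxy]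
  have hS3 : ∑ p : Fin τ, ∑ t ∈ Finset.Icc 1 K,
      (if (p:ℕ) % L t = 0 then ((L t : ℝ) * H t : ℂ) else 0)
        * (krsbBlockF τ K L x p * (starRingEnd ℂ) (krsbBlockF τ K L y p))
      = ∑ t ∈ Finset.Icc 1 K,
          (if (x:ℕ) / L t = (y:ℕ) / L t then ((H t : ℝ):ℂ) else 0) := by
    rw [Finset.sum_comm]
    refine Finset.sum_congr rfl fun t ht => ?_
    have ht' := Finset.mem_Icc.mp ht
    have htK : t ≤ K + 1 := by omega
    have hLt : 0 < L t := L_pos L (fun k => L (k+1) / L k) (K+1) h0 hstep hpos t htK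
    have hLtC : ((L t : ℕ):ℂ) ≠ 0 := Nat.cast_ne_zero.mpr hLt.ne'
    have hx' : (x:ℕ) < L (K+1) := by rw [htop]; exact x.isLt
    have hy' : (y:ℕ) < L (K+1) := by rw [htop]; exact y.isLt
    have hdigiff := digits_eq_iff_div_eq L (fun k => L (k+1) / L k) (K+1) t htK h0 hstep hpos
      (x:ℕ) (y:ℕ) hx' hy'
    calc ∑ p : Fin τ, (if (p:ℕ) % L t = 0 then ((L t : ℝ) * H t : ℂ) else 0)
          * (krsbBlockF τ K L x p * (starRingEnd ℂ) (krsbBlockF τ K L y p))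
        = ∑ p ∈ Finset.range τ, (if p % L t = 0 then ((L t : ℝ) * H t : ℂ) else 0)
            * ∏ k ∈ Finset.range (K+1),
                pfun L (fun k => ((x:ℕ) / L k) % (L (k+1) / L k))
                  (fun k => ((y:ℕ) / L k) % (L (k+1) / L k)) k ((p / L k) % (L (k+1) / L k)) := by
          rw [← Fin.sum_univ_eq_sum_range (fun p => (if p % L t = 0 then ((L t : ℝ) * H t : ℂ) else 0)
            * ∏ k ∈ Finset.range (K+1),
                pfun L (fun k => ((x:ℕ) / L k) % (L (k+1) / L k))
                  (fun k => ((y:ℕ) / L k) % (L (k+1) / L k)) k ((p / L k) % (L (k+1) / L k))) τ]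
          exact Finset.sum_congr rfl fun p _ => by rw [blockF_mul_conj]
      _ = ∑ p ∈ (Finset.range τ).filter (fun p => p % L t = 0), ((L t : ℝ) * H t : ℂ)
            * ∏ k ∈ Finset.range (K+1),
                pfun L (fun k => ((x:ℕ) / L k) % (L (k+1) / L k))
                  (fun k => ((y:ℕ) / L k) % (L (k+1) / L k)) k ((p / L k) % (L (k+1) / L k)) := by
          rw [Finset.sum_filter]
          exact Finset.sum_congr rfl fun p _ => by split_ifs <;> simp
      _ = ((L t : ℝ) * H t : ℂ) * ∑ p ∈ (Finset.range τ).filter (fun p => p % L t = 0),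
            ∏ k ∈ Finset.range (K+1),
                pfun L (fun k => ((x:ℕ) / L k) % (L (k+1) / L k))
                  (fun k => ((y:ℕ) / L k) % (L (k+1) / L k)) k ((p / L k) % (L (k+1) / L k)) := by
          rw [Finset.mul_sum]
      _ = (if (x:ℕ) / L t = (y:ℕ) / L t then ((H t : ℝ):ℂ) else 0) := by
          have hmain := mixed_radix_sum_dvd L (fun k => L (k+1) / L k)
            (pfun L (fun k => ((x:ℕ) / L k) % (L (k+1) / L k))
              (fun k => ((y:ℕ) / L k) % (L (k+1) / L k))) (K+1) t htK h0 hstep hpos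
          rw [htop] at hmain
          rw [hmain]
          have h1 : ∏ k ∈ Finset.range t,
              pfun L (fun k => ((x:ℕ) / L k) % (L (k+1) / L k))
                (fun k => ((y:ℕ) / L k) % (L (k+1) / L k)) k 0 = ((L t : ℕ):ℂ)⁻¹ := by
            rw [Finset.prod_congr rfl (fun k _ => pfun_zero L _ _ k), Finset.prod_inv_distrib,
              ← Nat.cast_prod, ← L_prod L (fun k => L (k+1) / L k) t h0
                (fun k hk => hstep k (by omega))]
          have h2 : ∏ k ∈ Finset.Ico t (K+1), ∑ d ∈ Finset.range (L (k+1) / L k),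
              pfun L (fun k => ((x:ℕ) / L k) % (L (k+1) / L k))
                (fun k => ((y:ℕ) / L k) % (L (k+1) / L k)) k d
              = if (x:ℕ) / L t = (y:ℕ) / L t then (1:ℂ) else 0 := by
            have he : ∀ k ∈ Finset.Ico t (K+1), ∑ d ∈ Finset.range (L (k+1) / L k),
                pfun L (fun k => ((x:ℕ) / L k) % (L (k+1) / L k))
                  (fun k => ((y:ℕ) / L k) % (L (k+1) / L k)) k d
                = if ((x:ℕ) / L k) % (L (k+1) / L k) = ((y:ℕ) / L k) % (L (k+1) / L k)
                    then (1:ℂ) else 0 := by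
              intro k hk
              have hk' := Finset.mem_Ico.mp hk
              exact pfun_sum L _ _ k (hpos k hk'.2) (Nat.mod_lt _ (hpos k hk'.2))
                (Nat.mod_lt _ (hpos k hk'.2))
            rw [Finset.prod_congr rfl he]
            by_cases hc : (x:ℕ) / L t = (y:ℕ) / L t
            · rw [if_pos hc]
              refine Finset.prod_eq_one fun k hk => ?_
              have hk' := Finset.mem_Ico.mp hk
              rw [if_pos (hdigiff.mpr hc k hk'.1 hk'.2)]
            · rw [if_neg hc]
              have hex : ∃ k, t ≤ k ∧ k < K+1 ∧
                  ((x:ℕ) / L k) % (L (k+1) / L k) ≠ ((y:ℕ) / L k) % (L (k+1) / L k) := by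
                by_contra h
                push_neg at h
                exact hc (hdigiff.mp fun k hk1 hk2 => h k hk1 hk2)
              obtain ⟨k, hk1, hk2, hne⟩ := hex
              exact Finset.prod_eq_zero (Finset.mem_Ico.mpr ⟨hk1, hk2⟩) (if_neg hne)
          rw [h1, h2]
          by_cases hc : (x:ℕ) / L t = (y:ℕ) / L t
          · rw [if_pos hc, if_pos hc, mul_one]
            push_cast
            field_simp
          · rw [if_neg hc, if_neg hc, mul_zero, mul_zero]
  rw [hS1, hS2, hS3]
  unfold krsbA
  rw [Matrix.of_apply]
  push_cast [apply_ite (fun r : ℝ => (r:ℂ))]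
  rfl

section EntryLemmas

variable (τ K : ℕ) (L : ℕ → ℕ) (C D F χ : ℝ) (H : ℕ → ℝ)

lemma Fmat_00 (h : 0 < τ) : krsbFmat τ K L 0 0 = 1 := by simp [krsbFmat]

lemma Fmat_0succ (j : Fin τ) : krsbFmat τ K L 0 j.succ = 0 := by
  simp [krsbFmat, Fin.val_succ]

lemma Fmat_succ0 (i : Fin τ) : krsbFmat τ K L i.succ 0 = 0 := by
  simp [krsbFmat, Fin.val_succ]

lemma Fmat_succsucc (i j : Fin τ) : krsbFmat τ K L i.succ j.succ = krsbBlockF τ K L i j := by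
  simp [krsbFmat, Fin.val_succ]

lemma Dq_00 : krsbDq τ K C D F χ H L 0 0 = (C:ℂ) := by simp [krsbDq]

lemma Dq_0succ (j : Fin τ) : krsbDq τ K C D F χ H L 0 j.succ
    = if (j:ℕ) = 0 then ((Real.sqrt τ * D : ℝ):ℂ) else 0 := by
  by_cases h : (j:ℕ) = 0 <;> simp [krsbDq, Fin.val_succ, h]

lemma Dq_succ0 (i : Fin τ) : krsbDq τ K C D F χ H L i.succ 0
    = if (i:ℕ) = 0 then ((Real.sqrt τ * D : ℝ):ℂ) else 0 := by
  by_cases h : (i:ℕ) = 0 <;> simp [krsbDq, Fin.val_succ, h]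

lemma Dq_succsucc (i j : Fin τ) : krsbDq τ K C D F χ H L i.succ j.succ
    = if i = j then ((krsbDvec τ K F χ H L (i:ℕ) : ℝ):ℂ) else 0 := by
  by_cases h : i = j
  · subst h; simp [krsbDq, Fin.val_succ]
  · have : (i:ℕ) ≠ (j:ℕ) := fun hc => h (Fin.ext hc)
    simp [krsbDq, Fin.val_succ, h, this]

lemma Qmap_00 : (krsbQ τ K C D F χ H L).map (fun x : ℝ => (x:ℂ)) 0 0 = (C:ℂ) := by
  simp [krsbQ, Matrix.map_apply]

lemma Qmap_0succ (j : Fin τ) :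
    (krsbQ τ K C D F χ H L).map (fun x : ℝ => (x:ℂ)) 0 j.succ = (D:ℂ) := by
  simp [krsbQ, Matrix.map_apply, Fin.val_succ]

lemma Qmap_succ0 (i : Fin τ) :
    (krsbQ τ K C D F χ H L).map (fun x : ℝ => (x:ℂ)) i.succ 0 = (D:ℂ) := by
  simp [krsbQ, Matrix.map_apply, Fin.val_succ]

lemma Qmap_succsucc (i j : Fin τ) :
    (krsbQ τ K C D F χ H L).map (fun x : ℝ => (x:ℂ)) i.succ j.succ
      = ((krsbA τ K F χ H L i j : ℝ):ℂ) := by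
  simp [krsbQ, Matrix.map_apply, Fin.val_succ]

end EntryLemmas

/-- `𝐅` is unitary and `𝒬(C, D, F, χ, {H_k}) = 𝐅 · D_q · 𝐅ᴴ`. -/
theorem krsbQ_diagonalization (τ K : ℕ) (hτ : 0 < τ) (hK : 0 < K)
    (L : ℕ → ℕ) (hL0 : L 0 = 1) (hLtop : L (K + 1) = τ)
    (hLpos : ∀ k, 1 ≤ k → k ≤ K → 0 < L k)
    (hchain : ∀ k, 1 ≤ k → k < K → L k ∣ L (k + 1))
    (hdiv : L K ∣ τ)
    (C D F χ : ℝ) (H : ℕ → ℝ) :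
    (krsbFmat τ K L * (krsbFmat τ K L)ᴴ = 1 ∧
        (krsbFmat τ K L)ᴴ * krsbFmat τ K L = 1) ∧
      (krsbQ τ K C D F χ H L).map (fun x : ℝ => (x : ℂ)) =
        krsbFmat τ K L * krsbDq τ K C D F χ H L * (krsbFmat τ K L)ᴴ := by
  -- derived hypotheses
  have hdvd' : ∀ k, k < K+1 → L k ∣ L (k+1) := by
    intro k hk
    rcases Nat.eq_zero_or_pos k with h | h
    · subst h; rw [hL0]; exact one_dvd _
    · by_cases hkK : k = K
      · subst hkK; rw [hLtop]; exact hdiv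
      · exact hchain k h (by omega)
  have hstep : ∀ k, k < K+1 → L (k+1) = L k * (L (k+1) / L k) :=
    fun k hk => (Nat.mul_div_cancel' (hdvd' k hk)).symm
  have hLposAll : ∀ j, j ≤ K+1 → 0 < L j := by
    intro j hj
    rcases Nat.eq_zero_or_pos j with h | h
    · subst h; rw [hL0]; norm_num
    · by_cases hjK : j = K+1
      · subst hjK; rw [hLtop]; exact hτ
      · exact hLpos j h (by omega)
  have hpos : ∀ k, k < K+1 → 0 < L (k+1) / L k := fun k hk =>
    Nat.div_pos (Nat.le_of_dvd (hLposAll (k+1) (by omega)) (hdvd' k hk)) (hLposAll k (by omega))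
  have hsqrtτ : ((Real.sqrt τ : ℝ):ℂ) ≠ 0 := by
    simp only [ne_eq, Complex.ofReal_eq_zero]
    positivity
  -- unitarity
  have hunit : krsbFmat τ K L * (krsbFmat τ K L)ᴴ = 1 := by
    ext i j
    rw [Matrix.mul_apply]
    induction i using Fin.cases with
    | zero =>
      induction j using Fin.cases with
      | zero =>
        rw [Fin.sum_univ_succ]
        simp [Matrix.conjTranspose_apply, Fmat_00 τ K L hτ, Fmat_0succ, Matrix.one_apply]
      | succ j =>
        rw [Fin.sum_univ_succ]
        simp [Matrix.conjTranspose_apply, Fmat_00 τ K L hτ, Fmat_0succ, Fmat_succ0,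
          Matrix.one_apply, (Fin.succ_ne_zero j).symm]
    | succ i =>
      induction j using Fin.cases with
      | zero =>
        rw [Fin.sum_univ_succ]
        simp [Matrix.conjTranspose_apply, Fmat_00 τ K L hτ, Fmat_0succ, Fmat_succ0,
          Matrix.one_apply, Fin.succ_ne_zero i]
      | succ j =>
        rw [Fin.sum_univ_succ]
        simp only [Matrix.conjTranspose_apply, Fmat_succ0, star_zero, mul_zero, zero_add,
          Fmat_succsucc]
        have horth := blockF_orth τ K L hL0 hLtop hstep hpos i j
        simp only [starRingEnd_apply] at horth
        rw [horth, Matrix.one_apply]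
        by_cases h : i = j
        · subst h; simp
        · rw [if_neg h, if_neg (by simpa [Fin.succ_inj] using h)]
  refine ⟨⟨hunit, mul_eq_one_comm.mp hunit⟩, ?_⟩
  -- the diagonalization identity
  have hB0 : ∀ z : Fin τ, krsbBlockF τ K L z ⟨0, hτ⟩ = (((Real.sqrt τ : ℝ)):ℂ)⁻¹ :=
    blockF_col0 τ K L hτ hL0 hLtop hstep
  have hFD : ∀ (i : Fin τ) (b : Fin τ),
      (krsbFmat τ K L * krsbDq τ K C D F χ H L) i.succ b.succ
        = krsbBlockF τ K L i b * ((krsbDvec τ K F χ H L (b:ℕ) : ℝ):ℂ) := by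
    intro i b
    rw [Matrix.mul_apply, Fin.sum_univ_succ]
    simp only [Fmat_succ0, zero_mul, zero_add, Fmat_succsucc, Dq_succsucc, mul_ite, mul_zero]
    rw [Finset.sum_ite_eq' Finset.univ b
      (fun a => krsbBlockF τ K L i a * ((krsbDvec τ K F χ H L (a:ℕ) : ℝ):ℂ))]
    simp
  ext i j
  rw [Matrix.mul_apply]
  induction i using Fin.cases with
  | zero =>
    have hFD0 : ∀ b : Fin (τ+1), (krsbFmat τ K L * krsbDq τ K C D F χ H L) 0 b
        = krsbDq τ K C D F χ H L 0 b := by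
      intro b
      rw [Matrix.mul_apply, Fin.sum_univ_succ]
      simp [Fmat_00 τ K L hτ, Fmat_0succ]
    induction j using Fin.cases with
    | zero =>
      rw [Fin.sum_univ_succ, Qmap_00]
      simp only [hFD0, Matrix.conjTranspose_apply, Fmat_0succ, star_zero, mul_zero,
        Finset.sum_const_zero, add_zero, Dq_00, Fmat_00 τ K L hτ]
      simp
    | succ j =>
      rw [Fin.sum_univ_succ, Qmap_0succ]
      simp only [hFD0, Matrix.conjTranspose_apply, Fmat_succ0, star_zero, mul_zero, zero_add,
        Fmat_succsucc, Dq_0succ]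
      rw [Finset.sum_eq_single_of_mem (⟨0, hτ⟩ : Fin τ) (Finset.mem_univ _)
        (fun b _ hb => by rw [if_neg (fun hb0 => hb (Fin.ext hb0)), zero_mul])]
      rw [if_pos rfl, hB0 j]
      rw [star_inv₀, ← starRingEnd_apply, Complex.conj_ofReal]
      push_cast
      field_simp
  | succ i =>
    induction j using Fin.cases with
    | zero =>
      rw [Fin.sum_univ_succ, Qmap_succ0]
      simp only [Matrix.conjTranspose_apply, Fmat_0succ, star_zero, mul_zero,
        Finset.sum_const_zero, add_zero, Fmat_00 τ K L hτ, star_one, mul_one]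
      rw [Matrix.mul_apply, Fin.sum_univ_succ]
      simp only [Fmat_succ0, zero_mul, zero_add, Fmat_succsucc, Dq_succ0]
      rw [Finset.sum_eq_single_of_mem (⟨0, hτ⟩ : Fin τ) (Finset.mem_univ _)
        (fun b _ hb => by rw [if_neg (fun hb0 => hb (Fin.ext hb0)), mul_zero])]
      rw [if_pos rfl, hB0 i]
      push_cast
      field_simp
    | succ j =>
      rw [Fin.sum_univ_succ, Qmap_succsucc]
      simp only [Matrix.conjTranspose_apply, Fmat_succ0, star_zero, mul_zero, zero_add,
        Fmat_succsucc, hFD]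
      have hdiag := blockF_diag τ K L hτ hL0 hLtop hstep hpos F χ H i j
      simp only [starRingEnd_apply] at hdiag
      rw [← hdiag]
end

section
/- Let n and L be positive integers and let A and B be symmetric n×n real matrices such that B, A − B, and A + (L−1)B are invertible. Then the nL×nL matrix Q = J_L ⊗ B + I_L ⊗ (A − B) is invertible, the matrix M = (A−B)·B^{−1}·(A−B) + L·(A−B) is invertible, and Q^{−1} = −J_L ⊗ M^{−1} + I_L ⊗ (A−B)^{−1}. -/
open Matrix Kronecker

/-- for symmetric `n×n` real matrices `A`, `B` with `B`, `A − B` and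
`A + (L−1)B` invertible, the matrix `Q = J_L ⊗ B + I_L ⊗ (A − B)` is invertible,
`M = (A−B)·B⁻¹·(A−B) + L·(A−B)` is invertible, and
`Q⁻¹ = −J_L ⊗ M⁻¹ + I_L ⊗ (A−B)⁻¹`. -/
theorem kronecker_block_inverse (n L : ℕ) (hn : 0 < n) (hL : 0 < L)
    (A B : Matrix (Fin n) (Fin n) ℝ) (hA : A.IsSymm) (hB : B.IsSymm)
    (hBu : IsUnit B) (hABu : IsUnit (A - B))
    (hALBu : IsUnit (A + ((L : ℝ) - 1) • B)) :
    IsUnit ((Matrix.of fun _ _ : Fin L => (1 : ℝ)) ⊗ₖ B +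
        (1 : Matrix (Fin L) (Fin L) ℝ) ⊗ₖ (A - B)) ∧
      IsUnit ((A - B) * B⁻¹ * (A - B) + (L : ℝ) • (A - B)) ∧
      ((Matrix.of fun _ _ : Fin L => (1 : ℝ)) ⊗ₖ B +
          (1 : Matrix (Fin L) (Fin L) ℝ) ⊗ₖ (A - B))⁻¹ =
        -((Matrix.of fun _ _ : Fin L => (1 : ℝ)) ⊗ₖ
            ((A - B) * B⁻¹ * (A - B) + (L : ℝ) • (A - B))⁻¹) +
          (1 : Matrix (Fin L) (Fin L) ℝ) ⊗ₖ (A - B)⁻¹ := by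
  set C := A - B with hC
  set J : Matrix (Fin L) (Fin L) ℝ := Matrix.of fun _ _ => (1 : ℝ) with hJ
  have hBdet : IsUnit B.det := (Matrix.isUnit_iff_isUnit_det B).mp hBu
  have hCdet : IsUnit C.det := (Matrix.isUnit_iff_isUnit_det C).mp hABu
  have hBinvU : IsUnit B⁻¹ := Matrix.isUnit_nonsing_inv_iff.mpr hBu
  -- `C + L • B = A + (L-1) • B`
  have hS : C + (L : ℝ) • B = A + ((L : ℝ) - 1) • B := by
    rw [hC, sub_smul, one_smul]; abel
  have hSu : IsUnit (C + (L : ℝ) • B) := hS ▸ hALBu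
  have hSdet : IsUnit (C + (L : ℝ) • B).det :=
    (Matrix.isUnit_iff_isUnit_det _).mp hSu
  -- factorization of M
  have hMfac : C * B⁻¹ * C + (L : ℝ) • C = C * B⁻¹ * (C + (L : ℝ) • B) := by
    rw [mul_add, Matrix.mul_smul, mul_assoc, mul_assoc, Matrix.nonsing_inv_mul B hBdet, mul_one]
  have hMu : IsUnit (C * B⁻¹ * C + (L : ℝ) • C) := by
    rw [hMfac]; exact (hABu.mul hBinvU).mul hSu
  -- key identity : (C + L•B) * M⁻¹ = B * C⁻¹
  have hMinv : (C * B⁻¹ * C + (L : ℝ) • C)⁻¹ = (C + (L : ℝ) • B)⁻¹ * B * C⁻¹ := by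
    rw [hMfac, Matrix.mul_inv_rev, Matrix.mul_inv_rev, Matrix.nonsing_inv_nonsing_inv B hBdet,
      mul_assoc]
  have hkey : (C + (L : ℝ) • B) * (C * B⁻¹ * C + (L : ℝ) • C)⁻¹ = B * C⁻¹ := by
    rw [hMinv, ← mul_assoc, ← mul_assoc, Matrix.mul_nonsing_inv _ hSdet, one_mul]
  set Minv := (C * B⁻¹ * C + (L : ℝ) • C)⁻¹ with hMi
  have hkey' : C * Minv + (L : ℝ) • (B * Minv) = B * C⁻¹ := by
    rw [← hkey, add_mul, Matrix.smul_mul]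
  have hJJ : J * J = (L : ℝ) • J := by
    ext i j
    simp [hJ, Matrix.mul_apply]
  -- main computation : Q * R = 1
  have hQR : (J ⊗ₖ B + (1 : Matrix (Fin L) (Fin L) ℝ) ⊗ₖ C) *
      (-(J ⊗ₖ Minv) + (1 : Matrix (Fin L) (Fin L) ℝ) ⊗ₖ C⁻¹) = 1 := by
    have e1 : (J ⊗ₖ B) * (J ⊗ₖ Minv) = J ⊗ₖ ((L : ℝ) • (B * Minv)) := by
      rw [← Matrix.mul_kronecker_mul, hJJ, Matrix.smul_kronecker, Matrix.kronecker_smul]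
    have e2 : (J ⊗ₖ B) * ((1 : Matrix (Fin L) (Fin L) ℝ) ⊗ₖ C⁻¹) = J ⊗ₖ (B * C⁻¹) := by
      rw [← Matrix.mul_kronecker_mul, mul_one]
    have e3 : ((1 : Matrix (Fin L) (Fin L) ℝ) ⊗ₖ C) * (J ⊗ₖ Minv) = J ⊗ₖ (C * Minv) := by
      rw [← Matrix.mul_kronecker_mul, one_mul]
    have e4 : ((1 : Matrix (Fin L) (Fin L) ℝ) ⊗ₖ C) *
        ((1 : Matrix (Fin L) (Fin L) ℝ) ⊗ₖ C⁻¹) = 1 := by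
      rw [← Matrix.mul_kronecker_mul, one_mul, Matrix.mul_nonsing_inv _ hCdet,
        Matrix.one_kronecker_one]
    rw [add_mul, mul_add, mul_add, mul_neg, mul_neg, e1, e2, e3, e4]
    have : J ⊗ₖ (B * C⁻¹) - J ⊗ₖ ((L : ℝ) • (B * Minv)) - J ⊗ₖ (C * Minv) = 0 := by
      have hsub : ∀ X Y : Matrix (Fin n) (Fin n) ℝ, J ⊗ₖ X - J ⊗ₖ Y = J ⊗ₖ (X - Y) := by
        intro X Y; ext ⟨i, k⟩ ⟨j, l⟩
        simp [Matrix.kroneckerMap_apply, mul_sub, hJ]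
      rw [hsub, hsub]
      have : B * C⁻¹ - (L : ℝ) • (B * Minv) - C * Minv = 0 := by
        rw [← hkey']; abel
      rw [this, Matrix.kronecker_zero]
    linear_combination (norm := abel) this
  refine ⟨?_, hMu, ?_⟩
  · rw [Matrix.isUnit_iff_isUnit_det]
    exact IsUnit.of_mul_eq_one _ (by rw [← Matrix.det_mul, hQR, Matrix.det_one])
  · exact Matrix.inv_eq_right_inv hQR
end

section
/- Let n and L be positive integers and let B and C be n×n real matrices. Then det(J_L ⊗ B + I_L ⊗ C) = det(C)^{L−1} · det(C + L·B). -/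
open Matrix Kronecker

section aux
variable (L : ℕ) [NeZero L]

noncomputable def Emat : Matrix (Fin L) (Fin L) ℝ :=
  Matrix.of fun i j => if i = 0 then 1 else (if j = i then 1 else 0) - (if j = 0 then 1 else 0)

noncomputable def Fmat : Matrix (Fin L) (Fin L) ℝ :=
  Matrix.of fun i j => if j = 0 then (L:ℝ)⁻¹ else (if i = j then 1 else 0) - (L:ℝ)⁻¹

lemma Lne : (L:ℝ) ≠ 0 := Nat.cast_ne_zero.mpr (NeZero.ne L)

lemma sumF (k : Fin L) : ∑ j, Fmat L j k = if k = 0 then 1 else 0 := by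
  rcases eq_or_ne k 0 with hk | hk
  · simp [Fmat, hk, Finset.sum_const, mul_inv_cancel₀ (Lne L)]
  · simp [Fmat, hk, Finset.sum_sub_distrib, Finset.sum_ite_eq', mul_inv_cancel₀ (Lne L)]

lemma EF : Emat L * Fmat L = 1 := by
  ext i k
  rw [mul_apply]
  rcases eq_or_ne i 0 with hi | hi
  · subst hi
    simp only [Emat, of_apply, if_pos rfl, if_true, one_mul]
    rw [sumF]
    simp [one_apply, eq_comm]
  · have : ∀ j, Emat L i j * Fmat L j k
        = (if j = i then 1 else 0) * Fmat L j k - (if j = 0 then 1 else 0) * Fmat L j k := by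
      intro j; simp [Emat, hi, sub_mul]
    simp only [this, Finset.sum_sub_distrib, ite_mul, one_mul, zero_mul,
      Finset.sum_ite_eq', Finset.mem_univ, if_pos]
    rcases eq_or_ne k 0 with hk | hk
    · simp [Fmat, hk, one_apply, hi]
    · simp [Fmat, hk, one_apply, Ne.symm hi, Ne.symm hk]
end aux

section aux2
variable (L : ℕ) [NeZero L]

lemma EJF : Emat L * Matrix.of (fun _ _ : Fin L => (1:ℝ)) * Fmat L
    = Matrix.single 0 0 (L:ℝ) := by
  have hJF : Matrix.of (fun _ _ : Fin L => (1:ℝ)) * Fmat L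
      = Matrix.of fun _ k => if k = 0 then (1:ℝ) else 0 := by
    ext i k
    rw [mul_apply]
    simp only [of_apply, one_mul]
    exact sumF L k
  rw [mul_assoc, hJF]
  ext i k
  rw [mul_apply]
  simp only [of_apply, mul_ite, mul_one, mul_zero, Matrix.single]
  rcases eq_or_ne k 0 with hk | hk
  · subst hk
    simp only [if_pos rfl, Finset.sum_ite_eq', Finset.mem_univ]
    rcases eq_or_ne i 0 with hi | hi
    · subst hi
      simp [Emat, Finset.sum_const]
    · simp only [Emat, of_apply, hi, if_false, and_true, Finset.sum_sub_distrib,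
        Finset.sum_ite_eq', Finset.mem_univ, if_pos, if_neg hi, if_neg (Ne.symm hi)]
      ring
  · simp [hk, Ne.symm hk, Finset.sum_const_zero]

lemma prod_aux (p q : ℝ) : (∏ k : Fin L, if k = 0 then p else q) = p * q ^ (L - 1) := by
  rw [← Finset.mul_prod_erase Finset.univ _ (Finset.mem_univ (0 : Fin L))]
  simp only [if_pos rfl]
  congr 1
  rw [Finset.prod_congr rfl (fun x hx => if_neg (Finset.mem_erase.mp hx).1),
    Finset.prod_const, Finset.card_erase_of_mem (Finset.mem_univ _), Finset.card_univ,
    Fintype.card_fin]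
end aux2

lemma key (L n : ℕ) [NeZero L] (B C : Matrix (Fin n) (Fin n) ℝ) :
    (Matrix.single (0 : Fin L) 0 (L:ℝ)) ⊗ₖ B + (1 : Matrix (Fin L) (Fin L) ℝ) ⊗ₖ C
      = (Matrix.blockDiagonal fun k : Fin L => if k = 0 then C + (L:ℝ) • B else C).submatrix
          (Equiv.prodComm (Fin L) (Fin n)) (Equiv.prodComm (Fin L) (Fin n)) := by
  ext ⟨k, i⟩ ⟨k', j⟩
  simp only [Matrix.add_apply, kroneckerMap_apply, submatrix_apply, Equiv.prodComm_apply,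
    Prod.swap_prod_mk, blockDiagonal_apply, Matrix.single, one_apply, of_apply]
  rcases eq_or_ne k k' with h | h
  · subst h
    rcases eq_or_ne k 0 with h0 | h0
    · subst h0; simp [Matrix.add_apply, Matrix.smul_apply]; ring
    · simp [h0, Ne.symm h0]
  · have : ¬ (0 = k ∧ 0 = k') := by rintro ⟨rfl, rfl⟩; exact h rfl
    simp [h, this]

/-- for `n×n` real matrices `B`, `C`,
`det(J_L ⊗ B + I_L ⊗ C) = det(C)^{L−1} · det(C + L·B)`. -/
theorem kronecker_block_det (n L : ℕ) (hn : 0 < n) (hL : 0 < L)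
    (B C : Matrix (Fin n) (Fin n) ℝ) :
    ((Matrix.of fun _ _ : Fin L => (1 : ℝ)) ⊗ₖ B +
        (1 : Matrix (Fin L) (Fin L) ℝ) ⊗ₖ C).det =
      C.det ^ (L - 1) * (C + (L : ℝ) • B).det := by
  haveI : NeZero L := ⟨hL.ne'⟩
  set J : Matrix (Fin L) (Fin L) ℝ := Matrix.of fun _ _ => (1 : ℝ) with hJ
  set M := J ⊗ₖ B + (1 : Matrix (Fin L) (Fin L) ℝ) ⊗ₖ C with hM
  have hdetEF : ((Emat L) ⊗ₖ (1 : Matrix (Fin n) (Fin n) ℝ)).det *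
      ((Fmat L) ⊗ₖ (1 : Matrix (Fin n) (Fin n) ℝ)).det = 1 := by
    rw [← det_mul, ← mul_kronecker_mul, EF, mul_one, one_kronecker_one, det_one]
  have h2 : ((Emat L) ⊗ₖ (1 : Matrix (Fin n) (Fin n) ℝ)) * M *
      ((Fmat L) ⊗ₖ (1 : Matrix (Fin n) (Fin n) ℝ))
      = (Matrix.single (0 : Fin L) 0 (L:ℝ)) ⊗ₖ B
        + (1 : Matrix (Fin L) (Fin L) ℝ) ⊗ₖ C := by
    rw [hM, mul_add, add_mul, ← mul_kronecker_mul, ← mul_kronecker_mul,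
      ← mul_kronecker_mul, ← mul_kronecker_mul]
    rw [one_mul, mul_one, EJF, mul_one, EF, one_mul, mul_one]
  have h1 : M.det = (((Emat L) ⊗ₖ (1 : Matrix (Fin n) (Fin n) ℝ)) * M *
      ((Fmat L) ⊗ₖ (1 : Matrix (Fin n) (Fin n) ℝ))).det := by
    rw [det_mul, det_mul, mul_right_comm, hdetEF, one_mul]
  rw [h1, h2, key, det_submatrix_equiv_self, det_blockDiagonal]
  simp only [apply_ite Matrix.det]
  rw [prod_aux, mul_comm]
end

section
/- The determinant of the KRSB matrix satisfies det 𝒜(F, χ, {H_k}) = (τF + S_K) · χ^{τ − τ/L̃_1} · (Π_{k=1}^{K−1} S_k^{τ/L̃_k − τ/L̃_{k+1}}) · S_K^{τ/L̃_K − 1}. -/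
open Matrix Finset Kronecker

/-- `S_k = χ + Σ_{i=1}^k L̃_i·H_i` (so `S_0 = χ`). -/
def krsbS (k : ℕ) (χ : ℝ) (H : ℕ → ℝ) (L : ℕ → ℕ) : ℝ :=
  χ + ∑ i ∈ Finset.Icc 1 k, (L i : ℝ) * H i

/-! ### auxiliary lemmas -/

lemma krsbS_succ (K : ℕ) (χ : ℝ) (H : ℕ → ℝ) (L : ℕ → ℕ) :
    krsbS (K+1) χ H L = krsbS K χ H L + (L (K+1) : ℝ) * H (K+1) := by
  simp only [krsbS, Finset.sum_Icc_succ_top (by omega : 1 ≤ K+1)]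
  ring

lemma krsbS_one (χ : ℝ) (H : ℕ → ℝ) (L : ℕ → ℕ) :
    krsbS 1 χ H L = χ + (L 1 : ℝ) * H 1 := by
  simp [krsbS]

lemma krsbS_shift (k : ℕ) (χ t : ℝ) (H : ℕ → ℝ) (L : ℕ → ℕ) :
    krsbS k (χ + t) H L = krsbS k χ H L + t := by
  simp only [krsbS]; ring

lemma krsbA_shift (τ K : ℕ) (F χ t : ℝ) (H : ℕ → ℝ) (L : ℕ → ℕ) :
    krsbA τ K F (χ + t) H L = krsbA τ K F χ H L + t • (1 : Matrix (Fin τ) (Fin τ) ℝ) := by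
  ext i j
  simp only [krsbA, Matrix.of_apply, Matrix.add_apply, Matrix.smul_apply, Matrix.one_apply,
    smul_eq_mul]
  by_cases h : i = j <;> simp [h] <;> ring

lemma det_one_add_constJ (n : ℕ) (c : ℝ) :
    (1 + Matrix.of (fun _ _ : Fin n => c)).det = 1 + n * c := by
  have h : (Matrix.of (fun _ _ : Fin n => c))
      = Matrix.replicateCol (Fin 1) (fun _ => c) * Matrix.replicateRow (Fin 1) (fun _ => (1:ℝ)) := by
    ext i j; simp [Matrix.mul_apply]
  rw [h]; refine (Matrix.det_one_add_replicateCol_mul_replicateRow (ι := Fin 1) _ _).trans ?_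
  simp [dotProduct, mul_comm]

lemma det_add_constJ {n : ℕ} (M : Matrix (Fin n) (Fin n) ℝ) {s : ℝ} (hs : s ≠ 0)
    (hdet : M.det ≠ 0) (hrow : ∀ i, ∑ j, M i j = s) (F : ℝ) :
    (M + Matrix.of (fun _ _ : Fin n => F)).det = M.det * (1 + n * F / s) := by
  set J : Matrix (Fin n) (Fin n) ℝ := Matrix.of (fun _ _ : Fin n => (1:ℝ)) with hJ
  have hMJ : M * J = s • J := by
    ext i j; simp [hJ, Matrix.mul_apply, hrow i]
  have hU : IsUnit M.det := isUnit_iff_ne_zero.mpr hdet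
  have h1 : J = s • (M⁻¹ * J) := by
    have := congrArg (fun X => M⁻¹ * X) hMJ
    simpa only [← Matrix.mul_assoc, Matrix.nonsing_inv_mul M hU, Matrix.one_mul,
      Matrix.mul_smul] using this
  have hinvJ : M⁻¹ * J = s⁻¹ • J := by
    calc M⁻¹ * J = s⁻¹ • (s • (M⁻¹ * J)) := by rw [smul_smul, inv_mul_cancel₀ hs, one_smul]
    _ = s⁻¹ • J := by rw [← h1]
  have key : M + Matrix.of (fun _ _ : Fin n => F) = M * (1 + Matrix.of (fun _ _ : Fin n => F / s)) := by
    have h3 : Matrix.of (fun _ _ : Fin n => F / s) = F • (s⁻¹ • J) := by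
      ext i j; simp [hJ, smul_smul, div_eq_mul_inv, mul_comm]
    rw [Matrix.mul_add, Matrix.mul_one, h3, ← hinvJ, Matrix.mul_smul, ← Matrix.mul_assoc,
      Matrix.mul_nonsing_inv M hU, Matrix.one_mul]
    congr 1
    ext i j; simp [hJ]
  rw [key, Matrix.det_mul, det_one_add_constJ]
  ring_nf

def blockEquiv {n L : ℕ} (h : L ∣ n) : Fin (n / L) × Fin L ≃ Fin n :=
  finProdFinEquiv.trans (finCongr (Nat.div_mul_cancel h))

lemma blockEquiv_val {n L : ℕ} (h : L ∣ n) (a : Fin (n / L)) (b : Fin L) :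
    ((blockEquiv h (a, b) : Fin n) : ℕ) = b + L * a := by
  simp [blockEquiv]

lemma blockEquiv_div {n L : ℕ} (h : L ∣ n) (hL : 0 < L) (a : Fin (n / L)) (b : Fin L) :
    ((blockEquiv h (a, b) : Fin n) : ℕ) / L = a := by
  rw [blockEquiv_val, Nat.add_mul_div_left _ _ hL, Nat.div_eq_of_lt b.2]
  simp

lemma div_eq_div_of_dvd {a b i j : ℕ} (hab : a ∣ b) (hij : i / a = j / a) :
    i / b = j / b := by
  obtain ⟨c, rfl⟩ := hab
  rw [← Nat.div_div_eq_div_mul, ← Nat.div_div_eq_div_mul, hij]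

lemma blockEquiv_div_fine {n L a' : ℕ} (h : L ∣ n) (ha' : a' ∣ L) (ha'pos : 0 < a')
    (a : Fin (n / L)) (b : Fin L) :
    ((blockEquiv h (a, b) : Fin n) : ℕ) / a' = (b : ℕ) / a' + (L / a') * a := by
  rw [blockEquiv_val]
  obtain ⟨m, rfl⟩ := ha'
  rw [Nat.mul_div_cancel_left _ ha'pos,
    show (b:ℕ) + a' * m * a = (b:ℕ) + a' * (m * a) by ring, Nat.add_mul_div_left _ _ ha'pos]

lemma count_block {n Lk : ℕ} (hL : 0 < Lk) (hd : Lk ∣ n) (i : Fin n) :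
    (∑ j : Fin n, if (j : ℕ)/Lk = (i : ℕ)/Lk then (1:ℝ) else 0) = Lk := by
  rw [← Equiv.sum_comp (blockEquiv hd), Fintype.sum_prod_type]
  have hi : (i:ℕ)/Lk < n/Lk := Nat.div_lt_div_of_lt_of_dvd hd i.2
  calc (∑ a : Fin (n/Lk), ∑ b : Fin Lk,
        if ((blockEquiv hd (a, b) : Fin n) : ℕ)/Lk = (i : ℕ)/Lk then (1:ℝ) else 0)
      = ∑ a : Fin (n/Lk), ∑ _b : Fin Lk, if (a:ℕ) = (i : ℕ)/Lk then (1:ℝ) else 0 := by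
        refine Finset.sum_congr rfl fun a _ => Finset.sum_congr rfl fun b _ => ?_
        rw [blockEquiv_div hd hL]
    _ = ∑ a : Fin (n/Lk), (Lk : ℝ) * (if (a:ℕ) = (i : ℕ)/Lk then (1:ℝ) else 0) := by
        simp [Finset.sum_ite_eq, mul_comm]
    _ = Lk := by
        rw [← Finset.mul_sum]
        have h1 : (∑ a : Fin (n/Lk), if (a:ℕ) = (i:ℕ)/Lk then (1:ℝ) else 0) = 1 := by
          rw [Finset.sum_eq_single (⟨(i:ℕ)/Lk, hi⟩ : Fin (n/Lk))]
          · simp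
          · intro b _ hb
            rw [if_neg]
            exact fun h => hb (Fin.ext h)
          · intro h; exact absurd (Finset.mem_univ _) h
        rw [h1, mul_one]

lemma krsbA_rowsum {n K : ℕ} (F χ : ℝ) (H : ℕ → ℝ) (L : ℕ → ℕ)
    (hpos : ∀ k, 1 ≤ k → k ≤ K → 0 < L k)
    (hdvd : ∀ k, 1 ≤ k → k ≤ K → L k ∣ n) (i : Fin n) :
    ∑ j, krsbA n K F χ H L i j = n * F + krsbS K χ H L := by
  simp only [krsbA, Matrix.of_apply]
  rw [Finset.sum_add_distrib, Finset.sum_add_distrib]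
  have h1 : (∑ _j : Fin n, F) = (n : ℝ) * F := by
    simp [Finset.sum_const, mul_comm]
  have h2 : (∑ j : Fin n, if i = j then χ else 0) = χ := by
    simp [Finset.sum_ite_eq]
  have h3 : (∑ j : Fin n, ∑ k ∈ Finset.Icc 1 K,
      (if (i : ℕ) / L k = (j : ℕ) / L k then H k else 0))
      = ∑ k ∈ Finset.Icc 1 K, (L k : ℝ) * H k := by
    rw [Finset.sum_comm]
    refine Finset.sum_congr rfl fun k hk => ?_
    simp only [Finset.mem_Icc] at hk
    have : (∑ j : Fin n, if (i : ℕ) / L k = (j : ℕ) / L k then H k else 0)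
        = H k * ∑ j : Fin n, (if (j : ℕ) / L k = (i : ℕ) / L k then (1:ℝ) else 0) := by
      rw [Finset.mul_sum]
      refine Finset.sum_congr rfl fun j _ => ?_
      rw [mul_ite, mul_one, mul_zero]
      exact if_congr eq_comm rfl rfl
    rw [this, count_block (hpos k hk.1 hk.2) (hdvd k hk.1 hk.2), mul_comm]
  rw [h1, h2, h3, krsbS]
  ring

lemma krsbA_split (n K : ℕ) (F χ : ℝ) (H : ℕ → ℝ) (L : ℕ → ℕ) :
    krsbA n K F χ H L = krsbA n K 0 χ H L + Matrix.of (fun _ _ : Fin n => F) := by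
  ext i j
  simp only [krsbA, Matrix.of_apply, Matrix.add_apply]
  ring

lemma krsbA_block {n K : ℕ} (χ : ℝ) (H : ℕ → ℝ) (L : ℕ → ℕ)
    (hpos : ∀ k, 1 ≤ k → k ≤ K+1 → 0 < L k)
    (hdvdtop : ∀ k, 1 ≤ k → k ≤ K+1 → L k ∣ L (K+1))
    (hdiv : L (K+1) ∣ n) :
    (krsbA n (K+1) 0 χ H L).submatrix (blockEquiv hdiv) (blockEquiv hdiv)
      = (1 : Matrix (Fin (n / L (K+1))) (Fin (n / L (K+1))) ℝ) ⊗ₖ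
        (krsbA (L (K+1)) K (H (K+1)) χ H L) := by
  have hL'pos : 0 < L (K+1) := hpos (K+1) (by omega) le_rfl
  ext ⟨a, b⟩ ⟨c, d⟩
  simp only [Matrix.submatrix_apply, Matrix.kroneckerMap_apply, Matrix.one_apply, krsbA,
    Matrix.of_apply]
  by_cases hac : a = c
  · subst hac
    rw [if_pos rfl, one_mul]
    have hbd : (blockEquiv hdiv (a, b) = blockEquiv hdiv (a, d)) ↔ b = d := by
      rw [(blockEquiv hdiv).apply_eq_iff_eq, Prod.mk.injEq]
      simp
    have hsum : (∑ k ∈ Finset.Icc 1 (K+1),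
          (if ((blockEquiv hdiv (a,b) : Fin n) : ℕ) / L k = ((blockEquiv hdiv (a,d) : Fin n) : ℕ) / L k
           then H k else 0))
        = (∑ k ∈ Finset.Icc 1 K, (if (b : ℕ) / L k = (d : ℕ) / L k then H k else 0)) + H (K+1) := by
      rw [Finset.sum_Icc_succ_top (by omega : 1 ≤ K+1)]
      congr 1
      · refine Finset.sum_congr rfl fun k hk => ?_
        simp only [Finset.mem_Icc] at hk
        have hk1 : L k ∣ L (K+1) := hdvdtop k hk.1 (by omega)
        have hkpos : 0 < L k := hpos k hk.1 (by omega)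
        rw [blockEquiv_div_fine hdiv hk1 hkpos, blockEquiv_div_fine hdiv hk1 hkpos]
        exact if_congr (by omega) rfl rfl
      · rw [if_pos]
        rw [blockEquiv_div hdiv hL'pos, blockEquiv_div hdiv hL'pos]
    rw [hsum]
    by_cases hbd' : b = d
    · subst hbd'; rw [if_pos (hbd.mpr rfl), if_pos rfl]; ring
    · rw [if_neg (fun h => hbd' (hbd.mp h)), if_neg hbd']; ring
  · rw [if_neg hac, zero_mul]
    have hne : ∀ k, 1 ≤ k → k ≤ K+1 →
        ¬(((blockEquiv hdiv (a,b) : Fin n) : ℕ) / L k = ((blockEquiv hdiv (c,d) : Fin n) : ℕ) / L k) := by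
      intro k hk1 hk2 h
      have := div_eq_div_of_dvd (hdvdtop k hk1 hk2) h
      rw [blockEquiv_div hdiv hL'pos, blockEquiv_div hdiv hL'pos] at this
      exact hac (Fin.ext this)
    have h5 : (blockEquiv hdiv (a,b) : Fin n) ≠ blockEquiv hdiv (c,d) := by
      intro h
      exact hac (congrArg Prod.fst ((blockEquiv hdiv).injective h))
    rw [if_neg h5]
    rw [Finset.sum_eq_zero fun k hk => by
      simp only [Finset.mem_Icc] at hk
      exact if_neg (hne k hk.1 hk.2)]
    ring

lemma det_krsbA_zeroK (m : ℕ) (hm : 0 < m) (c χ : ℝ) (hχ : χ ≠ 0) (H : ℕ → ℝ) (L : ℕ → ℕ) :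
    (krsbA m 0 c χ H L).det = ((m:ℝ) * c + χ) * χ^(m-1) := by
  have h : krsbA m 0 c χ H L = χ • (1 + Matrix.of (fun _ _ : Fin m => c / χ)) := by
    ext i j
    simp only [krsbA, Matrix.of_apply, Matrix.smul_apply, Matrix.add_apply, Matrix.one_apply,
      smul_eq_mul]
    by_cases hij : i = j <;> simp [hij] <;> field_simp <;> ring
  rw [h, Matrix.det_smul, det_one_add_constJ, Fintype.card_fin]
  obtain ⟨m, rfl⟩ : ∃ m', m = m' + 1 := ⟨m - 1, by omega⟩
  simp only [Nat.add_sub_cancel]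
  field_simp
  ring

/-- step: reduce the determinant to the determinant of one diagonal block. -/
lemma det_krsbA_step {n K : ℕ} (hn : 0 < n) (hK : 1 ≤ K) (F χ : ℝ) (H : ℕ → ℝ) (L : ℕ → ℕ)
    (hdvdtop : ∀ k, 1 ≤ k → k ≤ K → L k ∣ L K) (hdiv : L K ∣ n)
    (hS : krsbS K χ H L ≠ 0)
    (hd' : (krsbA (L K) (K-1) (H K) χ H L).det ≠ 0) :
    (krsbA n K F χ H L).det =
      ((n:ℝ) * F + krsbS K χ H L) / krsbS K χ H L *
        (krsbA (L K) (K-1) (H K) χ H L).det ^ (n / L K) := by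
  obtain ⟨K', rfl⟩ : ∃ K', K = K' + 1 := ⟨K - 1, by omega⟩
  have hLKpos : 0 < L (K'+1) := Nat.pos_of_dvd_of_pos hdiv hn
  have hpos : ∀ k, 1 ≤ k → k ≤ K'+1 → 0 < L k := fun k h1 h2 =>
    Nat.pos_of_dvd_of_pos (hdvdtop k h1 h2) hLKpos
  -- determinant of the constant-free part
  have hMdet : (krsbA n (K'+1) 0 χ H L).det
      = (krsbA (L (K'+1)) K' (H (K'+1)) χ H L).det ^ (n / L (K'+1)) := by
    rw [← Matrix.det_submatrix_equiv_self (blockEquiv hdiv) (krsbA n (K'+1) 0 χ H L),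
      krsbA_block χ H L hpos hdvdtop hdiv, Matrix.det_kronecker, Matrix.det_one, one_pow,
      Fintype.card_fin, one_mul]
  have hMdet_ne : (krsbA n (K'+1) 0 χ H L).det ≠ 0 := by
    rw [hMdet]
    exact pow_ne_zero _ (by simpa using hd')
  have hrow : ∀ i, ∑ j, (krsbA n (K'+1) 0 χ H L) i j = krsbS (K'+1) χ H L := by
    intro i
    have := krsbA_rowsum 0 χ H L hpos (fun k h1 h2 => (hdvdtop k h1 h2).trans hdiv) i
    simpa using this
  rw [krsbA_split, det_add_constJ _ hS hMdet_ne hrow, hMdet]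
  have hq : (1 : ℝ) + n * F / krsbS (K'+1) χ H L
      = ((n:ℝ) * F + krsbS (K'+1) χ H L) / krsbS (K'+1) χ H L := by
    field_simp
    ring
  rw [hq]
  simp only [Nat.add_sub_cancel]
  ring

lemma div_mul_div_nat {a b n : ℕ} (hab : a ∣ b) (hbn : b ∣ n) : b / a * (n / b) = n / a := by
  obtain ⟨c, rfl⟩ := hbn
  obtain ⟨m, rfl⟩ := hab
  rcases Nat.eq_zero_or_pos a with ha | ha
  · subst ha; simp
  rcases Nat.eq_zero_or_pos m with hm0 | hm0
  · subst hm0; simp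
  rw [Nat.mul_div_cancel_left _ ha, Nat.mul_div_cancel_left _ (Nat.mul_pos ha hm0),
    show a * m * c = a * (m * c) by ring, Nat.mul_div_cancel_left _ ha]

lemma chain_dvd {L : ℕ → ℕ} {K : ℕ} (hchain : ∀ k, 1 ≤ k → k < K → L k ∣ L (k+1)) :
    ∀ k m, 1 ≤ k → k ≤ m → m ≤ K → L k ∣ L m := by
  intro k m hk hkm hmK
  induction m, hkm using Nat.le_induction with
  | base => exact dvd_rfl
  | succ m hm ih2 => exact (ih2 (by omega)).trans (hchain m (by omega) (by omega))

/-- the main formula, under genericity hypotheses. -/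
lemma krsbA_det_generic (K : ℕ) (hK : 1 ≤ K) :
    ∀ (n : ℕ), 0 < n → ∀ (F χ : ℝ) (H : ℕ → ℝ) (L : ℕ → ℕ),
    (∀ k, 1 ≤ k → k < K → L k ∣ L (k+1)) → L K ∣ n → χ ≠ 0 →
    (∀ k, 1 ≤ k → k ≤ K → krsbS k χ H L ≠ 0) →
    (krsbA n K F χ H L).det =
      ((n:ℝ) * F + krsbS K χ H L) * χ ^ (n - n / L 1) *
        (∏ k ∈ Finset.Icc 1 (K-1), krsbS k χ H L ^ (n / L k - n / L (k+1))) *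
        krsbS K χ H L ^ (n / L K - 1) := by
  induction K, hK using Nat.le_induction with
  | base =>
    intro n hn F χ H L hchain hdiv hχ hSne
    have hL1pos : 0 < L 1 := Nat.pos_of_dvd_of_pos hdiv hn
    have hS1 : krsbS 1 χ H L ≠ 0 := hSne 1 le_rfl le_rfl
    have hd'eq : (krsbA (L 1) 0 (H 1) χ H L).det = krsbS 1 χ H L * χ^(L 1 - 1) := by
      rw [det_krsbA_zeroK (L 1) hL1pos (H 1) χ hχ H L, krsbS_one]
      ring
    have hd' : (krsbA (L 1) (1-1) (H 1) χ H L).det ≠ 0 := by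
      simp only [show (1:ℕ)-1 = 0 from rfl, hd'eq]
      exact mul_ne_zero hS1 (pow_ne_zero _ hχ)
    rw [det_krsbA_step hn le_rfl F χ H L
      (fun k h1 h2 => by have hk1 : k = 1 := (by omega); subst hk1; exact dvd_rfl) hdiv hS1 hd']
    rw [show (1:ℕ)-1 = 0 from rfl, hd'eq]
    set p := n / L 1 with hp
    have hp1 : 1 ≤ p := Nat.div_pos (Nat.le_of_dvd hn hdiv) hL1pos
    have hE : (L 1 - 1) * p = n - p := by
      rw [Nat.sub_mul, one_mul, Nat.mul_div_cancel' hdiv]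
    rw [mul_pow, ← pow_mul, hE, Finset.Icc_eq_empty (by omega), Finset.prod_empty]
    have hpow : krsbS 1 χ H L ^ p = krsbS 1 χ H L ^ (p-1) * krsbS 1 χ H L := by
      rw [← pow_succ]
      congr 1
      omega
    rw [hpow]
    field_simp
  | succ K₀ hK ih =>
    intro n hn F χ H L hchain hdiv hχ hSne
    obtain ⟨J, rfl⟩ : ∃ t, K₀ = t + 1 := ⟨K₀-1, by omega⟩
    have hdvdtop : ∀ k, 1 ≤ k → k ≤ (J+1)+1 → L k ∣ L ((J+1)+1) := fun k h1 h2 =>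
      chain_dvd hchain k ((J+1)+1) h1 h2 le_rfl
    have hL'pos : 0 < L ((J+1)+1) := Nat.pos_of_dvd_of_pos hdiv hn
    have hSK1 : krsbS ((J+1)+1) χ H L ≠ 0 := hSne ((J+1)+1) (by omega) le_rfl
    have hSK : krsbS (J+1) χ H L ≠ 0 := hSne (J+1) (by omega) (by omega)
    have hd'eq := ih (L ((J+1)+1)) hL'pos (H ((J+1)+1)) χ H L
      (fun k h1 h2 => hchain k h1 (by omega)) (hchain (J+1) (by omega) (by omega)) hχ
      (fun k h1 h2 => hSne k h1 (by omega))
    have hfactor : (L ((J+1)+1) : ℝ) * (H ((J+1)+1)) + krsbS (J+1) χ H L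
        = krsbS ((J+1)+1) χ H L := by
      rw [krsbS_succ (J+1) χ H L]
      ring
    rw [hfactor] at hd'eq
    have hprod_ne : (∏ k ∈ Finset.Icc 1 ((J+1)-1),
        krsbS k χ H L ^ (L ((J+1)+1) / L k - L ((J+1)+1) / L (k+1))) ≠ 0 := by
      apply Finset.prod_ne_zero_iff.mpr
      intro k hk
      simp only [Finset.mem_Icc] at hk
      exact pow_ne_zero _ (hSne k hk.1 (by omega))
    have hd'ne : (krsbA (L ((J+1)+1)) (J+1) (H ((J+1)+1)) χ H L).det ≠ 0 := by
      rw [hd'eq]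
      exact mul_ne_zero (mul_ne_zero (mul_ne_zero hSK1 (pow_ne_zero _ hχ)) hprod_ne)
        (pow_ne_zero _ hSK)
    rw [det_krsbA_step hn (by omega) F χ H L hdvdtop hdiv hSK1
      (by simpa only [Nat.add_sub_cancel] using hd'ne)]
    simp only [Nat.add_sub_cancel]
    rw [hd'eq]
    set m := n / L ((J+1)+1) with hm
    have hm1 : 1 ≤ m := Nat.div_pos (Nat.le_of_dvd hn hdiv) hL'pos
    have e2 : ∀ k, 1 ≤ k → k ≤ (J+1)+1 → L ((J+1)+1) / L k * m = n / L k := fun k h1 h2 =>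
      div_mul_div_nat (hdvdtop k h1 h2) hdiv
    have e4 : L ((J+1)+1) * m = n := Nat.mul_div_cancel' hdiv
    have hdpow : (krsbS ((J+1)+1) χ H L * χ ^ (L ((J+1)+1) - L ((J+1)+1) / L 1) *
        (∏ k ∈ Finset.Icc 1 ((J+1)-1),
          krsbS k χ H L ^ (L ((J+1)+1) / L k - L ((J+1)+1) / L (k+1))) *
        krsbS (J+1) χ H L ^ (L ((J+1)+1) / L (J+1) - 1)) ^ m
      = krsbS ((J+1)+1) χ H L ^ m * χ ^ (n - n / L 1) *
        (∏ k ∈ Finset.Icc 1 ((J+1)-1), krsbS k χ H L ^ (n / L k - n / L (k+1))) *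
        krsbS (J+1) χ H L ^ (n / L (J+1) - m) := by
      rw [mul_pow, mul_pow, mul_pow, ← pow_mul, ← pow_mul, ← Finset.prod_pow]
      congr 2
      · congr 2
        rw [Nat.sub_mul, e4, e2 1 le_rfl (by omega)]
      · refine Finset.prod_congr rfl fun k hk => ?_
        simp only [Finset.mem_Icc] at hk
        rw [← pow_mul, Nat.sub_mul, e2 k hk.1 (by omega), e2 (k+1) (by omega) (by omega)]
      · rw [Nat.sub_mul, one_mul, e2 (J+1) (by omega) (by omega)]
    rw [hdpow]
    have hSm : krsbS ((J+1)+1) χ H L ^ m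
        = krsbS ((J+1)+1) χ H L ^ (m-1) * krsbS ((J+1)+1) χ H L := by
      rw [← pow_succ]
      congr 1
      omega
    have hprodK : (∏ k ∈ Finset.Icc 1 (J+1), krsbS k χ H L ^ (n / L k - n / L (k+1)))
        = (∏ k ∈ Finset.Icc 1 J, krsbS k χ H L ^ (n / L k - n / L (k+1))) *
          krsbS (J+1) χ H L ^ (n / L (J+1) - n / L ((J+1)+1)) := by
      rw [Finset.prod_Icc_succ_top (by omega : 1 ≤ J+1)]
    rw [show (J+1) - 1 = J from rfl] at *
    rw [hprodK, hSm, ← hm]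
    field_simp

/-- the determinant of the KRSB matrix is
`(τF + S_K) · χ^{τ − τ/L̃_1} · (Π_{k=1}^{K−1} S_k^{τ/L̃_k − τ/L̃_{k+1}}) · S_K^{τ/L̃_K − 1}`. -/
theorem krsbA_det (τ K : ℕ) (hτ : 0 < τ) (hK : 0 < K)
    (F χ : ℝ) (H : ℕ → ℝ) (L : ℕ → ℕ)
    (hLpos : ∀ k, 1 ≤ k → k ≤ K → 0 < L k)
    (hchain : ∀ k, 1 ≤ k → k < K → L k ∣ L (k + 1))
    (hdiv : L K ∣ τ) :
    (krsbA τ K F χ H L).det =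
      ((τ : ℝ) * F + krsbS K χ H L) * χ ^ (τ - τ / L 1) *
        (∏ k ∈ Finset.Icc 1 (K - 1), krsbS k χ H L ^ (τ / L k - τ / L (k + 1))) *
        krsbS K χ H L ^ (τ / L K - 1) := by
  set f : ℝ → ℝ := fun t => (krsbA τ K F χ H L + t • (1 : Matrix (Fin τ) (Fin τ) ℝ)).det with hf
  set g : ℝ → ℝ := fun t =>
    ((τ:ℝ)*F + (krsbS K χ H L + t)) * (χ + t)^(τ - τ/L 1) *
    (∏ k ∈ Finset.Icc 1 (K-1), (krsbS k χ H L + t)^(τ/L k - τ/L (k+1))) *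
    (krsbS K χ H L + t)^(τ/L K - 1) with hg
  have hfc : Continuous f := by
    apply Continuous.matrix_det
    exact continuous_const.add (continuous_id.smul continuous_const)
  have hgc : Continuous g := by
    apply Continuous.mul
    apply Continuous.mul
    apply Continuous.mul
    · fun_prop
    · fun_prop
    · apply continuous_finset_prod
      intro k _
      fun_prop
    · fun_prop
  set B : Finset ℝ := insert (-χ) ((Finset.Icc 1 K).image fun k => -krsbS k χ H L) with hB
  have hdense : Dense ((B : Set ℝ))ᶜ := (B.finite_toSet.countable).dense_compl ℝ
  have heq : Set.EqOn f g ((B : Set ℝ))ᶜ := by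
    intro t ht
    simp only [Set.mem_compl_iff, Finset.mem_coe] at ht
    have hχt : χ + t ≠ 0 := by
      intro h
      apply ht
      simp only [hB, Finset.mem_insert]
      left
      linarith
    have hSt : ∀ k, 1 ≤ k → k ≤ K → krsbS k (χ + t) H L ≠ 0 := by
      intro k h1 h2 h
      rw [krsbS_shift] at h
      apply ht
      simp only [hB, Finset.mem_insert, Finset.mem_image]
      right
      exact ⟨k, Finset.mem_Icc.mpr ⟨h1, h2⟩, by linarith⟩
    have hmain := krsbA_det_generic K hK τ hτ F (χ + t) H L hchain hdiv hχt hSt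
    rw [krsbA_shift] at hmain
    simp only [krsbS_shift] at hmain
    simp only [hf, hg]
    exact hmain
  have hfg : f = g := Continuous.ext_on hdense hfc hgc heq
  have h0 := congrFun hfg 0
  simp only [hf, hg, zero_smul, add_zero] at h0
  exact h0
end

section
/- The determinant of the bordered KRSB matrix satisfies det 𝒬(C, D, F, χ, {H_k}) = (C·(τF + S_K) − τ·D²) · χ^{τ − τ/L̃_1} · (Π_{k=1}^{K−1} S_k^{τ/L̃_k − τ/L̃_{k+1}}) · S_K^{τ/L̃_K − 1}. -/
open Matrix Finset

namespace KRSBaux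



lemma div_char {Lk q r : ℕ} (hL : 0 < Lk) :
    r / Lk = q ↔ Lk * q ≤ r ∧ r < Lk * q + Lk := by
  constructor
  · rintro rfl
    have h1 := Nat.div_add_mod r Lk
    have h2 := Nat.mod_lt r hL
    omega
  · rintro ⟨h1, h2⟩
    have : r = Lk * q + (r - Lk * q) := by omega
    rw [this, Nat.mul_add_div hL, Nat.div_eq_of_lt (by omega)]
    omega

lemma count_block {Lk τ : ℕ} (hL : 0 < Lk) (hd : Lk ∣ τ) {u : ℕ} (hu : u < τ) (s : ℕ) :
    ((Finset.Ico s τ).filter (fun r => r / Lk = u / Lk)).card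
      = (Lk * (u / Lk) + Lk) - max s (Lk * (u / Lk)) := by
  set a := Lk * (u / Lk) with ha
  have hau : a ≤ u ∧ u < a + Lk := by
    have := (div_char hL (q := u / Lk) (r := u)).mp rfl
    omega
  have ha3 : a + Lk ≤ τ := by
    obtain ⟨q, rfl⟩ := hd
    have hq : u / Lk < q := (Nat.div_lt_iff_lt_mul hL).mpr (by rw [Nat.mul_comm]; exact hu)
    calc a + Lk = Lk * (u / Lk + 1) := by ring
    _ ≤ Lk * q := Nat.mul_le_mul_left _ (by omega)
  have : (Finset.Ico s τ).filter (fun r => r / Lk = u / Lk)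
      = Finset.Ico (max s a) (a + Lk) := by
    ext r
    simp only [Finset.mem_filter, Finset.mem_Ico, div_char hL, ← ha]
    omega
  rw [this, Nat.card_Ico]

lemma div_pred_of_not_dvd {Lk t : ℕ} (hL : 0 < Lk) (h : ¬ Lk ∣ t) :
    (t - 1) / Lk = t / Lk := by
  have ht : t % Lk ≠ 0 := fun hc => h (Nat.dvd_of_mod_eq_zero hc)
  have h1 := Nat.div_add_mod t Lk
  have h2 := Nat.mod_lt t hL
  rw [div_char hL]
  omega

lemma mul_div_pred_of_dvd {Lk t : ℕ} (hL : 0 < Lk) (h : Lk ∣ t) (ht : 1 ≤ t) :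
    Lk * ((t - 1) / Lk) = t - Lk := by
  obtain ⟨m, rfl⟩ := h
  have hm : m ≠ 0 := by rintro rfl; simp at ht
  have key : Lk * m = Lk * (m - 1) + Lk := by
    conv_lhs => rw [show m = (m - 1) + 1 by omega]
    rw [Nat.mul_add, Nat.mul_one]
  rw [show Lk * m - 1 = Lk * (m - 1) + (Lk - 1) from by omega,
    Nat.mul_add_div hL, Nat.div_eq_of_lt (by omega), Nat.add_zero]
  omega



def aent (K : ℕ) (F χ : ℝ) (H : ℕ → ℝ) (L : ℕ → ℕ) (r t : ℕ) : ℝ :=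
  F + (if r = t then χ else 0) +
    ∑ k ∈ Finset.Icc 1 K, (if r / L k = t / L k then H k else 0)

def lev (K : ℕ) (L : ℕ → ℕ) (t : ℕ) : ℕ := Nat.findGreatest (fun k => L k ∣ t) K

def gf (τ K : ℕ) (F χ : ℝ) (H : ℕ → ℝ) (L : ℕ → ℕ) (t s : ℕ) : ℝ :=
  ∑ r ∈ Finset.Ico s τ, (aent K F χ H L r t - aent K F χ H L r (t - 1))

section

variable {τ K : ℕ} {F χ : ℝ} {H : ℕ → ℝ} {L : ℕ → ℕ}

lemma chain' (hchain : ∀ k, 1 ≤ k → k < K → L k ∣ L (k + 1)) :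
    ∀ j k, 1 ≤ j → j ≤ k → k ≤ K → L j ∣ L k := by
  intro j k hj hjk hk
  induction k with
  | zero => omega
  | succ n ih =>
    rcases Nat.eq_or_lt_of_le hjk with h | h
    · exact h ▸ dvd_rfl
    · exact (ih (by omega) (by omega)).trans (hchain n (by omega) (by omega))

lemma lev_le (t : ℕ) : lev K L t ≤ K := Nat.findGreatest_le K

lemma le_lev {k t : ℕ} (hk : k ≤ K) (hd : L k ∣ t) : k ≤ lev K L t :=
  Nat.le_findGreatest hk hd

lemma lev_dvd (hchain : ∀ k, 1 ≤ k → k < K → L k ∣ L (k + 1))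
    {k t : ℕ} (h1 : 1 ≤ k) (hl : k ≤ lev K L t) : L k ∣ t := by
  have h0 : lev K L t ≠ 0 := by omega
  have hsp : L (lev K L t) ∣ t :=
    Nat.findGreatest_of_ne_zero (P := fun k => L k ∣ t) (n := K) rfl h0
  exact (chain' hchain k (lev K L t) h1 hl (lev_le t)).trans hsp

lemma dvd_tau (hchain : ∀ k, 1 ≤ k → k < K → L k ∣ L (k + 1)) (hdiv : L K ∣ τ)
    {k : ℕ} (h1 : 1 ≤ k) (hk : k ≤ K) : L k ∣ τ :=
  (chain' hchain k K h1 hk le_rfl).trans hdiv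

lemma gf_eq (t s : ℕ) : gf τ K F χ H L t s =
    ((if t ∈ Finset.Ico s τ then χ else 0) - (if t - 1 ∈ Finset.Ico s τ then χ else 0))
    + ∑ k ∈ Finset.Icc 1 K, H k *
        ((((Finset.Ico s τ).filter (fun r => r / L k = t / L k)).card : ℝ)
          - (((Finset.Ico s τ).filter (fun r => r / L k = (t - 1) / L k)).card : ℝ)) := by
  have expand : ∀ u : ℕ,
      (∑ r ∈ Finset.Ico s τ, (F + (if r = u then χ else 0) +
        ∑ k ∈ Finset.Icc 1 K, (if r / L k = u / L k then H k else 0)))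
      = (Finset.Ico s τ).card * F + (if u ∈ Finset.Ico s τ then χ else 0)
        + ∑ k ∈ Finset.Icc 1 K,
            (H k * (((Finset.Ico s τ).filter (fun r => r / L k = u / L k)).card : ℝ)) := by
    intro u
    rw [Finset.sum_add_distrib, Finset.sum_add_distrib, Finset.sum_const,
      Finset.sum_ite_eq' (Finset.Ico s τ) u (fun _ => χ), Finset.sum_comm]
    congr 1
    · congr 1
      simp [nsmul_eq_mul]
    · refine Finset.sum_congr rfl fun k _ => ?_
      rw [← Finset.sum_filter, Finset.sum_const, nsmul_eq_mul, mul_comm]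
  unfold gf aent
  rw [Finset.sum_sub_distrib, expand t, expand (t - 1)]
  have hms : ∑ k ∈ Finset.Icc 1 K, H k *
        ((((Finset.Ico s τ).filter (fun r => r / L k = t / L k)).card : ℝ)
          - (((Finset.Ico s τ).filter (fun r => r / L k = (t - 1) / L k)).card : ℝ))
      = (∑ k ∈ Finset.Icc 1 K,
          H k * (((Finset.Ico s τ).filter (fun r => r / L k = t / L k)).card : ℝ))
        - ∑ k ∈ Finset.Icc 1 K,
          H k * (((Finset.Ico s τ).filter (fun r => r / L k = (t - 1) / L k)).card : ℝ) := by
    rw [← Finset.sum_sub_distrib]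
    exact Finset.sum_congr rfl fun k _ => mul_sub _ _ _
  rw [hms]
  ring

lemma cnt_eq_of_not_dvd {Lk t : ℕ} (hL : 0 < Lk) (hnd : ¬ Lk ∣ t) (s : ℕ) :
    ((Finset.Ico s τ).filter (fun r => r / Lk = t / Lk)).card
      = ((Finset.Ico s τ).filter (fun r => r / Lk = (t - 1) / Lk)).card := by
  rw [div_pred_of_not_dvd hL hnd]

lemma cnt_eq_of_ne {Lk s t : ℕ} (hL : 0 < Lk) (hd : Lk ∣ τ) (hs : Lk ∣ s) (ht : Lk ∣ t)
    (hne : s ≠ t) (h1t : 1 ≤ t) (htτ : t < τ) :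
    ((Finset.Ico s τ).filter (fun r => r / Lk = t / Lk)).card
      = ((Finset.Ico s τ).filter (fun r => r / Lk = (t - 1) / Lk)).card := by
  rw [count_block hL hd htτ s, count_block hL hd (show t - 1 < τ by omega) s,
    Nat.mul_div_cancel' ht, mul_div_pred_of_dvd hL ht h1t]
  have hLt : Lk ≤ t := Nat.le_of_dvd (by omega) ht
  rcases lt_or_gt_of_ne hne with h | h
  · have h2 : Lk ∣ t - s := Nat.dvd_sub ht hs
    have h3 : Lk ≤ t - s := Nat.le_of_dvd (by omega) h2
    omega
  · have h2 : Lk ∣ s - t := Nat.dvd_sub hs ht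
    have h3 : Lk ≤ s - t := Nat.le_of_dvd (by omega) h2
    omega

lemma G0 (hchain : ∀ k, 1 ≤ k → k < K → L k ∣ L (k + 1)) (hdiv : L K ∣ τ)
    (hLpos : ∀ k, 1 ≤ k → k ≤ K → 0 < L k)
    {t : ℕ} (h1t : 1 ≤ t) (ht : t < τ) : gf τ K F χ H L t 0 = 0 := by
  rw [gf_eq]
  have h1 : t ∈ Finset.Ico 0 τ := by simp [Finset.mem_Ico]; omega
  have h2 : t - 1 ∈ Finset.Ico 0 τ := by simp [Finset.mem_Ico]; omega
  rw [if_pos h1, if_pos h2, sub_self, zero_add]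
  refine Finset.sum_eq_zero fun k hk => ?_
  simp only [Finset.mem_Icc] at hk
  have hL : 0 < L k := hLpos k hk.1 hk.2
  by_cases hdvd : L k ∣ t
  · rw [count_block hL (dvd_tau hchain hdiv hk.1 hk.2) ht 0,
      count_block hL (dvd_tau hchain hdiv hk.1 hk.2) (show t - 1 < τ by omega) 0]
    have e1 : (L k * (t / L k) + L k) - max 0 (L k * (t / L k)) = L k := by omega
    have e2 : (L k * ((t-1) / L k) + L k) - max 0 (L k * ((t-1) / L k)) = L k := by omega
    rw [e1, e2, sub_self, mul_zero]
  · rw [cnt_eq_of_not_dvd hL hdvd, sub_self, mul_zero]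

lemma G1 (hchain : ∀ k, 1 ≤ k → k < K → L k ∣ L (k + 1)) (hdiv : L K ∣ τ)
    (hLpos : ∀ k, 1 ≤ k → k ≤ K → 0 < L k)
    {t : ℕ} (h1t : 1 ≤ t) (ht : t < τ) :
    gf τ K F χ H L t t = krsbS (lev K L t) χ H L := by
  rw [gf_eq]
  have h1 : t ∈ Finset.Ico t τ := by simp [Finset.mem_Ico]; omega
  have h2 : t - 1 ∉ Finset.Ico t τ := by simp [Finset.mem_Ico]; omega
  rw [if_pos h1, if_neg h2, sub_zero]
  have hsum : ∑ k ∈ Finset.Icc 1 K, H k *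
        ((((Finset.Ico t τ).filter (fun r => r / L k = t / L k)).card : ℝ)
          - (((Finset.Ico t τ).filter (fun r => r / L k = (t - 1) / L k)).card : ℝ))
      = ∑ k ∈ Finset.Icc 1 K, (if k ≤ lev K L t then (L k : ℝ) * H k else 0) := by
    refine Finset.sum_congr rfl fun k hk => ?_
    simp only [Finset.mem_Icc] at hk
    have hL : 0 < L k := hLpos k hk.1 hk.2
    by_cases hdvd : L k ∣ t
    · rw [if_pos (le_lev hk.2 hdvd)]
      rw [count_block hL (dvd_tau hchain hdiv hk.1 hk.2) ht t,
        count_block hL (dvd_tau hchain hdiv hk.1 hk.2) (show t - 1 < τ by omega) t,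
        Nat.mul_div_cancel' hdvd, mul_div_pred_of_dvd hL hdvd h1t]
      have hLt : L k ≤ t := Nat.le_of_dvd (by omega) hdvd
      have e1 : (t + L k) - max t t = L k := by omega
      have e2 : (t - L k + L k) - max t (t - L k) = 0 := by omega
      rw [e1, e2]
      push_cast
      ring
    · rw [cnt_eq_of_not_dvd hL hdvd, sub_self, mul_zero, if_neg]
      intro hle
      exact hdvd (lev_dvd hchain hk.1 hle)
  rw [hsum, ← Finset.sum_subset
      (Finset.Icc_subset_Icc_right (lev_le (K := K) (L := L) t))
      (fun x hx hnx => by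
        rw [if_neg]
        simp only [Finset.mem_Icc] at hx hnx
        omega)]
  rw [Finset.sum_congr rfl (fun k hk => if_pos (Finset.mem_Icc.mp hk).2)]
  rw [krsbS]

lemma G2 (hchain : ∀ k, 1 ≤ k → k < K → L k ∣ L (k + 1)) (hdiv : L K ∣ τ)
    (hLpos : ∀ k, 1 ≤ k → k ≤ K → 0 < L k)
    {s t : ℕ} (h1s : 1 ≤ s) (hs : s < τ) (h1t : 1 ≤ t) (ht : t < τ)
    (hne : s ≠ t) (hlev : lev K L t ≤ lev K L s) :
    gf τ K F χ H L t s = 0 := by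
  rw [gf_eq]
  have hiff : (t ∈ Finset.Ico s τ) ↔ (t - 1 ∈ Finset.Ico s τ) := by
    simp only [Finset.mem_Ico]
    omega
  rw [if_congr hiff rfl rfl, sub_self, zero_add]
  refine Finset.sum_eq_zero fun k hk => ?_
  simp only [Finset.mem_Icc] at hk
  have hL : 0 < L k := hLpos k hk.1 hk.2
  by_cases hdvd : L k ∣ t
  · have hklev : k ≤ lev K L t := le_lev hk.2 hdvd
    have hdvds : L k ∣ s := lev_dvd hchain hk.1 (le_trans hklev hlev)
    rw [cnt_eq_of_ne hL (dvd_tau hchain hdiv hk.1 hk.2) hdvds hdvd hne h1t ht,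
      sub_self, mul_zero]
  · rw [cnt_eq_of_not_dvd hL hdvd, sub_self, mul_zero]

lemma asum (hchain : ∀ k, 1 ≤ k → k < K → L k ∣ L (k + 1)) (hdiv : L K ∣ τ)
    (hLpos : ∀ k, 1 ≤ k → k ≤ K → 0 < L k)
    {u : ℕ} (hu : u < τ) :
    ∑ r ∈ Finset.range τ, aent K F χ H L r u = τ * F + krsbS K χ H L := by
  unfold aent
  rw [Finset.sum_add_distrib, Finset.sum_add_distrib, Finset.sum_const, Finset.card_range,
    Finset.sum_ite_eq' (Finset.range τ) u (fun _ => χ), if_pos (Finset.mem_range.mpr hu),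
    Finset.sum_comm]
  have hs : ∀ k ∈ Finset.Icc 1 K,
      (∑ r ∈ Finset.range τ, if r / L k = u / L k then H k else 0) = (L k : ℝ) * H k := by
    intro k hk
    simp only [Finset.mem_Icc] at hk
    have hL : 0 < L k := hLpos k hk.1 hk.2
    rw [← Finset.sum_filter, Finset.sum_const, nsmul_eq_mul, Finset.range_eq_Ico,
      count_block hL (dvd_tau hchain hdiv hk.1 hk.2) hu 0]
    have : (L k * (u / L k) + L k) - max 0 (L k * (u / L k)) = L k := by omega
    rw [this]
  rw [Finset.sum_congr rfl hs, krsbS, nsmul_eq_mul]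
  ring

noncomputable def Pf (i j : ℕ) : ℝ :=
  if j = 0 then (if i = 0 then 1 else 0)
  else if j = 1 then (if i = 0 then 0 else 1)
  else if i = j then 1 else if i + 1 = j then -1 else 0

noncomputable def Pinvf (τ i j : ℕ) : ℝ :=
  if i = 0 then (if j = 0 then 1 else 0)
  else if j = 0 then 0
  else if i = 1 then 1 / τ
  else (if i ≤ j then 1 else 0) - ((τ + 1 - i : ℕ) : ℝ) / τ

noncomputable def Qf (K : ℕ) (C D F χ : ℝ) (H : ℕ → ℝ) (L : ℕ → ℕ) (i j : ℕ) : ℝ :=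
  if i = 0 then (if j = 0 then C else D)
  else if j = 0 then D
  else aent K F χ H L (i - 1) (j - 1)

noncomputable def Tf (τ K : ℕ) (C D F χ : ℝ) (H : ℕ → ℝ) (L : ℕ → ℕ) (i j : ℕ) : ℝ :=
  if j = 0 then (if i = 0 then C else if i = 1 then D else 0)
  else if j = 1 then (if i = 0 then (τ : ℝ) * D else if i = 1 then (τ : ℝ) * F + krsbS K χ H L else 0)
  else if i = 0 then 0 else gf τ K F χ H L (j - 1) (i - 1)

noncomputable def Pm (τ : ℕ) : Matrix (Fin (τ + 1)) (Fin (τ + 1)) ℝ := Matrix.of fun i j => Pf i j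

noncomputable def Pim (τ : ℕ) : Matrix (Fin (τ + 1)) (Fin (τ + 1)) ℝ := Matrix.of fun i j => Pinvf τ i j

noncomputable def Tm (τ K : ℕ) (C D F χ : ℝ) (H : ℕ → ℝ) (L : ℕ → ℕ) :
    Matrix (Fin (τ + 1)) (Fin (τ + 1)) ℝ := Matrix.of fun i j => Tf τ K C D F χ H L i j

section
variable {τ K : ℕ} {C D F χ : ℝ} {H : ℕ → ℝ} {L : ℕ → ℕ}

lemma gf_succ {t s : ℕ} (hs : s < τ) : gf τ K F χ H L t s
    = (aent K F χ H L s t - aent K F χ H L s (t - 1)) + gf τ K F χ H L t (s + 1) := by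
  unfold gf
  rw [Finset.sum_eq_sum_Ico_succ_bot hs]

lemma gf_top (t : ℕ) : gf τ K F χ H L t τ = 0 := by
  unfold gf
  rw [Finset.Ico_self, Finset.sum_empty]

lemma aent_comm (r u : ℕ) : aent K F χ H L r u = aent K F χ H L u r := by
  unfold aent
  congr 1
  · congr 1
    exact if_congr eq_comm rfl rfl
  · exact Finset.sum_congr rfl fun k _ => if_congr eq_comm rfl rfl

lemma krsbQ_apply (i j : Fin (τ + 1)) :
    krsbQ τ K C D F χ H L i j = Qf K C D F χ H L (i : ℕ) (j : ℕ) := by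
  unfold krsbQ Qf krsbA aent
  by_cases hi : (i : ℕ) = 0
  · have hi' : i = 0 := by simpa using hi
    simp [hi, hi']
  · have hi' : ¬ i = 0 := by simpa using hi
    by_cases hj : (j : ℕ) = 0
    · have hj' : j = 0 := by simpa using hj
      simp [hi, hj, hi', hj']
    · have hj' : ¬ j = 0 := by simpa using hj
      simp [hi, hj, hi', hj', Fin.mk.injEq]

lemma Pim_mul_Pm (hτ : 0 < τ) : Pim τ * Pm τ = 1 := by
  have hτR : (τ : ℝ) ≠ 0 := Nat.cast_ne_zero.mpr (by omega)
  ext i j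
  have hform : (Pim τ * Pm τ) i j
      = ∑ k ∈ Finset.range (τ + 1), Pinvf τ (i : ℕ) k * Pf k (j : ℕ) := by
    rw [Matrix.mul_apply, ← Fin.sum_univ_eq_sum_range
      (fun k => Pinvf τ (i : ℕ) k * Pf k (j : ℕ)) (τ + 1)]
    rfl
  rw [hform, Matrix.one_apply]
  have hij : (i = j) ↔ ((i : ℕ) = (j : ℕ)) := Fin.ext_iff
  have hjlt : (j : ℕ) < τ + 1 := j.isLt
  have hilt : (i : ℕ) < τ + 1 := i.isLt
  rcases Nat.lt_or_ge (j : ℕ) 2 with hj2 | hj2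
  · rcases Nat.lt_or_ge (j : ℕ) 1 with hj0 | hj1
    · -- case j = 0
      have hj : (j : ℕ) = 0 := by omega
      have hc : ∀ k ∈ Finset.range (τ + 1), Pinvf τ (i : ℕ) k * Pf k (j : ℕ)
          = if k = 0 then Pinvf τ (i : ℕ) k else 0 := by
        intro k _
        unfold Pf
        rw [hj, if_pos rfl]
        split_ifs <;> first | ring1 | (exfalso; first | assumption | omega)
      rw [Finset.sum_congr rfl hc,
        Finset.sum_ite_eq' (Finset.range (τ + 1)) 0 (Pinvf τ (i : ℕ)),
        if_pos (Finset.mem_range.mpr (by omega))]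
      unfold Pinvf
      by_cases hi : (i : ℕ) = 0
      · rw [if_pos hi, if_pos rfl, if_pos (hij.mpr (by omega))]
      · rw [if_neg hi, if_pos rfl, if_neg (show ¬ i = j from fun h => by rw [hij] at h; omega)]
    · -- case j = 1
      have hj : (j : ℕ) = 1 := by omega
      have hc : ∀ k ∈ Finset.range (τ + 1), Pinvf τ (i : ℕ) k * Pf k (j : ℕ)
          = if k = 0 then 0 else Pinvf τ (i : ℕ) k := by
        intro k _
        unfold Pf
        rw [hj]
        split_ifs <;> first | ring1 | (exfalso; first | assumption | omega)
      rw [Finset.sum_congr rfl hc, Finset.range_eq_Ico,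
        Finset.sum_eq_sum_Ico_succ_bot (by omega : 0 < τ + 1), if_pos rfl, zero_add,
        Finset.sum_congr rfl (fun k hk => if_neg (by simp only [Finset.mem_Ico] at hk; omega))]
      by_cases hi0 : (i : ℕ) = 0
      · rw [Finset.sum_eq_zero (fun k hk => by
          simp only [Finset.mem_Ico] at hk
          unfold Pinvf
          rw [if_pos hi0, if_neg (by omega)]),
          if_neg (show ¬ i = j from fun h => by rw [hij] at h; omega)]
      · by_cases hi1 : (i : ℕ) = 1
        · rw [Finset.sum_congr rfl (fun k hk => by
            simp only [Finset.mem_Ico] at hk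
            unfold Pinvf
            rw [if_neg hi0, if_neg (by omega : ¬ k = 0), if_pos hi1]),
            Finset.sum_const, Nat.card_Ico, if_pos (hij.mpr (by omega)), nsmul_eq_mul]
          field_simp
          simp
        · -- i ≥ 2
          rw [Finset.sum_congr rfl (fun k hk => by
            simp only [Finset.mem_Ico] at hk
            unfold Pinvf
            rw [if_neg hi0, if_neg (by omega : ¬ k = 0), if_neg hi1]),
            Finset.sum_sub_distrib, Finset.sum_boole, Finset.sum_const, Nat.card_Ico,
            if_neg (show ¬ i = j from fun h => by rw [hij] at h; omega)]
          have hfe : Finset.filter (fun k => (i : ℕ) ≤ k) (Finset.Ico 1 (τ + 1))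
              = Finset.Ico (i : ℕ) (τ + 1) := by
            ext a
            simp only [Finset.mem_filter, Finset.mem_Ico]
            omega
          rw [hfe, Nat.card_Ico, nsmul_eq_mul]
          have hcast : ((τ + 1 - (i : ℕ) : ℕ) : ℝ) = (τ : ℝ) + 1 - (i : ℕ) := by
            push_cast [Nat.cast_sub (by omega : (i : ℕ) ≤ τ + 1)]
            ring
          rw [hcast]
          field_simp
          simp
  · -- case j ≥ 2
    have hc : ∀ k ∈ Finset.range (τ + 1), Pinvf τ (i : ℕ) k * Pf k (j : ℕ)
        = (if k = (j : ℕ) then Pinvf τ (i : ℕ) k else 0)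
          + (if k = (j : ℕ) - 1 then -Pinvf τ (i : ℕ) k else 0) := by
      intro k _
      unfold Pf
      rw [if_neg (by omega : ¬ (j : ℕ) = 0), if_neg (by omega : ¬ (j : ℕ) = 1)]
      split_ifs <;> first | ring1 | (exfalso; first | assumption | omega)
    rw [Finset.sum_congr rfl hc, Finset.sum_add_distrib,
      Finset.sum_ite_eq' (Finset.range (τ + 1)) ((j : ℕ)) (Pinvf τ (i : ℕ)),
      Finset.sum_ite_eq' (Finset.range (τ + 1)) ((j : ℕ) - 1) (fun k => -Pinvf τ (i : ℕ) k),
      if_pos (Finset.mem_range.mpr (by omega)), if_pos (Finset.mem_range.mpr (by omega))]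
    unfold Pinvf
    by_cases hi0 : (i : ℕ) = 0
    · rw [if_pos hi0, if_pos hi0, if_neg (by omega : ¬ (j : ℕ) = 0),
        if_neg (by omega : ¬ (j : ℕ) - 1 = 0), if_neg (show ¬ i = j from fun h => by rw [hij] at h; omega)]
      ring
    · by_cases hi1 : (i : ℕ) = 1
      · rw [if_neg hi0, if_neg hi0, if_neg (by omega : ¬ (j : ℕ) = 0),
          if_neg (by omega : ¬ (j : ℕ) - 1 = 0), if_pos hi1, if_pos hi1,
          if_neg (show ¬ i = j from fun h => by rw [hij] at h; omega)]
        ring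
      · rw [if_neg hi0, if_neg hi0, if_neg (by omega : ¬ (j : ℕ) = 0),
          if_neg (by omega : ¬ (j : ℕ) - 1 = 0), if_neg hi1, if_neg hi1]
        by_cases hieq : (i : ℕ) = (j : ℕ)
        · rw [if_pos (by omega : (i : ℕ) ≤ (j : ℕ)), if_neg (by omega : ¬ (i : ℕ) ≤ (j : ℕ) - 1),
            if_pos (hij.mpr hieq)]
          ring
        · rw [if_neg (show ¬ i = j from fun h => by rw [hij] at h; omega)]
          by_cases hile : (i : ℕ) ≤ (j : ℕ)
          · rw [if_pos hile, if_pos (by omega : (i : ℕ) ≤ (j : ℕ) - 1)]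
            ring
          · rw [if_neg hile, if_neg (by omega : ¬ (i : ℕ) ≤ (j : ℕ) - 1)]
            ring

lemma Pf_c0 (i : ℕ) : Pf i 0 = if i = 0 then 1 else 0 := by
  unfold Pf
  rw [if_pos rfl]

lemma Pf_c1 (i : ℕ) : Pf i 1 = if i = 0 then 0 else 1 := by
  unfold Pf
  rw [if_neg (by omega : ¬ (1 : ℕ) = 0), if_pos rfl]

lemma QP_eq_PT (hτ : 0 < τ) (hLpos : ∀ k, 1 ≤ k → k ≤ K → 0 < L k)
    (hchain : ∀ k, 1 ≤ k → k < K → L k ∣ L (k + 1)) (hdiv : L K ∣ τ) :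
    krsbQ τ K C D F χ H L * Pm τ = Pm τ * Tm τ K C D F χ H L := by
  ext i j
  have hform : (krsbQ τ K C D F χ H L * Pm τ) i j
      = ∑ k ∈ Finset.range (τ + 1), Qf K C D F χ H L (i : ℕ) k * Pf k (j : ℕ) := by
    rw [Matrix.mul_apply, ← Fin.sum_univ_eq_sum_range
      (fun k => Qf K C D F χ H L (i : ℕ) k * Pf k (j : ℕ)) (τ + 1)]
    exact Finset.sum_congr rfl fun k _ => by rw [krsbQ_apply]; rfl
  have hform2 : (Pm τ * Tm τ K C D F χ H L) i j
      = ∑ k ∈ Finset.range (τ + 1), Pf (i : ℕ) k * Tf τ K C D F χ H L k (j : ℕ) := by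
    rw [Matrix.mul_apply, ← Fin.sum_univ_eq_sum_range
      (fun k => Pf (i : ℕ) k * Tf τ K C D F χ H L k (j : ℕ)) (τ + 1)]
    rfl
  rw [hform, hform2]
  have hjlt : (j : ℕ) < τ + 1 := j.isLt
  have hilt : (i : ℕ) < τ + 1 := i.isLt
  rcases Nat.lt_or_ge (j : ℕ) 2 with hj2 | hj2
  · rcases Nat.lt_or_ge (j : ℕ) 1 with hj0' | hj1
    · -- j = 0
      have hj : (j : ℕ) = 0 := by omega
      rw [hj]
      have hl : ∀ k ∈ Finset.range (τ + 1), Qf K C D F χ H L (i : ℕ) k * Pf k 0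
          = if k = 0 then Qf K C D F χ H L (i : ℕ) k else 0 := by
        intro k _
        rw [Pf_c0]
        split_ifs <;> first | ring1 | (exfalso; first | assumption | omega)
      have hr : ∀ k ∈ Finset.range (τ + 1), Pf (i : ℕ) k * Tf τ K C D F χ H L k 0
          = (if k = 0 then Pf (i : ℕ) k * C else 0) + (if k = 1 then Pf (i : ℕ) k * D else 0) := by
        intro k _
        unfold Tf
        rw [if_pos rfl]
        split_ifs <;> first | ring1 | (exfalso; first | assumption | omega)
      rw [Finset.sum_congr rfl hl, Finset.sum_congr rfl hr, Finset.sum_add_distrib,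
        Finset.sum_ite_eq' (Finset.range (τ + 1)) 0 (Qf K C D F χ H L (i : ℕ)),
        Finset.sum_ite_eq' (Finset.range (τ + 1)) 0 (fun k => Pf (i : ℕ) k * C),
        Finset.sum_ite_eq' (Finset.range (τ + 1)) 1 (fun k => Pf (i : ℕ) k * D),
        if_pos (Finset.mem_range.mpr (by omega)), if_pos (Finset.mem_range.mpr (by omega)),
        if_pos (Finset.mem_range.mpr (by omega))]
      by_cases hi : (i : ℕ) = 0
      · simp [Qf, Pf_c0, Pf_c1, hi]
      · simp [Qf, Pf_c0, Pf_c1, hi]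
    · -- j = 1
      have hj : (j : ℕ) = 1 := by omega
      rw [hj]
      have hl : ∀ k ∈ Finset.range (τ + 1), Qf K C D F χ H L (i : ℕ) k * Pf k 1
          = if k = 0 then 0 else Qf K C D F χ H L (i : ℕ) k := by
        intro k _
        rw [Pf_c1]
        split_ifs <;> first | ring1 | (exfalso; first | assumption | omega)
      have hr : ∀ k ∈ Finset.range (τ + 1), Pf (i : ℕ) k * Tf τ K C D F χ H L k 1
          = (if k = 0 then Pf (i : ℕ) k * ((τ : ℝ) * D) else 0)
            + (if k = 1 then Pf (i : ℕ) k * ((τ : ℝ) * F + krsbS K χ H L) else 0) := by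
        intro k _
        unfold Tf
        rw [if_neg (by omega : ¬ (1 : ℕ) = 0), if_pos rfl]
        split_ifs <;> first | ring1 | (exfalso; first | assumption | omega)
      rw [Finset.sum_congr rfl hl, Finset.sum_congr rfl hr, Finset.sum_add_distrib,
        Finset.sum_ite_eq' (Finset.range (τ + 1)) 0
          (fun k => Pf (i : ℕ) k * ((τ : ℝ) * D)),
        Finset.sum_ite_eq' (Finset.range (τ + 1)) 1
          (fun k => Pf (i : ℕ) k * ((τ : ℝ) * F + krsbS K χ H L)),
        if_pos (Finset.mem_range.mpr (by omega)), if_pos (Finset.mem_range.mpr (by omega)),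
        Finset.range_eq_Ico, Finset.sum_eq_sum_Ico_succ_bot (by omega : 0 < τ + 1),
        if_pos rfl, zero_add,
        Finset.sum_congr rfl (fun k hk =>
          if_neg (by simp only [Finset.mem_Ico] at hk; omega : ¬ k = 0))]
      by_cases hi : (i : ℕ) = 0
      · rw [Finset.sum_congr rfl (fun k hk => by
          simp only [Finset.mem_Ico] at hk
          unfold Qf
          rw [if_pos hi, if_neg (by omega : ¬ k = 0)]),
          Finset.sum_const, Nat.card_Ico, nsmul_eq_mul]
        simp [Pf_c0, Pf_c1, hi]
      · rw [Finset.sum_congr rfl (fun k hk => by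
          simp only [Finset.mem_Ico] at hk
          unfold Qf
          rw [if_neg hi, if_neg (by omega : ¬ k = 0)]),
          Finset.sum_Ico_eq_sum_range]
        have hre : ∀ k ∈ Finset.range (τ + 1 - 1),
            aent K F χ H L ((i : ℕ) - 1) (1 + k - 1) = aent K F χ H L k ((i : ℕ) - 1) := by
          intro k _
          rw [show 1 + k - 1 = k by omega, aent_comm]
        rw [Finset.sum_congr rfl hre, show τ + 1 - 1 = τ by omega,
          asum hchain hdiv hLpos (show (i : ℕ) - 1 < τ by omega)]
        simp [Pf_c0, Pf_c1, hi]
  · -- j ≥ 2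
    have ht1 : 1 ≤ (j : ℕ) - 1 := by omega
    have htτ : (j : ℕ) - 1 < τ := by omega
    have hτ2 : 2 ≤ τ := by omega
    have hl : ∀ k ∈ Finset.range (τ + 1), Qf K C D F χ H L (i : ℕ) k * Pf k (j : ℕ)
        = (if k = (j : ℕ) then Qf K C D F χ H L (i : ℕ) k else 0)
          + (if k = (j : ℕ) - 1 then -Qf K C D F χ H L (i : ℕ) k else 0) := by
      intro k _
      unfold Pf
      rw [if_neg (by omega : ¬ (j : ℕ) = 0), if_neg (by omega : ¬ (j : ℕ) = 1)]
      split_ifs <;> first | ring1 | (exfalso; first | assumption | omega)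
    rw [Finset.sum_congr rfl hl, Finset.sum_add_distrib,
      Finset.sum_ite_eq' (Finset.range (τ + 1)) ((j : ℕ)) (Qf K C D F χ H L (i : ℕ)),
      Finset.sum_ite_eq' (Finset.range (τ + 1)) ((j : ℕ) - 1)
        (fun k => -Qf K C D F χ H L (i : ℕ) k),
      if_pos (Finset.mem_range.mpr (by omega)), if_pos (Finset.mem_range.mpr (by omega))]
    by_cases hi0 : (i : ℕ) = 0
    · -- border row
      have hr : ∀ k ∈ Finset.range (τ + 1), Pf (i : ℕ) k * Tf τ K C D F χ H L k (j : ℕ)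
          = if k = 0 then Tf τ K C D F χ H L k (j : ℕ) else 0 := by
        intro k _
        rw [hi0]
        unfold Pf
        split_ifs <;> first | ring1 | (exfalso; first | assumption | omega)
      rw [Finset.sum_congr rfl hr,
        Finset.sum_ite_eq' (Finset.range (τ + 1)) 0 (fun k => Tf τ K C D F χ H L k (j : ℕ)),
        if_pos (Finset.mem_range.mpr (by omega))]
      unfold Qf Tf
      rw [if_pos hi0, if_pos hi0, if_neg (by omega : ¬ (j : ℕ) = 0),
        if_neg (by omega : ¬ (j : ℕ) - 1 = 0),
        if_neg (by omega : ¬ (j : ℕ) = 0), if_neg (by omega : ¬ (j : ℕ) = 1), if_pos rfl]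
      ring
    · by_cases hi1 : (i : ℕ) = 1
      · -- first tail row
        have hr : ∀ k ∈ Finset.range (τ + 1), Pf (i : ℕ) k * Tf τ K C D F χ H L k (j : ℕ)
            = (if k = 1 then Tf τ K C D F χ H L k (j : ℕ) else 0)
              + (if k = 2 then -Tf τ K C D F χ H L k (j : ℕ) else 0) := by
          intro k _
          rw [hi1]
          unfold Pf
          split_ifs <;> first | ring1 | (exfalso; first | assumption | omega)
        rw [Finset.sum_congr rfl hr, Finset.sum_add_distrib,
          Finset.sum_ite_eq' (Finset.range (τ + 1)) 1 (fun k => Tf τ K C D F χ H L k (j : ℕ)),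
          Finset.sum_ite_eq' (Finset.range (τ + 1)) 2 (fun k => -Tf τ K C D F χ H L k (j : ℕ)),
          if_pos (Finset.mem_range.mpr (by omega)), if_pos (Finset.mem_range.mpr (by omega))]
        unfold Qf Tf
        rw [if_neg hi0, if_neg (by omega : ¬ (j : ℕ) = 0), if_neg hi0,
          if_neg (by omega : ¬ (j : ℕ) - 1 = 0),
          if_neg (by omega : ¬ (j : ℕ) = 0), if_neg (by omega : ¬ (j : ℕ) = 1),
          if_neg (by omega : ¬ (1 : ℕ) = 0),
          if_neg (by omega : ¬ (j : ℕ) = 0), if_neg (by omega : ¬ (j : ℕ) = 1),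
          if_neg (by omega : ¬ (2 : ℕ) = 0)]
        rw [hi1, show (1 : ℕ) - 1 = 0 by omega, show (2 : ℕ) - 1 = 1 by omega,
          G0 hchain hdiv hLpos ht1 htτ]
        have htel := gf_succ (τ := τ) (K := K) (F := F) (χ := χ) (H := H) (L := L)
          (t := (j : ℕ) - 1) (show 0 < τ by omega)
        rw [G0 hchain hdiv hLpos ht1 htτ, show (0 : ℕ) + 1 = 1 by omega] at htel
        rw [show (j : ℕ) - 1 - 1 = (j : ℕ) - 1 - 1 from rfl]
        have : gf τ K F χ H L ((j : ℕ) - 1) 1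
            = -(aent K F χ H L 0 ((j : ℕ) - 1) - aent K F χ H L 0 ((j : ℕ) - 1 - 1)) := by
          rw [eq_neg_iff_add_eq_zero]
          linarith [htel]
        rw [this]
        ring
      · -- generic tail row, 2 ≤ i
        have hi2 : 2 ≤ (i : ℕ) := by omega
        have hr : ∀ k ∈ Finset.range (τ + 1), Pf (i : ℕ) k * Tf τ K C D F χ H L k (j : ℕ)
            = (if k = 1 then Tf τ K C D F χ H L k (j : ℕ) else 0)
              + ((if k = (i : ℕ) then Tf τ K C D F χ H L k (j : ℕ) else 0)
              + (if k = (i : ℕ) + 1 then -Tf τ K C D F χ H L k (j : ℕ) else 0)) := by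
          intro k _
          unfold Pf
          split_ifs <;> first | ring1 | (exfalso; first | assumption | omega)
        rw [Finset.sum_congr rfl hr, Finset.sum_add_distrib, Finset.sum_add_distrib,
          Finset.sum_ite_eq' (Finset.range (τ + 1)) 1 (fun k => Tf τ K C D F χ H L k (j : ℕ)),
          Finset.sum_ite_eq' (Finset.range (τ + 1)) ((i : ℕ))
            (fun k => Tf τ K C D F χ H L k (j : ℕ)),
          Finset.sum_ite_eq' (Finset.range (τ + 1)) ((i : ℕ) + 1)
            (fun k => -Tf τ K C D F χ H L k (j : ℕ)),
          if_pos (Finset.mem_range.mpr (by omega)), if_pos (Finset.mem_range.mpr (by omega))]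
        have hT1 : Tf τ K C D F χ H L 1 (j : ℕ) = 0 := by
          unfold Tf
          rw [if_neg (by omega : ¬ (j : ℕ) = 0), if_neg (by omega : ¬ (j : ℕ) = 1),
            if_neg (by omega : ¬ (1 : ℕ) = 0), show (1 : ℕ) - 1 = 0 by omega]
          exact G0 hchain hdiv hLpos ht1 htτ
        have hTi : Tf τ K C D F χ H L (i : ℕ) (j : ℕ) = gf τ K F χ H L ((j : ℕ) - 1) ((i : ℕ) - 1) := by
          unfold Tf
          rw [if_neg (by omega : ¬ (j : ℕ) = 0), if_neg (by omega : ¬ (j : ℕ) = 1),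
            if_neg (by omega : ¬ (i : ℕ) = 0)]
        have hQl : Qf K C D F χ H L (i : ℕ) (j : ℕ)
            = aent K F χ H L ((i : ℕ) - 1) ((j : ℕ) - 1) := by
          unfold Qf
          rw [if_neg hi0, if_neg (by omega : ¬ (j : ℕ) = 0)]
        have hQl2 : Qf K C D F χ H L (i : ℕ) ((j : ℕ) - 1)
            = aent K F χ H L ((i : ℕ) - 1) ((j : ℕ) - 1 - 1) := by
          unfold Qf
          rw [if_neg hi0, if_neg (by omega : ¬ (j : ℕ) - 1 = 0)]
        rw [hT1, hTi, hQl, hQl2]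
        by_cases hiτ : (i : ℕ) + 1 ≤ τ
        · rw [if_pos (Finset.mem_range.mpr (by omega))]
          have hTi1 : Tf τ K C D F χ H L ((i : ℕ) + 1) (j : ℕ)
              = gf τ K F χ H L ((j : ℕ) - 1) ((i : ℕ)) := by
            unfold Tf
            rw [if_neg (by omega : ¬ (j : ℕ) = 0), if_neg (by omega : ¬ (j : ℕ) = 1),
              if_neg (by omega : ¬ (i : ℕ) + 1 = 0), show (i : ℕ) + 1 - 1 = (i : ℕ) by omega]
          rw [hTi1]
          have htel := gf_succ (τ := τ) (K := K) (F := F) (χ := χ) (H := H) (L := L)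
            (t := (j : ℕ) - 1) (show (i : ℕ) - 1 < τ by omega)
          rw [show (i : ℕ) - 1 + 1 = (i : ℕ) by omega] at htel
          rw [htel]
          ring
        · rw [if_neg (by simp only [Finset.mem_range]; omega)]
          have hieq : (i : ℕ) = τ := by omega
          have htel := gf_succ (τ := τ) (K := K) (F := F) (χ := χ) (H := H) (L := L)
            (t := (j : ℕ) - 1) (show (i : ℕ) - 1 < τ by omega)
          rw [show (i : ℕ) - 1 + 1 = (i : ℕ) by omega, hieq, gf_top] at htel
          rw [show (i : ℕ) - 1 = τ - 1 by omega]
          linarith [htel]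

def bfun (τ K : ℕ) (L : ℕ → ℕ) (i : Fin (τ + 1)) : ℕ :=
  if (i : ℕ) ≤ 1 then K + 1 else lev K L ((i : ℕ) - 1)

lemma Tm_tri (hLpos : ∀ k, 1 ≤ k → k ≤ K → 0 < L k)
    (hchain : ∀ k, 1 ≤ k → k < K → L k ∣ L (k + 1)) (hdiv : L K ∣ τ) :
    BlockTriangular (Tm τ K C D F χ H L) (bfun τ K L) := by
  intro i j hlt
  show Tf τ K C D F χ H L (i : ℕ) (j : ℕ) = 0
  unfold bfun at hlt
  have hilt : (i : ℕ) < τ + 1 := i.isLt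
  have hjlt : (j : ℕ) < τ + 1 := j.isLt
  by_cases hi : (i : ℕ) ≤ 1
  · rw [if_pos hi] at hlt
    by_cases hj : (j : ℕ) ≤ 1
    · rw [if_pos hj] at hlt; omega
    · rw [if_neg hj] at hlt
      unfold Tf
      rw [if_neg (by omega : ¬ (j : ℕ) = 0), if_neg (by omega : ¬ (j : ℕ) = 1)]
      by_cases hi0 : (i : ℕ) = 0
      · rw [if_pos hi0]
      · rw [if_neg hi0, show (i : ℕ) - 1 = 0 by omega]
        exact G0 hchain hdiv hLpos (by omega) (by omega)
  · rw [if_neg hi] at hlt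
    by_cases hj : (j : ℕ) ≤ 1
    · rw [if_pos hj] at hlt
      have := lev_le (K := K) (L := L) ((i : ℕ) - 1)
      omega
    · rw [if_neg hj] at hlt
      unfold Tf
      rw [if_neg (by omega : ¬ (j : ℕ) = 0), if_neg (by omega : ¬ (j : ℕ) = 1),
        if_neg (by omega : ¬ (i : ℕ) = 0)]
      refine G2 hchain hdiv hLpos (by omega) (by omega) (by omega) (by omega)
        (fun h => ?_) (le_of_lt ?_)
      · rw [h] at hlt; exact lt_irrefl _ hlt
      · exact hlt

lemma bfun_top_iff (i : Fin (τ + 1)) : bfun τ K L i = K + 1 ↔ (i : ℕ) ≤ 1 := by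
  unfold bfun
  split_ifs with h
  · simp [h]
  · have := lev_le (K := K) (L := L) ((i : ℕ) - 1)
    constructor
    · intro hc; omega
    · intro hc; exact absurd hc h

lemma Tm_diag_block (hLpos : ∀ k, 1 ≤ k → k ≤ K → 0 < L k)
    (hchain : ∀ k, 1 ≤ k → k < K → L k ∣ L (k + 1)) (hdiv : L K ∣ τ)
    {a : ℕ} (ha : a ≤ K) :
    (Tm τ K C D F χ H L).toSquareBlock (bfun τ K L) a
      = Matrix.diagonal (fun _ => krsbS a χ H L) := by
  ext x y
  obtain ⟨i, hi⟩ := x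
  obtain ⟨j, hj⟩ := y
  have hi2 : ¬ (i : ℕ) ≤ 1 := by
    intro h
    unfold bfun at hi
    rw [if_pos h] at hi
    omega
  have hj2 : ¬ (j : ℕ) ≤ 1 := by
    intro h
    unfold bfun at hj
    rw [if_pos h] at hj
    omega
  have hlevi : lev K L ((i : ℕ) - 1) = a := by
    unfold bfun at hi; rwa [if_neg hi2] at hi
  have hlevj : lev K L ((j : ℕ) - 1) = a := by
    unfold bfun at hj; rwa [if_neg hj2] at hj
  have hilt : (i : ℕ) < τ + 1 := i.isLt
  have hjlt : (j : ℕ) < τ + 1 := j.isLt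
  have hentry : (Tm τ K C D F χ H L).toSquareBlock (bfun τ K L) a ⟨i, hi⟩ ⟨j, hj⟩
      = Tf τ K C D F χ H L (i : ℕ) (j : ℕ) := rfl
  rw [hentry, Matrix.diagonal_apply]
  by_cases heq : (⟨i, hi⟩ : {a' // bfun τ K L a' = a}) = ⟨j, hj⟩
  · rw [if_pos heq]
    have hv : (i : ℕ) = (j : ℕ) := congrArg Fin.val (Subtype.mk_eq_mk.mp heq)
    unfold Tf
    rw [if_neg (by omega : ¬ (j : ℕ) = 0), if_neg (by omega : ¬ (j : ℕ) = 1),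
      if_neg (by omega : ¬ (i : ℕ) = 0), ← hv,
      G1 hchain hdiv hLpos (by omega) (by omega), hlevi]
  · rw [if_neg heq]
    have hv : (i : ℕ) ≠ (j : ℕ) := fun h => heq (Subtype.ext (Fin.ext h))
    unfold Tf
    rw [if_neg (by omega : ¬ (j : ℕ) = 0), if_neg (by omega : ¬ (j : ℕ) = 1),
      if_neg (by omega : ¬ (i : ℕ) = 0)]
    exact G2 hchain hdiv hLpos (by omega) (by omega) (by omega) (by omega)
      (by omega) (by rw [hlevi, hlevj])

lemma not_dvd_of_lev_lt {k t : ℕ} (h : lev K L t < k) (hk : k ≤ K) : ¬ L k ∣ t :=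
  Nat.findGreatest_is_greatest (P := fun k' => L k' ∣ t) (n := K) h hk

lemma Nc_eq {a : ℕ} (ha : a ≤ K) :
    (Finset.univ.filter (fun i : Fin (τ + 1) => bfun τ K L i = a)).card
      = ((Finset.Ico 1 τ).filter (fun t => lev K L t = a)).card := by
  apply Finset.card_bij (fun (i : Fin (τ + 1)) _ => (i : ℕ) - 1)
  · intro i hi
    simp only [Finset.mem_filter, Finset.mem_univ, true_and] at hi
    have h2 : ¬ (i : ℕ) ≤ 1 := by
      intro h
      unfold bfun at hi
      rw [if_pos h] at hi
      omega
    unfold bfun at hi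
    rw [if_neg h2] at hi
    have := i.isLt
    simp only [Finset.mem_filter, Finset.mem_Ico]
    exact ⟨⟨by omega, by omega⟩, hi⟩
  · intro i hi j hj h
    simp only [Finset.mem_filter, Finset.mem_univ, true_and] at hi hj
    have h2i : ¬ (i : ℕ) ≤ 1 := by
      intro hle
      unfold bfun at hi
      rw [if_pos hle] at hi
      omega
    have h2j : ¬ (j : ℕ) ≤ 1 := by
      intro hle
      unfold bfun at hj
      rw [if_pos hle] at hj
      omega
    exact Fin.ext (by omega)
  · intro t ht
    simp only [Finset.mem_filter, Finset.mem_Ico] at ht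
    refine ⟨⟨t + 1, by omega⟩, ?_, by simp⟩
    simp only [Finset.mem_filter, Finset.mem_univ, true_and]
    unfold bfun
    rw [if_neg (by simp; omega)]
    simpa using ht.2

lemma card_dvd_filter {d : ℕ} (hτ : 0 < τ) (hd : 0 < d) (hdτ : d ∣ τ) :
    ((Finset.Ico 1 τ).filter (fun t => d ∣ t)).card = τ / d - 1 := by
  have h1 : Finset.Ico 1 τ = Finset.Ioc 0 (τ - 1) := by
    ext x
    simp only [Finset.mem_Ico, Finset.mem_Ioc]
    omega
  rw [h1, Nat.Ioc_filter_dvd_card_eq_div]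
  obtain ⟨q, rfl⟩ := hdτ
  have hq : 1 ≤ q := by
    rcases Nat.eq_zero_or_pos q with rfl | h
    · simp at hτ
    · exact h
  have hkey : d * q = d * (q - 1) + d := by
    conv_lhs => rw [show q = q - 1 + 1 by omega]
    rw [Nat.mul_add, Nat.mul_one]
  rw [show d * q - 1 = d * (q - 1) + (d - 1) by omega,
    Nat.mul_add_div hd, Nat.div_eq_of_lt (by omega), Nat.mul_div_cancel_left q hd]
  omega

lemma lev_eq_top_iff (hK : 0 < K)
    (hchain : ∀ k, 1 ≤ k → k < K → L k ∣ L (k + 1)) (t : ℕ) :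
    lev K L t = K ↔ L K ∣ t := by
  constructor
  · intro h
    exact lev_dvd hchain (by omega) (le_of_eq h.symm)
  · intro h
    exact le_antisymm (lev_le t) (le_lev le_rfl h)

lemma lev_eq_mid_iff (hchain : ∀ k, 1 ≤ k → k < K → L k ∣ L (k + 1))
    {a : ℕ} (h1 : 1 ≤ a) (ha : a < K) (t : ℕ) :
    lev K L t = a ↔ L a ∣ t ∧ ¬ L (a + 1) ∣ t := by
  constructor
  · intro h
    refine ⟨lev_dvd hchain h1 (le_of_eq h.symm), ?_⟩
    exact not_dvd_of_lev_lt (K := K) (L := L) (by omega) (by omega)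
  · rintro ⟨hd, hnd⟩
    have hle : a ≤ lev K L t := le_lev (by omega) hd
    rcases Nat.eq_or_lt_of_le hle with h | h
    · exact h.symm
    · exact absurd (lev_dvd hchain (by omega) h) hnd

lemma lev_eq_zero_iff (hK : 0 < K)
    (hchain : ∀ k, 1 ≤ k → k < K → L k ∣ L (k + 1)) (t : ℕ) :
    lev K L t = 0 ↔ ¬ L 1 ∣ t := by
  constructor
  · intro h
    exact not_dvd_of_lev_lt (K := K) (L := L) (by omega) (by omega)
  · intro h
    by_contra hne
    refine h (lev_dvd hchain (by omega) ?_)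
    omega
lemma card_lev_zero (hτ : 0 < τ) (hK : 0 < K) (hLpos : ∀ k, 1 ≤ k → k ≤ K → 0 < L k)
    (hchain : ∀ k, 1 ≤ k → k < K → L k ∣ L (k + 1)) (hdiv : L K ∣ τ) :
    ((Finset.Ico 1 τ).filter (fun t => lev K L t = 0)).card = τ - τ / L 1 := by
  have hcong : (Finset.Ico 1 τ).filter (fun t => lev K L t = 0)
      = (Finset.Ico 1 τ).filter (fun t => ¬ L 1 ∣ t) := by
    ext t
    simp only [Finset.mem_filter, lev_eq_zero_iff hK hchain t]
  rw [hcong, Finset.filter_not, Finset.card_sdiff_of_subset (Finset.filter_subset _ _),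
    card_dvd_filter hτ (hLpos 1 le_rfl hK) (dvd_tau hchain hdiv le_rfl hK), Nat.card_Ico]
  have h1 : L 1 ≤ τ := Nat.le_of_dvd hτ (dvd_tau hchain hdiv le_rfl hK)
  have h2 : 1 ≤ τ / L 1 := (Nat.one_le_div_iff (hLpos 1 le_rfl hK)).mpr h1
  omega

lemma card_lev_K (hτ : 0 < τ) (hK : 0 < K) (hLpos : ∀ k, 1 ≤ k → k ≤ K → 0 < L k)
    (hchain : ∀ k, 1 ≤ k → k < K → L k ∣ L (k + 1)) (hdiv : L K ∣ τ) :
    ((Finset.Ico 1 τ).filter (fun t => lev K L t = K)).card = τ / L K - 1 := by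
  have hcong : (Finset.Ico 1 τ).filter (fun t => lev K L t = K)
      = (Finset.Ico 1 τ).filter (fun t => L K ∣ t) := by
    ext t
    simp only [Finset.mem_filter, lev_eq_top_iff hK hchain t]
  rw [hcong, card_dvd_filter hτ (hLpos K hK le_rfl) hdiv]

lemma card_lev_mid (hτ : 0 < τ) (hK : 0 < K) (hLpos : ∀ k, 1 ≤ k → k ≤ K → 0 < L k)
    (hchain : ∀ k, 1 ≤ k → k < K → L k ∣ L (k + 1)) (hdiv : L K ∣ τ)
    {a : ℕ} (h1 : 1 ≤ a) (ha : a < K) :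
    ((Finset.Ico 1 τ).filter (fun t => lev K L t = a)).card
      = τ / L a - τ / L (a + 1) := by
  have hsub : (Finset.Ico 1 τ).filter (fun t => L (a + 1) ∣ t)
      ⊆ (Finset.Ico 1 τ).filter (fun t => L a ∣ t) := by
    intro t ht
    simp only [Finset.mem_filter] at ht ⊢
    exact ⟨ht.1, (hchain a h1 ha).trans ht.2⟩
  have hsplit : (Finset.Ico 1 τ).filter (fun t => lev K L t = a)
      = ((Finset.Ico 1 τ).filter (fun t => L a ∣ t))
          \ ((Finset.Ico 1 τ).filter (fun t => L (a + 1) ∣ t)) := by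
    ext t
    simp only [Finset.mem_filter, Finset.mem_sdiff, lev_eq_mid_iff hchain h1 ha t]
    tauto
  rw [hsplit, Finset.card_sdiff_of_subset hsub,
    card_dvd_filter hτ (hLpos a h1 (by omega)) (dvd_tau hchain hdiv h1 (by omega)),
    card_dvd_filter hτ (hLpos (a + 1) (by omega) (by omega))
      (dvd_tau hchain hdiv (by omega) (by omega))]
  have hle : L a ≤ L (a + 1) :=
    Nat.le_of_dvd (hLpos (a + 1) (by omega) (by omega)) (hchain a h1 ha)
  have hmono : τ / L (a + 1) ≤ τ / L a := Nat.div_le_div_left hle (hLpos a h1 (by omega))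
  have h2 : 1 ≤ τ / L (a + 1) := (Nat.one_le_div_iff (hLpos (a + 1) (by omega) (by omega))).mpr
    (Nat.le_of_dvd hτ (dvd_tau hchain hdiv (by omega) (by omega)))
  omega

lemma two_block_det {n : ℕ} (hn : 2 ≤ n) (b : Fin n → ℕ) (c : ℕ) (M : Matrix (Fin n) (Fin n) ℝ)
    (hiff : ∀ i, b i = c ↔ (i : ℕ) ≤ 1) : (M.toSquareBlock b c).det
      = M ⟨0, by omega⟩ ⟨0, by omega⟩ * M ⟨1, by omega⟩ ⟨1, by omega⟩
        - M ⟨0, by omega⟩ ⟨1, by omega⟩ * M ⟨1, by omega⟩ ⟨0, by omega⟩ := by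
  have hmem0 : b ⟨0, by omega⟩ = c := (hiff _).mpr (by simp)
  have hmem1 : b ⟨1, by omega⟩ = c := (hiff _).mpr (by simp)
  let e : Fin 2 ≃ {x : Fin n // b x = c} :=
    { toFun := fun x => if (x : ℕ) = 0 then ⟨⟨0, by omega⟩, hmem0⟩ else ⟨⟨1, by omega⟩, hmem1⟩
      invFun := fun y => if ((y.1 : Fin n) : ℕ) = 0 then 0 else 1
      left_inv := by
        intro x
        fin_cases x <;> simp
      right_inv := by
        intro y
        have hy := (hiff y.1).mp y.2
        dsimp only
        by_cases h : ((y.1 : Fin n) : ℕ) = 0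
        · rw [if_pos h, show ((0 : Fin 2) : ℕ) = 0 from rfl, if_pos rfl]
          exact Subtype.ext (Fin.ext (by simp [h]))
        · rw [if_neg h, show ((1 : Fin 2) : ℕ) = 1 from rfl, if_neg one_ne_zero]
          exact Subtype.ext (Fin.ext (by simp; omega)) }
  have he0 : ((e 0 : {x : Fin n // b x = c}) : Fin n) = ⟨0, by omega⟩ := by
    simp only [e, Equiv.coe_fn_mk, show ((0 : Fin 2) : ℕ) = 0 from rfl, if_pos]
  have he1 : ((e 1 : {x : Fin n // b x = c}) : Fin n) = ⟨1, by omega⟩ := by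
    simp only [e, Equiv.coe_fn_mk, show ((1 : Fin 2) : ℕ) = 1 from rfl, if_neg one_ne_zero]
  rw [← Matrix.det_submatrix_equiv_self e, Matrix.det_fin_two]
  have happ : ∀ (y z : {x : Fin n // b x = c}),
      M.toSquareBlock b c y z = M (y : Fin n) (z : Fin n) := fun _ _ => rfl
  simp only [Matrix.submatrix_apply, happ, he0, he1]

lemma top_block_det (hτ : 0 < τ) :
    ((Tm τ K C D F χ H L).toSquareBlock (bfun τ K L) (K + 1)).det
      = C * ((τ : ℝ) * F + krsbS K χ H L) - (τ : ℝ) * D ^ 2 := by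
  rw [two_block_det (by omega) (bfun τ K L) (K + 1) (Tm τ K C D F χ H L)
    (fun i => bfun_top_iff i)]
  have h00 : Tm τ K C D F χ H L ⟨0, by omega⟩ ⟨0, by omega⟩ = C := by
    show Tf τ K C D F χ H L 0 0 = C
    unfold Tf
    norm_num
  have h01 : Tm τ K C D F χ H L ⟨0, by omega⟩ ⟨1, by omega⟩ = (τ : ℝ) * D := by
    show Tf τ K C D F χ H L 0 1 = (τ : ℝ) * D
    unfold Tf
    norm_num
  have h10 : Tm τ K C D F χ H L ⟨1, by omega⟩ ⟨0, by omega⟩ = D := by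
    show Tf τ K C D F χ H L 1 0 = D
    unfold Tf
    norm_num
  have h11 : Tm τ K C D F χ H L ⟨1, by omega⟩ ⟨1, by omega⟩
      = (τ : ℝ) * F + krsbS K χ H L := by
    show Tf τ K C D F χ H L 1 1 = (τ : ℝ) * F + krsbS K χ H L
    unfold Tf
    norm_num
  rw [h00, h01, h10, h11]
  ring

end
end
end KRSBaux

open KRSBaux

/-- the determinant of the bordered KRSB matrix is
`(C·(τF + S_K) − τ·D²) · χ^{τ − τ/L̃_1} · (Π_{k=1}^{K−1} S_k^{τ/L̃_k − τ/L̃_{k+1}}) · S_K^{τ/L̃_K − 1}`. -/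

theorem krsbQ_det (τ K : ℕ) (hτ : 0 < τ) (hK : 0 < K)
    (C D F χ : ℝ) (H : ℕ → ℝ) (L : ℕ → ℕ)
    (hLpos : ∀ k, 1 ≤ k → k ≤ K → 0 < L k)
    (hchain : ∀ k, 1 ≤ k → k < K → L k ∣ L (k + 1))
    (hdiv : L K ∣ τ) :
    (krsbQ τ K C D F χ H L).det =
      (C * ((τ : ℝ) * F + krsbS K χ H L) - (τ : ℝ) * D ^ 2) * χ ^ (τ - τ / L 1) *
        (∏ k ∈ Finset.Icc 1 (K - 1), krsbS k χ H L ^ (τ / L k - τ / L (k + 1))) *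
        krsbS K χ H L ^ (τ / L K - 1) := by
  classical
  have hPP := Pim_mul_Pm (τ := τ) hτ
  have hQP := QP_eq_PT (τ := τ) (K := K) (C := C) (D := D) (F := F) (χ := χ)
    (H := H) (L := L) hτ hLpos hchain hdiv
  have hPdet : (Pm τ).det ≠ 0 := by
    have h1 := congrArg Matrix.det hPP
    rw [Matrix.det_mul, Matrix.det_one] at h1
    intro h
    rw [h, mul_zero] at h1
    exact zero_ne_one h1
  have hdetT : (krsbQ τ K C D F χ H L).det = (Tm τ K C D F χ H L).det := by
    have h2 := congrArg Matrix.det hQP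
    rw [Matrix.det_mul, Matrix.det_mul] at h2
    exact mul_right_cancel₀ hPdet (h2.trans (mul_comm _ _))
  rw [hdetT, (Tm_tri hLpos hchain hdiv).det]
  set Efun : ℕ → ℝ := fun a =>
    if a = K + 1 then C * ((τ : ℝ) * F + krsbS K χ H L) - (τ : ℝ) * D ^ 2
    else krsbS a χ H L ^
      ((Finset.Ico 1 τ).filter (fun t => lev K L t = a)).card with hEfun
  have hKmem : K + 1 ∈ Finset.univ.image (bfun τ K L) := by
    refine Finset.mem_image.mpr ⟨⟨0, by omega⟩, Finset.mem_univ _, ?_⟩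
    exact (bfun_top_iff _).mpr (by simp)
  have hblocks : ∀ a ∈ Finset.univ.image (bfun τ K L),
      ((Tm τ K C D F χ H L).toSquareBlock (bfun τ K L) a).det = Efun a := by
    intro a ha
    by_cases hatop : a = K + 1
    · rw [hatop, top_block_det hτ, hEfun]
      simp
    · have haK : a ≤ K := by
        simp only [Finset.mem_image] at ha
        obtain ⟨i, -, rfl⟩ := ha
        by_cases h : (i : ℕ) ≤ 1
        · exact absurd ((bfun_top_iff i).mpr h) hatop
        · have hb : bfun τ K L i = lev K L ((i : ℕ) - 1) := by
            unfold bfun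
            rw [if_neg h]
          rw [hb]
          exact lev_le _
      rw [Tm_diag_block hLpos hchain hdiv haK, Matrix.det_diagonal, Finset.prod_const,
        hEfun]
      dsimp only
      rw [if_neg hatop, Finset.card_univ, Fintype.card_subtype, Nc_eq haK]
  have himg : Finset.univ.image (bfun τ K L) ⊆ insert (K + 1) (Finset.Icc 0 K) := by
    intro a ha
    simp only [Finset.mem_image] at ha
    obtain ⟨i, -, rfl⟩ := ha
    by_cases h : (i : ℕ) ≤ 1
    · rw [(bfun_top_iff i).mpr h]
      exact Finset.mem_insert_self _ _
    · have hb : bfun τ K L i = lev K L ((i : ℕ) - 1) := by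
        unfold bfun
        rw [if_neg h]
      rw [hb]
      exact Finset.mem_insert_of_mem (Finset.mem_Icc.mpr ⟨Nat.zero_le _, lev_le _⟩)
  have hout : ∀ x ∈ insert (K + 1) (Finset.Icc 0 K),
      x ∉ Finset.univ.image (bfun τ K L) → Efun x = 1 := by
    intro x hx hnx
    have hxne : x ≠ K + 1 := fun h => hnx (h ▸ hKmem)
    have hcard : ((Finset.Ico 1 τ).filter (fun t => lev K L t = x)).card = 0 := by
      rw [Finset.card_eq_zero, Finset.filter_eq_empty_iff]
      intro t ht hlev
      simp only [Finset.mem_Ico] at ht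
      refine hnx (Finset.mem_image.mpr ⟨⟨t + 1, by omega⟩, Finset.mem_univ _, ?_⟩)
      unfold bfun
      rw [if_neg (by simp only [Fin.val_mk]; omega)]
      simpa using hlev
    rw [hEfun]
    dsimp only
    rw [if_neg hxne, hcard, pow_zero]
  rw [Finset.prod_congr rfl hblocks, Finset.prod_subset himg hout,
    Finset.prod_insert (by simp [Finset.mem_Icc] : K + 1 ∉ Finset.Icc 0 K),
    show Finset.Icc 0 K = insert 0 (Finset.Icc 1 K) from by
      ext x
      simp only [Finset.mem_Icc, Finset.mem_insert]
      omega,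
    Finset.prod_insert (by simp [Finset.mem_Icc] : (0 : ℕ) ∉ Finset.Icc 1 K)]
  have hE0 : Efun 0 = χ ^ (τ - τ / L 1) := by
    rw [hEfun]
    dsimp only
    rw [if_neg (by omega), card_lev_zero hτ hK hLpos hchain hdiv,
      show krsbS 0 χ H L = χ from by simp [krsbS]]
  have hEmid : ∀ k ∈ Finset.Icc 1 (K - 1),
      Efun k = krsbS k χ H L ^ (τ / L k - τ / L (k + 1)) := by
    intro k hk
    simp only [Finset.mem_Icc] at hk
    rw [hEfun]
    dsimp only
    rw [if_neg (by omega), card_lev_mid hτ hK hLpos hchain hdiv hk.1 (by omega)]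
  have hEK : Efun K = krsbS K χ H L ^ (τ / L K - 1) := by
    rw [hEfun]
    dsimp only
    rw [if_neg (by omega), card_lev_K hτ hK hLpos hchain hdiv]
  have hEtop : Efun (K + 1) = C * ((τ : ℝ) * F + krsbS K χ H L) - (τ : ℝ) * D ^ 2 := by
    rw [hEfun]
    dsimp only
    rw [if_pos rfl]
  obtain ⟨K', rfl⟩ : ∃ K', K = K' + 1 := ⟨K - 1, by omega⟩
  rw [Finset.prod_Icc_succ_top (by omega : 1 ≤ K' + 1),
    Finset.prod_congr rfl (by simpa using hEmid), hE0, hEK, hEtop,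
    show K' + 1 - 1 = K' from rfl]
  ring
end

section
/- For any two KRSB matrices with the same τ and the same block sizes L̃_1, …, L̃_K, say A = 𝒜(F, χ, {H_k}) and A' = 𝒜(F', χ', {H'_k}), the product is again a KRSB matrix with the same block sizes (i.e., there exist real numbers F'', χ'', H''_1, …, H''_K with A·A' = 𝒜(F'', χ'', {H''_k})), and A and A' commute: A·A' = A'·A. -/
/-!
Let `B_d = I_{τ/d} ⊗ J_d`. Since `J_τ = B_τ` and `I_τ = B_1`, a KRSB matrix is a linear
combination of the `B_d` with `d` in the divisibility chain `1 ∣ L̃_1 ∣ ⋯ ∣ L̃_K ∣ τ`.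
For `d ∣ e ∣ τ` every block of length `e` is a union of `e / d` blocks of length `d`, whence
`B_d B_e = B_e B_d = d B_e`; so this span is closed under products. All these matrices are
symmetric, and the product of two of them is again one of them, so `AA' = (AA')ᵀ = A'A`.
-/

open Matrix Finset

/-- For `d ∣ τ` this is `I_{τ/d} ⊗ J_d`: the indices are cut into consecutive blocks of
length `d`. -/
def blockOnes (R : Type*) [Zero R] [One R] (τ d : ℕ) : Matrix (Fin τ) (Fin τ) R :=
  of fun i j => if (i : ℕ) / d = (j : ℕ) / d then 1 else 0

theorem card_filter_div_eq {τ d : ℕ} (hd : d ∣ τ) (i : Fin τ) :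
    #{m : Fin τ | (m : ℕ) / d = (i : ℕ) / d} = d := by
  have hd0 : 0 < d := Nat.pos_of_dvd_of_pos hd i.pos
  set q := (i : ℕ) / d
  have hqτ : q * d + d ≤ τ := by
    obtain ⟨c, rfl⟩ := hd
    have : q < c := Nat.div_lt_of_lt_mul i.isLt
    nlinarith
  have hval : ({m : Fin τ | (m : ℕ) / d = q} : Finset _).map Fin.valEmbedding =
      Ico (q * d) (q * d + d) := by
    ext m
    simp only [mem_map, mem_filter, mem_univ, true_and, Fin.valEmbedding_apply, mem_Ico]
    constructor
    · rintro ⟨m, hm, rfl⟩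
      have := (Nat.div_eq_iff hd0).1 hm
      omega
    · intro h
      exact ⟨⟨m, by omega⟩, (Nat.div_eq_iff hd0).2 (by dsimp only; omega), rfl⟩
  rw [← card_map Fin.valEmbedding, hval, Nat.card_Ico, Nat.add_sub_cancel_left]

section blockOnes

open scoped Pointwise

variable {R : Type*} [CommSemiring R] {τ : ℕ}

theorem blockOnes_transpose (d : ℕ) : (blockOnes R τ d)ᵀ = blockOnes R τ d := by
  ext i j
  simp only [transpose_apply, blockOnes, of_apply, eq_comm]

theorem blockOnes_one : blockOnes R τ 1 = 1 := by
  ext i j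
  simp [blockOnes, one_apply, Fin.val_inj]

theorem blockOnes_self : blockOnes R τ τ = of fun _ _ => 1 := by
  ext i j
  simp [blockOnes, Nat.div_eq_of_lt i.isLt, Nat.div_eq_of_lt j.isLt]

theorem blockOnes_mul_blockOnes_of_dvd {d e : ℕ} (hde : d ∣ e) (he : e ∣ τ) :
    blockOnes R τ d * blockOnes R τ e = (d : R) • blockOnes R τ e := by
  ext i j
  have hsame : ∀ m : ℕ, m / d = i / d → m / e = i / e := by
    obtain ⟨c, rfl⟩ := hde
    intro m hm
    rw [← Nat.div_div_eq_div_mul, hm, Nat.div_div_eq_div_mul]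
  calc (blockOnes R τ d * blockOnes R τ e) i j
      = ∑ m : Fin τ, if (m : ℕ) / d = (i : ℕ) / d then blockOnes R τ e i j else 0 := by
        rw [mul_apply]
        refine sum_congr rfl fun m _ => ?_
        by_cases hm : (m : ℕ) / d = (i : ℕ) / d
        · simp [blockOnes, hm, hsame m hm]
        · simp [blockOnes, hm, Ne.symm hm]
    _ = ((d : R) • blockOnes R τ e) i j := by
        rw [sum_ite, sum_const_zero, add_zero, sum_const, card_filter_div_eq (hde.trans he) i,
          Matrix.smul_apply, nsmul_eq_mul, smul_eq_mul]

theorem blockOnes_mul_blockOnes_of_dvd' {d e : ℕ} (hde : d ∣ e) (he : e ∣ τ) :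
    blockOnes R τ e * blockOnes R τ d = (d : R) • blockOnes R τ e := by
  rw [← blockOnes_transpose e, ← blockOnes_transpose d, ← transpose_mul,
    blockOnes_mul_blockOnes_of_dvd hde he, transpose_smul, blockOnes_transpose]

theorem mul_mem_span_blockOnes {D : Set ℕ} (hD : IsChain (· ∣ ·) D) (hDτ : ∀ d ∈ D, d ∣ τ)
    {M N : Matrix (Fin τ) (Fin τ) R} (hM : M ∈ Submodule.span R (blockOnes R τ '' D))
    (hN : N ∈ Submodule.span R (blockOnes R τ '' D)) :
    M * N ∈ Submodule.span R (blockOnes R τ '' D) := by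
  have hgen :
      blockOnes R τ '' D * blockOnes R τ '' D ⊆ Submodule.span R (blockOnes R τ '' D) := by
    rw [Set.mul_subset_iff]
    rintro _ ⟨d, hd, rfl⟩ _ ⟨e, he, rfl⟩
    rcases hD.total hd he with hde | hed
    · rw [blockOnes_mul_blockOnes_of_dvd hde (hDτ e he)]
      exact Submodule.smul_mem _ _ (Submodule.subset_span ⟨e, he, rfl⟩)
    · rw [blockOnes_mul_blockOnes_of_dvd' hed (hDτ d hd)]
      exact Submodule.smul_mem _ _ (Submodule.subset_span ⟨d, hd, rfl⟩)
  have hMN := Submodule.mul_mem_mul hM hN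
  rw [Submodule.span_mul_span] at hMN
  exact Submodule.span_le.2 hgen hMN

end blockOnes

theorem dvd_of_le_of_dvd_succ {L : ℕ → ℕ} {K : ℕ}
    (hchain : ∀ k, 1 ≤ k → k < K → L k ∣ L (k + 1))
    {k l : ℕ} (hk : 1 ≤ k) (hkl : k ≤ l) (hl : l ≤ K) : L k ∣ L l := by
  induction l, hkl using Nat.le_induction with
  | base => exact dvd_rfl
  | succ n hn ih => exact (ih (by omega)).trans (hchain n (hk.trans hn) (by omega))

section krsb

variable {τ K : ℕ} {L : ℕ → ℕ}

/-- The sizes `τ` and `1` account for `J_τ = blockOnes τ τ` and `I_τ = blockOnes τ 1`. -/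
def krsbBlockSizes (τ K : ℕ) (L : ℕ → ℕ) : Set ℕ := insert τ (insert 1 (L '' Set.Icc 1 K))

theorem dvd_of_mem_krsbBlockSizes (hchain : ∀ k, 1 ≤ k → k < K → L k ∣ L (k + 1))
    (hdiv : L K ∣ τ) : ∀ d ∈ krsbBlockSizes τ K L, d ∣ τ := by
  rintro d (rfl | rfl | ⟨k, ⟨hk, hkK⟩, rfl⟩)
  · exact dvd_rfl
  · exact one_dvd _
  · exact (dvd_of_le_of_dvd_succ hchain hk hkK le_rfl).trans hdiv

theorem isChain_krsbBlockSizes (hchain : ∀ k, 1 ≤ k → k < K → L k ∣ L (k + 1))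
    (hdiv : L K ∣ τ) : IsChain (· ∣ ·) (krsbBlockSizes τ K L) := by
  refine IsChain.insert (IsChain.insert ?_ fun _ _ _ => Or.inl (one_dvd _)) fun d hd _ =>
    Or.inr (dvd_of_mem_krsbBlockSizes hchain hdiv d (Set.mem_insert_of_mem _ hd))
  rintro _ ⟨k, ⟨hk, hkK⟩, rfl⟩ _ ⟨l, ⟨hl, hlK⟩, rfl⟩ -
  rcases le_total k l with hkl | hlk
  · exact Or.inl (dvd_of_le_of_dvd_succ hchain hk hkl hlK)
  · exact Or.inr (dvd_of_le_of_dvd_succ hchain hl hlk hkK)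

theorem krsbA_eq_sum (F χ : ℝ) (H : ℕ → ℝ) :
    krsbA τ K F χ H L = F • blockOnes ℝ τ τ + χ • blockOnes ℝ τ 1 +
      ∑ k ∈ Icc 1 K, H k • blockOnes ℝ τ (L k) := by
  rw [blockOnes_self, blockOnes_one]
  ext i j
  simp [krsbA, Matrix.sum_apply, one_apply, blockOnes]

theorem krsbA_transpose (F χ : ℝ) (H : ℕ → ℝ) : (krsbA τ K F χ H L)ᵀ = krsbA τ K F χ H L := by
  simp only [krsbA_eq_sum, transpose_add, transpose_smul, transpose_sum, blockOnes_transpose]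

theorem mem_span_krsbBlockSizes_iff {M : Matrix (Fin τ) (Fin τ) ℝ} :
    M ∈ Submodule.span ℝ (blockOnes ℝ τ '' krsbBlockSizes τ K L) ↔
      ∃ F χ H, M = krsbA τ K F χ H L := by
  constructor
  · intro hM
    induction hM using Submodule.span_induction with
    | mem _ hM =>
      obtain ⟨d, (rfl | rfl | ⟨k, hk, rfl⟩), rfl⟩ := hM
      · exact ⟨1, 0, 0, by simp [krsbA_eq_sum]⟩
      · exact ⟨0, 1, 0, by simp [krsbA_eq_sum]⟩
      · refine ⟨0, 0, Pi.single k 1, ?_⟩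
        simp [krsbA_eq_sum, Pi.single_apply, ite_smul, hk.1, hk.2]
    | zero => exact ⟨0, 0, 0, by simp [krsbA_eq_sum]⟩
    | add _ _ _ _ hM hN =>
      obtain ⟨F, χ, H, rfl⟩ := hM
      obtain ⟨F', χ', H', rfl⟩ := hN
      refine ⟨F + F', χ + χ', H + H', ?_⟩
      simp only [krsbA_eq_sum, add_smul, Pi.add_apply, sum_add_distrib]
      abel
    | smul c _ _ hM =>
      obtain ⟨F, χ, H, rfl⟩ := hM
      exact ⟨c * F, c * χ, c • H, by simp [krsbA_eq_sum, smul_add, smul_sum, mul_smul]⟩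
  · rintro ⟨F, χ, H, rfl⟩
    rw [krsbA_eq_sum]
    refine add_mem (add_mem ?_ ?_) (sum_mem fun k hk => ?_) <;>
      refine Submodule.smul_mem _ _ (Submodule.subset_span ⟨_, ?_, rfl⟩)
    · exact Set.mem_insert _ _
    · exact Set.mem_insert_of_mem _ (Set.mem_insert _ _)
    · exact Set.mem_insert_of_mem _ (Set.mem_insert_of_mem _ ⟨k, by simpa using hk, rfl⟩)

end krsb

theorem krsbA_mul_krsbA_general (τ K : ℕ)
    (F χ F' χ' : ℝ) (H H' : ℕ → ℝ) (L : ℕ → ℕ)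
    (hchain : ∀ k, 1 ≤ k → k < K → L k ∣ L (k + 1))
    (hdiv : L K ∣ τ) :
    (∃ (F'' χ'' : ℝ) (H'' : ℕ → ℝ),
        krsbA τ K F χ H L * krsbA τ K F' χ' H' L = krsbA τ K F'' χ'' H'' L) ∧
      krsbA τ K F χ H L * krsbA τ K F' χ' H' L =
        krsbA τ K F' χ' H' L * krsbA τ K F χ H L := by
  obtain ⟨F'', χ'', H'', hprod⟩ := mem_span_krsbBlockSizes_iff.1 <|
    mul_mem_span_blockOnes (isChain_krsbBlockSizes hchain hdiv)
      (dvd_of_mem_krsbBlockSizes hchain hdiv)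
      (mem_span_krsbBlockSizes_iff.2 ⟨F, χ, H, rfl⟩)
      (mem_span_krsbBlockSizes_iff.2 ⟨F', χ', H', rfl⟩)
  refine ⟨⟨F'', χ'', H'', hprod⟩, ?_⟩
  calc krsbA τ K F χ H L * krsbA τ K F' χ' H' L
      = (krsbA τ K F χ H L * krsbA τ K F' χ' H' L)ᵀ := by rw [hprod, krsbA_transpose]
    _ = krsbA τ K F' χ' H' L * krsbA τ K F χ H L := by
        rw [transpose_mul, krsbA_transpose, krsbA_transpose]

/-- the product of two KRSB matrices with the same `τ` and block sizes
is again a KRSB matrix with the same block sizes, and the two matrices commute. -/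
theorem krsbA_mul_krsbA (τ K : ℕ) (hτ : 0 < τ) (hK : 0 < K)
    (F χ F' χ' : ℝ) (H H' : ℕ → ℝ) (L : ℕ → ℕ)
    (hLpos : ∀ k, 1 ≤ k → k ≤ K → 0 < L k)
    (hchain : ∀ k, 1 ≤ k → k < K → L k ∣ L (k + 1))
    (hdiv : L K ∣ τ) :
    (∃ (F'' χ'' : ℝ) (H'' : ℕ → ℝ),
        krsbA τ K F χ H L * krsbA τ K F' χ' H' L = krsbA τ K F'' χ'' H'' L) ∧
      krsbA τ K F χ H L * krsbA τ K F' χ' H' L =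
        krsbA τ K F' χ' H' L * krsbA τ K F χ H L :=
  krsbA_mul_krsbA_general τ K F χ F' χ' H H' L hchain hdiv
end

section
/- Suppose S_k ≠ 0 for all 0 ≤ k ≤ K and τF + S_K ≠ 0. Then the KRSB matrix 𝒜(F, χ, {H_k}) is invertible and its inverse is the KRSB matrix 𝒜(F', χ', {H'_k}) with parameters χ' = 1/χ, H'_k = (1/L̃_k)·(1/S_k − 1/S_{k−1}) for 1 ≤ k ≤ K, and F' = (1/τ)·(1/(τF + S_K) − 1/S_K). -/
open Matrix Finset

section Aux

lemma div_agree_mono' {d e i j : ℕ} (hde : d ∣ e) (h : i/d = j/d) : i/e = j/e := by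
  obtain ⟨c, rfl⟩ := hde
  rw [← Nat.div_div_eq_div_mul, ← Nat.div_div_eq_div_mul, h]

lemma blockfilter' (τ d : ℕ) (hd : 0 < d) (hdτ : d ∣ τ) (i : ℕ) (hi : i < τ) :
    (Finset.range τ).filter (fun l => l / d = i / d) = Finset.Ico (d*(i/d)) (d*(i/d)+d) := by
  ext l
  simp only [mem_filter, mem_range, Finset.mem_Ico]
  constructor
  · rintro ⟨hl, h⟩
    have h1 := Nat.div_add_mod l d
    have h2 := Nat.mod_lt l hd
    rw [h] at h1
    omega
  · rintro ⟨h1, h2⟩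
    have hq : i / d + 1 ≤ τ / d := Nat.div_lt_div_of_lt_of_dvd hdτ hi
    have hτ' : d * (τ / d) = τ := Nat.mul_div_cancel' hdτ
    have ha : i/d*d = d*(i/d) := Nat.mul_comm _ _
    have hb : (i/d+1)*d = d*(i/d)+d := by ring
    have h3 : l / d = i / d := Nat.div_eq_of_lt_le (by omega) (by omega)
    have hmul : d * (i/d+1) ≤ d * (τ/d) := Nat.mul_le_mul_left d hq
    have hc : d*(i/d+1) = d*(i/d)+d := by ring
    exact ⟨by omega, h3⟩

lemma blockcount' (τ d : ℕ) (hd : 0 < d) (hdτ : d ∣ τ) (i : ℕ) (hi : i < τ) :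
    ∑ l ∈ Finset.range τ, (if i / d = l / d then (1:ℝ) else 0) = d := by
  rw [Finset.sum_boole]
  have : (Finset.range τ).filter (fun l => i / d = l / d)
      = (Finset.range τ).filter (fun l => l / d = i / d) := by
    apply Finset.filter_congr; intro x _; simp [eq_comm]
  rw [this, blockfilter' τ d hd hdτ i hi]
  simp [Nat.card_Ico]

lemma crosscount' (τ d e : ℕ) (hd : 0 < d) (hde : d ∣ e) (heτ : e ∣ τ) (i j : ℕ)
    (hi : i < τ) :
    ∑ l ∈ Finset.range τ, (if i/d = l/d then (1:ℝ) else 0) * (if l/e = j/e then (1:ℝ) else 0)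
      = d * (if i/e = j/e then 1 else 0) := by
  by_cases h : i/e = j/e
  · have : ∀ l ∈ Finset.range τ,
        (if i/d = l/d then (1:ℝ) else 0) * (if l/e = j/e then (1:ℝ) else 0)
        = (if i / d = l / d then (1:ℝ) else 0) := by
      intro l _
      by_cases hc : i/d = l/d
      · have : l/e = j/e := by rw [← div_agree_mono' hde hc, h]
        simp [hc, this]
      · simp [hc]
    rw [Finset.sum_congr rfl this, blockcount' τ d hd (hde.trans heτ) i hi]
    simp [h]
  · have : ∀ l ∈ Finset.range τ,
        (if i/d = l/d then (1:ℝ) else 0) * (if l/e = j/e then (1:ℝ) else 0) = 0 := by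
      intro l _
      by_cases hc : i/d = l/d
      · have : l/e ≠ j/e := by rw [← div_agree_mono' hde hc]; exact h
        simp [this]
      · simp [hc]
    rw [Finset.sum_congr rfl this]
    simp [h]

end Aux

def krsbLL (τ K : ℕ) (L : ℕ → ℕ) : ℕ → ℕ :=
  fun k => if k = 0 then 1 else if k ≤ K then L k else τ

def krsbc (K : ℕ) (F χ : ℝ) (H : ℕ → ℝ) : ℕ → ℝ :=
  fun k => if k = 0 then χ else if k ≤ K then H k else F

lemma krsbA_entry (τ K : ℕ) (F χ : ℝ) (H : ℕ → ℝ) (L : ℕ → ℕ) (i j : Fin τ) :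
    krsbA τ K F χ H L i j
      = ∑ k ∈ Finset.range (K+2), krsbc K F χ H k *
          (if (i:ℕ) / krsbLL τ K L k = (j:ℕ) / krsbLL τ K L k then (1:ℝ) else 0) := by
  rw [show K+2 = K+1+1 from rfl, Finset.sum_range_succ, Finset.sum_range_succ']
  have htop : krsbc K F χ H (K+1) * (if (i:ℕ) / krsbLL τ K L (K+1) = (j:ℕ) / krsbLL τ K L (K+1) then (1:ℝ) else 0) = F := by
    simp [krsbc, krsbLL, Nat.div_eq_of_lt i.isLt, Nat.div_eq_of_lt j.isLt]
  have h0 : krsbc K F χ H 0 * (if (i:ℕ) / krsbLL τ K L 0 = (j:ℕ) / krsbLL τ K L 0 then (1:ℝ) else 0) = if i = j then χ else 0 := by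
    simp [krsbc, krsbLL, Nat.div_one, Fin.val_inj, mul_ite]
  have hmid : ∑ k ∈ Finset.range K, krsbc K F χ H (k+1) *
      (if (i:ℕ) / krsbLL τ K L (k+1) = (j:ℕ) / krsbLL τ K L (k+1) then (1:ℝ) else 0)
      = ∑ k ∈ Finset.Icc 1 K, (if (i : ℕ) / L k = (j : ℕ) / L k then H k else 0) := by
    rw [show Finset.Icc 1 K = Finset.Ico 1 (K+1) by rw [Finset.Ico_add_one_right_eq_Icc], Finset.sum_Ico_eq_sum_range]
    simp only [Nat.add_sub_cancel]
    apply Finset.sum_congr rfl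
    intro k hk
    have hk' : k < K := Finset.mem_range.mp hk
    have h1 : krsbc K F χ H (k+1) = H (k+1) := by simp [krsbc]; omega
    have h2 : krsbLL τ K L (k+1) = L (k+1) := by simp [krsbLL]; intro h; omega
    rw [show 1 + k = k + 1 by omega, h1, h2, mul_ite, mul_one, mul_zero]
  rw [htop, h0, hmid, krsbA]
  simp only [Matrix.of_apply]
  ring

lemma scalarG (K : ℕ) (c d : ℕ → ℝ) (LL : ℕ → ℕ) (hLL0 : LL 0 = 1)
    (hLL : ∀ n, n ≤ K+1 → (LL n : ℝ) ≠ 0)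
    (hunit : ∀ n, n ≤ K+1 →
      (∑ k ∈ Finset.range (n+1), (LL k:ℝ) * c k) * (∑ k ∈ Finset.range (n+1), (LL k:ℝ) * d k) = 1)
    (m0 : ℕ) (hm0 : m0 ≤ K+1) :
    ∑ k ∈ Finset.range (K+2), ∑ m ∈ Finset.range (K+2),
      c k * d m * (LL (min k m) : ℝ) * (if m0 ≤ max k m then (1:ℝ) else 0)
    = if m0 = 0 then 1 else 0 := by
  set G : ℕ → ℝ := fun n => ∑ k ∈ Finset.range (K+2), ∑ m ∈ Finset.range (K+2),
      c k * d m * (LL (min k m) : ℝ) * (if n ≤ max k m then (1:ℝ) else 0) with hG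
  -- step decomposition
  have hstep : ∀ n, n ≤ K+1 → G n = G (n+1) +
      (d n * (∑ k ∈ Finset.range n, (LL k:ℝ) * c k)
        + c n * (∑ m ∈ Finset.range (n+1), (LL m:ℝ) * d m)) := by
    intro n hn
    have hsplit : G n = G (n+1) + ∑ k ∈ Finset.range (K+2), ∑ m ∈ Finset.range (K+2),
        c k * d m * (LL (min k m) : ℝ) * (if max k m = n then (1:ℝ) else 0) := by
      rw [hG]
      simp only [← Finset.sum_add_distrib]
      apply Finset.sum_congr rfl; intro k _
      apply Finset.sum_congr rfl; intro m _
      have : (if n ≤ max k m then (1:ℝ) else 0)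
          = (if n+1 ≤ max k m then (1:ℝ) else 0) + (if max k m = n then (1:ℝ) else 0) := by
        by_cases h1 : max k m = n
        · simp [h1]
        · by_cases h2 : n ≤ max k m
          · have : n+1 ≤ max k m := by omega
            simp [h1, h2, this]
          · have : ¬ (n+1 ≤ max k m) := by omega
            simp [h1, h2, this]
      rw [this]; ring
    rw [hsplit]
    congr 1
    have hinner : ∀ k ∈ Finset.range (K+2),
        (∑ m ∈ Finset.range (K+2), c k * d m * (LL (min k m) : ℝ) * (if max k m = n then (1:ℝ) else 0))
        = if k < n then c k * d n * (LL k : ℝ)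
          else if k = n then c n * (∑ m ∈ Finset.range (n+1), (LL m:ℝ) * d m) else 0 := by
      intro k hk
      rcases lt_trichotomy k n with hkn | hkn | hkn
      · rw [if_pos hkn]
        rw [Finset.sum_eq_single_of_mem n (Finset.mem_range.mpr (show n < K+2 by omega))
          (fun m _ hmn => by
            have : max k m ≠ n := by omega
            simp [this])]
        have h1 : min k n = k := by omega
        have h2 : max k n = n := by omega
        rw [h1, h2, if_pos rfl, mul_one]
      · rw [if_neg (by omega), if_pos hkn]
        subst hkn
        rw [show (∑ m ∈ Finset.range (K+2), c k * d m * (LL (min k m) : ℝ) * (if max k m = k then (1:ℝ) else 0))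
          = ∑ m ∈ Finset.range (k+1), c k * d m * (LL (min k m) : ℝ) * (if max k m = k then (1:ℝ) else 0) from
          (Finset.sum_subset (Finset.range_subset_range.mpr (by omega)) (by
            intro m _ hm
            have hmk : ¬ m < k + 1 := fun h => hm (Finset.mem_range.mpr h)
            have : max k m ≠ k := by omega
            simp [this])).symm]
        rw [Finset.mul_sum]
        apply Finset.sum_congr rfl
        intro m hm
        have hmk : m < k + 1 := Finset.mem_range.mp hm
        have h1 : min k m = m := by omega
        have h2 : max k m = k := by omega
        rw [h1, h2, if_pos rfl]; ring
      · rw [if_neg (by omega), if_neg (by omega)]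
        apply Finset.sum_eq_zero
        intro m _
        have : max k m ≠ n := by omega
        simp [this]
    rw [Finset.sum_congr rfl hinner]
    rw [show (∑ k ∈ Finset.range (K+2), if k < n then c k * d n * (LL k : ℝ)
          else if k = n then c n * (∑ m ∈ Finset.range (n+1), (LL m:ℝ) * d m) else 0)
        = ∑ k ∈ Finset.range (n+1), if k < n then c k * d n * (LL k : ℝ)
          else if k = n then c n * (∑ m ∈ Finset.range (n+1), (LL m:ℝ) * d m) else 0 from
      (Finset.sum_subset (Finset.range_subset_range.mpr (by omega)) (by
        intro k _ hkn
        have : ¬ k < n + 1 := fun h => hkn (Finset.mem_range.mpr h)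
        rw [if_neg (by omega), if_neg (by omega)])).symm]
    rw [Finset.sum_range_succ, if_neg (by omega), if_pos rfl]
    congr 1
    conv_rhs => rw [Finset.mul_sum]
    apply Finset.sum_congr rfl
    intro k hk
    have : k < n := Finset.mem_range.mp hk
    rw [if_pos this]; ring
  -- the increment vanishes for n ≥ 1
  have hzero : ∀ n, 1 ≤ n → n ≤ K+1 →
      d n * (∑ k ∈ Finset.range n, (LL k:ℝ) * c k)
        + c n * (∑ m ∈ Finset.range (n+1), (LL m:ℝ) * d m) = 0 := by
    intro n h1 h2
    obtain ⟨m, rfl⟩ : ∃ m, n = m + 1 := ⟨n - 1, by omega⟩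
    have hu1 := hunit (m+1) h2
    have hu0 := hunit m (by omega)
    rw [Finset.sum_range_succ (f := fun k => (LL k:ℝ) * c k),
        Finset.sum_range_succ (f := fun k => (LL k:ℝ) * d k)] at hu1
    rw [Finset.sum_range_succ (f := fun k => (LL k:ℝ) * d k)]
    have key2 : (LL (m+1):ℝ) * (d (m+1) * (∑ k ∈ Finset.range (m+1), (LL k:ℝ) * c k)
        + c (m+1) * ((∑ k ∈ Finset.range (m+1), (LL k:ℝ) * d k) + (LL (m+1):ℝ) * d (m+1))) = 0 := by
      linear_combination hu1 - hu0
    exact (mul_eq_zero.mp key2).resolve_left (hLL (m+1) h2)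
  -- top vanishes
  have hGtop : G (K+2) = 0 := by
    rw [hG]
    apply Finset.sum_eq_zero; intro k hk
    apply Finset.sum_eq_zero; intro m hm
    have hk' := Finset.mem_range.mp hk
    have hm' := Finset.mem_range.mp hm
    have : ¬ (K+2 ≤ max k m) := by omega
    simp [this]
  -- G n = 0 for 1 ≤ n ≤ K+2
  have hGzero : ∀ n, 1 ≤ n → n ≤ K+2 → G n = 0 := by
    have haux : ∀ t, t ≤ K+1 → G (K+2-t) = 0 := by
      intro t
      induction t with
      | zero => intro _; simpa using hGtop
      | succ s ih =>
        intro hs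
        have h1 : K+2-(s+1) ≤ K+1 := by omega
        have h2 : 1 ≤ K+2-(s+1) := by omega
        have := hstep (K+2-(s+1)) h1
        rw [hzero (K+2-(s+1)) h2 h1] at this
        rw [show K+2-(s+1)+1 = K+2-s by omega] at this
        rw [this, ih (by omega)]; ring
    intro n h1 h2
    have := haux (K+2-n) (by omega)
    rwa [show K+2-(K+2-n) = n by omega] at this
  -- conclude
  show G m0 = _
  by_cases h : m0 = 0
  · subst h
    rw [if_pos rfl]
    have := hstep 0 (by omega)
    have hu0 := hunit 0 (by omega)
    rw [hGzero 1 le_rfl (by omega)] at this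
    rw [this]
    simp only [zero_add, Finset.range_zero, Finset.sum_empty, mul_zero,
      Finset.sum_range_one, hLL0, Nat.cast_one, one_mul] at hu0 ⊢
    linarith [hu0]
  · rw [if_neg h]
    exact hGzero m0 (by omega) (by omega)

/-- if `S_k ≠ 0` for all `0 ≤ k ≤ K` and `τF + S_K ≠ 0`, then the KRSB
matrix is invertible and its inverse is the KRSB matrix with parameters
`χ' = 1/χ`, `H'_k = (1/L̃_k)(1/S_k − 1/S_{k−1})`, `F' = (1/τ)(1/(τF + S_K) − 1/S_K)`. -/
theorem krsbA_inv (τ K : ℕ) (hτ : 0 < τ) (hK : 0 < K)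
    (F χ : ℝ) (H : ℕ → ℝ) (L : ℕ → ℕ)
    (hLpos : ∀ k, 1 ≤ k → k ≤ K → 0 < L k)
    (hchain : ∀ k, 1 ≤ k → k < K → L k ∣ L (k + 1))
    (hdiv : L K ∣ τ)
    (hS : ∀ k, k ≤ K → krsbS k χ H L ≠ 0)
    (hT : (τ : ℝ) * F + krsbS K χ H L ≠ 0) :
    IsUnit (krsbA τ K F χ H L) ∧
      (krsbA τ K F χ H L)⁻¹ =
        krsbA τ K
          ((1 / (τ : ℝ)) * (1 / ((τ : ℝ) * F + krsbS K χ H L) - 1 / krsbS K χ H L))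
          (1 / χ)
          (fun k => (1 / (L k : ℝ)) * (1 / krsbS k χ H L - 1 / krsbS (k - 1) χ H L))
          L := by
  classical
  set F' : ℝ := (1 / (τ : ℝ)) * (1 / ((τ : ℝ) * F + krsbS K χ H L) - 1 / krsbS K χ H L) with hF'
  set H' : ℕ → ℝ := fun k => (1 / (L k : ℝ)) * (1 / krsbS k χ H L - 1 / krsbS (k - 1) χ H L) with hH'
  -- facts about the extended block sizes
  have hLL0 : krsbLL τ K L 0 = 1 := by simp [krsbLL]
  have hLLtop : ∀ n, K < n → krsbLL τ K L n = τ := by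
    intro n hn
    unfold krsbLL
    rw [if_neg (by omega), if_neg (by omega)]
  have hLLmid : ∀ n, 1 ≤ n → n ≤ K → krsbLL τ K L n = L n := by
    intro n h1 h2
    unfold krsbLL
    rw [if_neg (by omega), if_pos h2]
  have hLLpos : ∀ n, 0 < krsbLL τ K L n := by
    intro n
    rcases Nat.eq_zero_or_pos n with h | h
    · subst h; rw [hLL0]; omega
    · rcases le_or_gt n K with h2 | h2
      · rw [hLLmid n h h2]; exact hLpos n h h2
      · rw [hLLtop n h2]; exact hτ
  have hLdvd : ∀ a b, 1 ≤ a → a ≤ b → b ≤ K → L a ∣ L b := by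
    intro a b ha hab
    induction b, hab using Nat.le_induction with
    | base => intro _; exact dvd_rfl
    | succ b hb ih =>
      intro hbK
      exact (ih (by omega)).trans (hchain b (by omega) (by omega))
  have hLdvdτ : ∀ a, 1 ≤ a → a ≤ K → L a ∣ τ := by
    intro a h1 h2
    exact (hLdvd a K h1 h2 le_rfl).trans hdiv
  have hLLdvd : ∀ a b, a ≤ b → krsbLL τ K L a ∣ krsbLL τ K L b := by
    intro a b hab
    rcases Nat.eq_zero_or_pos a with h | h
    · subst h; rw [hLL0]; exact one_dvd _
    · rcases le_or_gt a K with h2 | h2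
      · rw [hLLmid a h h2]
        rcases le_or_gt b K with h3 | h3
        · rw [hLLmid b (by omega) h3]; exact hLdvd a b h hab h3
        · rw [hLLtop b h3]; exact hLdvdτ a h h2
      · rw [hLLtop a h2, hLLtop b (by omega)]
  have hLLdvdτ : ∀ a, krsbLL τ K L a ∣ τ := by
    intro a
    have h1 := hLLdvd a (a + K + 1) (by omega)
    rwa [hLLtop (a + K + 1) (by omega)] at h1
  -- partial sums
  have hlam : ∀ n, n ≤ K →
      (∑ k ∈ Finset.range (n+1), (krsbLL τ K L k : ℝ) * krsbc K F χ H k) = krsbS n χ H L := by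
    intro n
    induction n with
    | zero =>
      intro _
      simp [krsbS, hLL0, krsbc]
    | succ n ih =>
      intro hn
      rw [Finset.sum_range_succ, ih (by omega), hLLmid (n+1) (by omega) hn]
      have hc : krsbc K F χ H (n+1) = H (n+1) := by
        unfold krsbc; rw [if_neg (by omega), if_pos hn]
      rw [hc, krsbS, krsbS, Finset.sum_Icc_succ_top (by omega)]
      ring
  have hmu : ∀ n, n ≤ K →
      (∑ k ∈ Finset.range (n+1), (krsbLL τ K L k : ℝ) * krsbc K F' (1/χ) H' k)
        = 1 / krsbS n χ H L := by
    intro n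
    induction n with
    | zero =>
      intro _
      simp [krsbS, hLL0, krsbc]
    | succ n ih =>
      intro hn
      rw [Finset.sum_range_succ, ih (by omega), hLLmid (n+1) (by omega) hn]
      have hc : krsbc K F' (1/χ) H' (n+1) = H' (n+1) := by
        unfold krsbc; rw [if_neg (by omega), if_pos hn]
      rw [hc, hH']
      have hLne : (L (n+1) : ℝ) ≠ 0 := by
        have := hLpos (n+1) (by omega) hn
        positivity
      simp only [Nat.add_sub_cancel]
      field_simp
      ring
  have hunit : ∀ n, n ≤ K+1 →
      (∑ k ∈ Finset.range (n+1), (krsbLL τ K L k : ℝ) * krsbc K F χ H k) *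
      (∑ k ∈ Finset.range (n+1), (krsbLL τ K L k : ℝ) * krsbc K F' (1/χ) H' k) = 1 := by
    intro n hn
    rcases le_or_gt n K with h | h
    · rw [hlam n h, hmu n h]
      exact mul_one_div_cancel (hS n h)
    · have hn' : n = K + 1 := by omega
      subst hn'
      rw [Finset.sum_range_succ (f := fun k => (krsbLL τ K L k:ℝ) * krsbc K F χ H k),
        Finset.sum_range_succ (f := fun k => (krsbLL τ K L k:ℝ) * krsbc K F' (1/χ) H' k),
        hlam K le_rfl, hmu K le_rfl, hLLtop (K+1) (by omega)]
      have hc1 : krsbc K F χ H (K+1) = F := by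
        unfold krsbc; rw [if_neg (by omega), if_neg (by omega)]
      have hc2 : krsbc K F' (1/χ) H' (K+1) = F' := by
        unfold krsbc; rw [if_neg (by omega), if_neg (by omega)]
      rw [hc1, hc2, hF']
      have hτne : (τ:ℝ) ≠ 0 := by positivity
      have hSK := hS K le_rfl
      field_simp
      ring
  -- the inverse identity
  have key : krsbA τ K F χ H L * krsbA τ K F' (1/χ) H' L = 1 := by
    ext i j
    rw [Matrix.mul_apply]
    have hstep1 : ∀ l : Fin τ, krsbA τ K F χ H L i l * krsbA τ K F' (1/χ) H' L l j
        = ∑ k ∈ Finset.range (K+2), ∑ m ∈ Finset.range (K+2),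
            (krsbc K F χ H k * (if (i:ℕ) / krsbLL τ K L k = (l:ℕ) / krsbLL τ K L k then (1:ℝ) else 0)) *
            (krsbc K F' (1/χ) H' m * (if (l:ℕ) / krsbLL τ K L m = (j:ℕ) / krsbLL τ K L m then (1:ℝ) else 0)) := by
      intro l
      rw [krsbA_entry τ K F χ H L i l, krsbA_entry τ K F' (1/χ) H' L l j,
        Finset.sum_mul_sum]
    rw [Finset.sum_congr rfl (fun l _ => hstep1 l), Finset.sum_comm]
    have hswap : ∀ k ∈ Finset.range (K+2),
        (∑ l : Fin τ, ∑ m ∈ Finset.range (K+2),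
          (krsbc K F χ H k * (if (i:ℕ) / krsbLL τ K L k = (l:ℕ) / krsbLL τ K L k then (1:ℝ) else 0)) *
          (krsbc K F' (1/χ) H' m * (if (l:ℕ) / krsbLL τ K L m = (j:ℕ) / krsbLL τ K L m then (1:ℝ) else 0)))
        = ∑ m ∈ Finset.range (K+2),
            krsbc K F χ H k * krsbc K F' (1/χ) H' m * (krsbLL τ K L (min k m) : ℝ) *
            (if (i:ℕ) / krsbLL τ K L (max k m) = (j:ℕ) / krsbLL τ K L (max k m) then (1:ℝ) else 0) := by
      intro k _
      rw [Finset.sum_comm]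
      apply Finset.sum_congr rfl
      intro m _
      have hcount : (∑ l : Fin τ,
          (if (i:ℕ) / krsbLL τ K L k = (l:ℕ) / krsbLL τ K L k then (1:ℝ) else 0) *
          (if (l:ℕ) / krsbLL τ K L m = (j:ℕ) / krsbLL τ K L m then (1:ℝ) else 0))
          = (krsbLL τ K L (min k m) : ℝ) *
            (if (i:ℕ) / krsbLL τ K L (max k m) = (j:ℕ) / krsbLL τ K L (max k m) then (1:ℝ) else 0) := by
        rw [Fin.sum_univ_eq_sum_range (fun l =>
          (if (i:ℕ) / krsbLL τ K L k = l / krsbLL τ K L k then (1:ℝ) else 0) *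
          (if l / krsbLL τ K L m = (j:ℕ) / krsbLL τ K L m then (1:ℝ) else 0)) τ]
        rcases le_total k m with hkm | hkm
        · rw [min_eq_left hkm, max_eq_right hkm]
          exact crosscount' τ (krsbLL τ K L k) (krsbLL τ K L m) (hLLpos k)
            (hLLdvd k m hkm) (hLLdvdτ m) i j i.isLt
        · rw [min_eq_right hkm, max_eq_left hkm]
          have hsym : ∀ l ∈ Finset.range τ,
              (if (i:ℕ) / krsbLL τ K L k = l / krsbLL τ K L k then (1:ℝ) else 0) *
              (if l / krsbLL τ K L m = (j:ℕ) / krsbLL τ K L m then (1:ℝ) else 0)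
              = (if (j:ℕ) / krsbLL τ K L m = l / krsbLL τ K L m then (1:ℝ) else 0) *
                (if l / krsbLL τ K L k = (i:ℕ) / krsbLL τ K L k then (1:ℝ) else 0) := by
            intro l _
            rw [mul_comm]
            congr 1 <;> simp [eq_comm]
          rw [Finset.sum_congr rfl hsym,
            crosscount' τ (krsbLL τ K L m) (krsbLL τ K L k) (hLLpos m)
              (hLLdvd m k hkm) (hLLdvdτ k) j i j.isLt]
          congr 1
          simp [eq_comm]
      calc (∑ l : Fin τ,
          (krsbc K F χ H k * (if (i:ℕ) / krsbLL τ K L k = (l:ℕ) / krsbLL τ K L k then (1:ℝ) else 0)) *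
          (krsbc K F' (1/χ) H' m * (if (l:ℕ) / krsbLL τ K L m = (j:ℕ) / krsbLL τ K L m then (1:ℝ) else 0)))
          = krsbc K F χ H k * krsbc K F' (1/χ) H' m * (∑ l : Fin τ,
            (if (i:ℕ) / krsbLL τ K L k = (l:ℕ) / krsbLL τ K L k then (1:ℝ) else 0) *
            (if (l:ℕ) / krsbLL τ K L m = (j:ℕ) / krsbLL τ K L m then (1:ℝ) else 0)) := by
            rw [Finset.mul_sum]
            apply Finset.sum_congr rfl
            intro l _
            ring
        _ = _ := by rw [hcount]; ring
    rw [Finset.sum_congr rfl hswap]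
    -- replace the indicator by the first agreement level
    have hPex : ∃ n, (i:ℕ) / krsbLL τ K L n = (j:ℕ) / krsbLL τ K L n := by
      refine ⟨K+1, ?_⟩
      rw [hLLtop (K+1) (by omega), Nat.div_eq_of_lt i.isLt, Nat.div_eq_of_lt j.isLt]
    have hm0K : Nat.find hPex ≤ K+1 := Nat.find_le (by
      rw [hLLtop (K+1) (by omega), Nat.div_eq_of_lt i.isLt, Nat.div_eq_of_lt j.isLt])
    have hindm0 : ∀ n, (if (i:ℕ) / krsbLL τ K L n = (j:ℕ) / krsbLL τ K L n then (1:ℝ) else 0)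
        = if Nat.find hPex ≤ n then (1:ℝ) else 0 := by
      intro n
      rcases le_or_gt (Nat.find hPex) n with h | h
      · rw [if_pos h, if_pos (div_agree_mono' (hLLdvd _ n h) (Nat.find_spec hPex))]
      · rw [if_neg (Nat.find_min hPex h), if_neg (show ¬ Nat.find hPex ≤ n by omega)]
    have hfin : ∑ k ∈ Finset.range (K+2), ∑ m ∈ Finset.range (K+2),
        krsbc K F χ H k * krsbc K F' (1/χ) H' m * (krsbLL τ K L (min k m) : ℝ) *
        (if (i:ℕ) / krsbLL τ K L (max k m) = (j:ℕ) / krsbLL τ K L (max k m) then (1:ℝ) else 0)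
        = if Nat.find hPex = 0 then (1:ℝ) else 0 := by
      have := scalarG K (krsbc K F χ H) (krsbc K F' (1/χ) H') (krsbLL τ K L) hLL0
        (fun n hn => by
          have := hLLpos n
          positivity)
        hunit (Nat.find hPex) hm0K
      rw [← this]
      apply Finset.sum_congr rfl; intro k _
      apply Finset.sum_congr rfl; intro m _
      rw [hindm0 (max k m)]
    rw [hfin, Matrix.one_apply]
    have hiff : Nat.find hPex = 0 ↔ i = j := by
      rw [Nat.find_eq_zero, hLL0]
      simp [Nat.div_one, Fin.val_inj]
    by_cases h : i = j
    · rw [if_pos (hiff.mpr h), if_pos h]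
    · rw [if_neg (fun hh => h (hiff.mp hh)), if_neg h]
  exact ⟨(Matrix.isUnit_iff_isUnit_det _).mpr (Matrix.isUnit_det_of_right_inverse key), Matrix.inv_eq_right_inv key⟩
end
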